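/- arXiv:2510.09143 — 6 statements merged into one kernel-verified Lean document; each statement's English description precedes it below -/
import Mathlib

section
/- For every integer d ≥ 3, every finite d-regular simple graph G on n vertices has a total vertex cover with at most d·n/(d+1) vertices. -/
open SimpleGraph Finset

/-- `S` is a total vertex cover of `G`: a vertex cover which is also a total
dominating set. -/
def IsTotalVertexCover {V : Type*} (G : SimpleGraph V) (S : Set V) : Prop :=
  (∀ ⦃v w : V⦄, G.Adj v w → v ∈ S ∨ w ∈ S) ∧ (∀ v : V, ∃ u ∈ S, G.Adj v u)

theorem stmt_0 {V : Type*} [Fintype V] (G : SimpleGraph V) (d : ℕ) (hd : 3 ≤ d)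
    (hreg : ∀ v : V, (G.neighborSet v).ncard = d) :
    ∃ S : Set V, IsTotalVertexCover G S ∧
      (S.ncard : ℝ) ≤ d * (Fintype.card V : ℝ) / (d + 1) := by
  classical
  have hdeg : ∀ v : V, (G.neighborFinset v).card = d := by
    intro v
    rw [← hreg v, ← Set.ncard_coe_finset]
    congr 1
    simp [neighborFinset_def, Set.coe_toFinset]
  set good : Finset V → Prop :=
    fun I => (∀ v ∈ I, ∀ w ∈ I, ¬ G.Adj v w) ∧ ∀ v : V, ¬ G.neighborFinset v ⊆ I
    with hgooddef
  -- a maximum cardinality good set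
  have hne : ((univ : Finset (Finset V)).filter good).Nonempty := by
    refine ⟨∅, mem_filter.mpr ⟨mem_univ _, ?_, ?_⟩⟩
    · simp
    · intro v hsub
      have h1 : G.neighborFinset v = ∅ := Finset.subset_empty.mp hsub
      have h2 := hdeg v
      rw [h1] at h2
      simp at h2
      omega
  obtain ⟨I, hImem, hImax⟩ :=
    ((univ : Finset (Finset V)).filter good).exists_max_image Finset.card hne
  have hgood : good I := (mem_filter.mp hImem).2
  have hind : ∀ v ∈ I, ∀ w ∈ I, ¬ G.Adj v w := hgood.1
  have hnd : ∀ v : V, ¬ G.neighborFinset v ⊆ I := hgood.2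
  have hmax : ∀ v ∉ I, ¬ good (insert v I) := by
    intro v hv hgood'
    have := hImax (insert v I) (mem_filter.mpr ⟨mem_univ _, hgood'⟩)
    rw [Finset.card_insert_of_notMem hv] at this
    omega
  -- notation
  set f : V → ℕ := fun v => (G.neighborFinset v ∩ I).card with hf
  have hswap : ∀ v u : V, (if G.Adj v u then (1:ℕ) else 0) = if G.Adj u v then 1 else 0 := by
    intro v u
    by_cases h : G.Adj v u
    · simp [h, h.symm]
    · rw [if_neg h, if_neg (fun h' : G.Adj u v => h h'.symm)]
  have h1 : ∀ (v : V) (t : Finset V), (G.neighborFinset v ∩ t).card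
      = ∑ u ∈ t, if G.Adj v u then 1 else 0 := by
    intro v t
    rw [Finset.inter_comm, ← Finset.filter_mem_eq_inter, Finset.card_filter]
    exact Finset.sum_congr rfl fun u _ => by simp [mem_neighborFinset]
  -- double counting
  have hsum : ∑ v ∈ Iᶜ, f v = d * I.card := by
    calc ∑ v ∈ Iᶜ, f v
        = ∑ v ∈ Iᶜ, ∑ u ∈ I, if G.Adj v u then 1 else 0 := by
          exact Finset.sum_congr rfl fun v _ => h1 v I
      _ = ∑ u ∈ I, ∑ v ∈ Iᶜ, if G.Adj v u then 1 else 0 := Finset.sum_comm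
      _ = ∑ u ∈ I, (G.neighborFinset u ∩ Iᶜ).card := by
          refine Finset.sum_congr rfl fun u _ => ?_
          rw [h1]
          exact Finset.sum_congr rfl fun v _ => hswap v u
      _ = ∑ u ∈ I, d := by
          refine Finset.sum_congr rfl fun u hu => ?_
          have hsub : G.neighborFinset u ⊆ Iᶜ := by
            intro w hw
            rw [Finset.mem_compl]
            intro hwI
            exact hind u hu w hwI ((mem_neighborFinset G u w).mp hw)
          rw [Finset.inter_eq_left.mpr hsub, hdeg]
      _ = d * I.card := by rw [Finset.sum_const, smul_eq_mul, mul_comm]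
  -- bad and witness sets
  set B : Finset V := Iᶜ.filter (fun v => f v = 0) with hB
  set W : Finset V := Iᶜ.filter (fun w => d - 1 ≤ f w) with hW
  have hwit : ∀ v ∈ B, ∃ w, w ∈ W ∧ G.neighborFinset w ⊆ insert v I := by
    intro v hv
    have hvI : v ∉ I := Finset.mem_compl.mp (Finset.mem_filter.mp hv).1
    have hv0 : f v = 0 := (Finset.mem_filter.mp hv).2
    have hv0' : G.neighborFinset v ∩ I = ∅ := Finset.card_eq_zero.mp hv0
    have hng := hmax v hvI
    rw [hgooddef] at hng
    rcases not_and_or.mp hng with hni | hnd'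
    · exfalso
      push_neg at hni
      obtain ⟨a, ha, b, hb, hab⟩ := hni
      rcases Finset.mem_insert.mp ha with rfl | haI <;>
        rcases Finset.mem_insert.mp hb with h | hbI
      · exact G.loopless.irrefl a (h ▸ hab)
      · have : b ∈ G.neighborFinset a ∩ I :=
          Finset.mem_inter.mpr ⟨(mem_neighborFinset G a b).mpr hab, hbI⟩
        rw [hv0'] at this; exact absurd this (Finset.notMem_empty b)
      · subst h
        have : a ∈ G.neighborFinset b ∩ I :=
          Finset.mem_inter.mpr ⟨(mem_neighborFinset G b a).mpr hab.symm, haI⟩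
        rw [hv0'] at this; exact absurd this (Finset.notMem_empty a)
      · exact hind a haI b hbI hab
    · push_neg at hnd'
      obtain ⟨w, hwsub⟩ := hnd'
      have hwv : w ≠ v := by
        rintro rfl
        refine hnd w ?_
        intro u hu
        rcases Finset.mem_insert.mp (hwsub hu) with rfl | h
        · exact absurd hu (G.notMem_neighborFinset_self u)
        · exact h
      have hwI : w ∉ I := by
        intro hwI
        have hempty : G.neighborFinset w ∩ I = ∅ := by
          rw [Finset.eq_empty_iff_forall_notMem]
          intro u hu
          obtain ⟨hu1, hu2⟩ := Finset.mem_inter.mp hu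
          exact hind w hwI u hu2 ((mem_neighborFinset G w u).mp hu1)
        have hsub1 : G.neighborFinset w ⊆ {v} := by
          intro u hu
          rcases Finset.mem_insert.mp (hwsub hu) with rfl | h
          · exact Finset.mem_singleton_self u
          · exfalso
            have : u ∈ G.neighborFinset w ∩ I := Finset.mem_inter.mpr ⟨hu, h⟩
            rw [hempty] at this; exact absurd this (Finset.notMem_empty u)
        have := Finset.card_le_card hsub1
        rw [hdeg w, Finset.card_singleton] at this
        omega
      have hvN : v ∈ G.neighborFinset w := by
        by_contra hvN
        refine hnd w ?_
        intro u hu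
        rcases Finset.mem_insert.mp (hwsub hu) with rfl | h
        · exact absurd hu hvN
        · exact h
      have hfw : d - 1 ≤ f w := by
        have hsub2 : (G.neighborFinset w).erase v ⊆ G.neighborFinset w ∩ I := by
          intro u hu
          obtain ⟨huv, huN⟩ := Finset.mem_erase.mp hu
          refine Finset.mem_inter.mpr ⟨huN, ?_⟩
          rcases Finset.mem_insert.mp (hwsub huN) with rfl | h
          · exact absurd rfl huv
          · exact h
        have := Finset.card_le_card hsub2
        rwa [Finset.card_erase_of_mem hvN, hdeg w] at this
      exact ⟨w, Finset.mem_filter.mpr ⟨Finset.mem_compl.mpr hwI, hfw⟩, hwsub⟩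
  choose wf hwfW hwfsub using hwit
  -- |B| ≤ |W|
  have hBW : B.card ≤ W.card := by
    refine Finset.card_le_card_of_injOn (fun v => if h : v ∈ B then wf v h else v)
      (fun v hv => by simp only [Finset.mem_coe] at hv ⊢; rw [dif_pos hv]; exact hwfW v hv) ?_
    intro v1 hv1' v2 hv2' heq
    have hv1 : v1 ∈ B := Finset.mem_coe.mp hv1'
    have hv2 : v2 ∈ B := Finset.mem_coe.mp hv2'
    simp only at heq
    rw [dif_pos hv1, dif_pos hv2] at heq
    have hv1I : v1 ∉ I := Finset.mem_compl.mp (Finset.mem_filter.mp hv1).1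
    have h1mem : v1 ∈ G.neighborFinset (wf v1 hv1) := by
      by_contra hc
      have hfv1 : (Finset.mem_filter.mp hv1).2 = (Finset.mem_filter.mp hv1).2 := rfl
      -- v1 must be a neighbor of its witness: else N(wf) ⊆ I
      refine hnd (wf v1 hv1) ?_
      intro u hu
      rcases Finset.mem_insert.mp (hwfsub v1 hv1 hu) with rfl | h
      · exact absurd hu hc
      · exact h
    have := hwfsub v2 hv2 (heq ▸ h1mem)
    rcases Finset.mem_insert.mp this with h | h
    · exact h
    · exact absurd h hv1I
  -- lower bound on the sum
  have hlow : Iᶜ.card ≤ ∑ v ∈ Iᶜ, f v := by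
    have hWsub : W ⊆ Iᶜ := Finset.filter_subset _ _
    have hBsub : B ⊆ Iᶜ \ W := by
      intro v hv
      rw [Finset.mem_sdiff]
      refine ⟨(Finset.filter_subset _ _) hv, fun hvW => ?_⟩
      have h0 := (Finset.mem_filter.mp hv).2
      have h1' := (Finset.mem_filter.mp hvW).2
      omega
    have e1 : ∑ v ∈ Iᶜ \ W, f v + ∑ v ∈ W, f v = ∑ v ∈ Iᶜ, f v := Finset.sum_sdiff hWsub
    have hs1 : (d - 1) * W.card ≤ ∑ v ∈ W, f v := by
      have := Finset.card_nsmul_le_sum W f (d - 1) (fun x hx => (Finset.mem_filter.mp hx).2)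
      rwa [smul_eq_mul, mul_comm] at this
    have hs2 : ((Iᶜ \ W) \ B).card ≤ ∑ v ∈ Iᶜ \ W, f v := by
      calc ((Iᶜ \ W) \ B).card = ((Iᶜ \ W) \ B).card • 1 := by rw [smul_eq_mul, mul_one]
        _ ≤ ∑ v ∈ (Iᶜ \ W) \ B, f v := by
            refine Finset.card_nsmul_le_sum _ _ _ (fun x hx => ?_)
            obtain ⟨hx1, hx2⟩ := Finset.mem_sdiff.mp hx
            have hxc : x ∈ Iᶜ := (Finset.mem_sdiff.mp hx1).1
            have : f x ≠ 0 := fun h0 => hx2 (Finset.mem_filter.mpr ⟨hxc, h0⟩)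
            omega
        _ ≤ ∑ v ∈ Iᶜ \ W, f v :=
            Finset.sum_le_sum_of_subset (Finset.sdiff_subset)
    have hc1 : (Iᶜ \ W).card = Iᶜ.card - W.card := Finset.card_sdiff_of_subset hWsub
    have hc2 : ((Iᶜ \ W) \ B).card = (Iᶜ \ W).card - B.card := Finset.card_sdiff_of_subset hBsub
    have hle1 : W.card ≤ Iᶜ.card := Finset.card_le_card hWsub
    have hle2 : B.card ≤ (Iᶜ \ W).card := Finset.card_le_card hBsub
    have hmul : 2 * W.card ≤ (d - 1) * W.card := Nat.mul_le_mul_right _ (by omega)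
    generalize hmm : (d - 1) * W.card = m at hs1 hmul
    omega
  -- hence (d+1)|I| ≥ n
  have hcompl : I.card + Iᶜ.card = Fintype.card V := Finset.card_add_card_compl I
  have hkey : Iᶜ.card ≤ d * I.card := hsum ▸ hlow
  -- final nat inequality: (d+1) * Iᶜ.card ≤ d * n
  have hnat : Iᶜ.card * (d + 1) ≤ d * Fintype.card V := by
    have hdn : d * Fintype.card V = d * I.card + d * Iᶜ.card := by
      rw [← hcompl, Nat.mul_add]
    calc Iᶜ.card * (d + 1) = d * Iᶜ.card + Iᶜ.card := by ring
      _ ≤ d * Iᶜ.card + d * I.card := Nat.add_le_add_left hkey _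
      _ = d * Fintype.card V := by omega
  refine ⟨(↑(Iᶜ : Finset V) : Set V), ⟨?_, ?_⟩, ?_⟩
  · intro v w hadj
    by_contra hc
    push_neg at hc
    obtain ⟨hcv, hcw⟩ := hc
    simp only [Finset.coe_compl, Set.mem_compl_iff, Finset.mem_coe, not_not] at hcv hcw
    exact hind v hcv w hcw hadj
  · intro v
    obtain ⟨u, huN, huI⟩ := Finset.not_subset.mp (hnd v)
    refine ⟨u, ?_, (mem_neighborFinset G v u).mp huN⟩
    simp [huI]
  · rw [Set.ncard_coe_finset]
    rw [le_div_iff₀ (by positivity)]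
    exact_mod_cast hnat
end

section
/- For every integer d ≥ 5, every finite connected d-regular simple graph G on n vertices that is not isomorphic to the complete graph K_{d+1} has a total vertex cover with at most (d − 1/(2d+1))·n/(d+1) vertices. -/
open SimpleGraph

namespace TVCAux

open Finset

variable {V : Type*} [Fintype V] [DecidableEq V] (G : SimpleGraph V) [DecidableRel G.Adj]

/-- `I` is independent and every vertex outside `I` has a neighbor outside `I`. -/
def Good (I : Finset V) : Prop :=
  (∀ u ∈ I, ∀ v ∈ I, ¬ G.Adj u v) ∧ ∀ v, v ∉ I → ∃ u, G.Adj v u ∧ u ∉ I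

lemma inter_compl_card (s I : Finset V) :
    (s ∩ I).card + (s ∩ Iᶜ).card = s.card := by
  have h : s ∩ Iᶜ = s \ I := by
    ext a; simp [Finset.mem_sdiff, Finset.mem_compl, and_comm]
  rw [h, add_comm, Finset.card_sdiff_add_card_inter]

lemma complete_case {d : ℕ} (hd : 5 ≤ d) (hreg : ∀ v, (G.neighborFinset v).card = d)
    (hconn : G.Connected) (w : V)
    (hcl : ∀ u ∈ G.neighborFinset w, ∀ u' ∈ G.neighborFinset w, u ≠ u' → G.Adj u u') :
    Nonempty (G ≃g completeGraph (Fin (d + 1))) := by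
  set K : Finset V := insert w (G.neighborFinset w) with hK
  have hwK : w ∉ G.neighborFinset w := by
    simp [SimpleGraph.mem_neighborFinset]
  have hKcard : K.card = d + 1 := by
    rw [hK, Finset.card_insert_of_notMem hwK, hreg w]
  have hnbr : ∀ a ∈ K, G.neighborFinset a = K.erase a := by
    intro a ha
    rw [hK, Finset.mem_insert] at ha
    rcases ha with rfl | ha
    · rw [hK, Finset.erase_insert hwK]
    · have hsub : K.erase a ⊆ G.neighborFinset a := by
        intro b hb
        rw [Finset.mem_erase, hK, Finset.mem_insert] at hb
        obtain ⟨hba, hb⟩ := hb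
        rcases hb with rfl | hb
        · rw [SimpleGraph.mem_neighborFinset]
          exact ((SimpleGraph.mem_neighborFinset G b a).mp ha).symm
        · rw [SimpleGraph.mem_neighborFinset]
          exact (hcl a ha b hb (fun h => hba h.symm)).symm.symm
      have hc1 : (K.erase a).card = d := by
        rw [Finset.card_erase_of_mem (by rw [hK]; exact Finset.mem_insert_of_mem ha), hKcard]
        omega
      exact (Finset.eq_of_subset_of_card_le hsub (by rw [hreg a, hc1])).symm
  have hclosed : ∀ a b : V, a ∈ K → G.Adj a b → b ∈ K := by
    intro a b ha hadj
    have : b ∈ G.neighborFinset a := by rw [SimpleGraph.mem_neighborFinset]; exact hadj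
    rw [hnbr a ha] at this
    exact Finset.mem_of_mem_erase this
  have hall : ∀ v : V, v ∈ K := by
    have hwalk : ∀ (x y : V), G.Walk x y → x ∈ K → y ∈ K := by
      intro x y p
      induction p with
      | nil => exact id
      | cons h p ih => exact fun hx => ih (hclosed _ _ hx h)
    intro v
    obtain ⟨p⟩ := hconn.preconnected w v
    exact hwalk _ _ p (by rw [hK]; exact Finset.mem_insert_self _ _)
  have hcardV : Fintype.card V = d + 1 := by
    rw [← hKcard, ← Finset.card_univ, Finset.eq_univ_iff_forall.mpr hall]
  have hadj : ∀ a b : V, a ≠ b → G.Adj a b := by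
    intro a b hab
    have hbK : b ∈ K.erase a := Finset.mem_erase.mpr ⟨fun h => hab h.symm, hall b⟩
    rw [← hnbr a (hall a), SimpleGraph.mem_neighborFinset] at hbK
    exact hbK
  let e := Fintype.equivFinOfCardEq hcardV
  refine ⟨⟨e, ?_⟩⟩
  intro a b
  simp only [completeGraph, SimpleGraph.top_adj, ne_eq, EmbeddingLike.apply_eq_iff_eq]
  constructor
  · intro h
    exact hadj a b h
  · intro h
    exact G.ne_of_adj h

lemma blocker_exists {d : ℕ} (hd : 5 ≤ d) (hreg : ∀ v, (G.neighborFinset v).card = d)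
    (hconn : G.Connected) (hniso : ¬ Nonempty (G ≃g completeGraph (Fin (d + 1))))
    (I : Finset V) (hI : Good G I) (hmax : ∀ J, Good G J → J.card ≤ I.card)
    (w : V) (hw : w ∈ I)
    (hpriv : ∀ u ∈ G.neighborFinset w, G.neighborFinset u ∩ I = {w}) :
    ∃ x, x ∉ I ∧ (G.neighborFinset x ∩ Iᶜ).Nonempty ∧ (G.neighborFinset x ∩ Iᶜ).card ≤ 2 ∧
      ∀ q ∈ G.neighborFinset x ∩ Iᶜ, G.neighborFinset q ∩ I = {w} := by
  have hnbrA : ∀ u ∈ G.neighborFinset w, u ∉ I := by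
    intro u hu huI
    exact hI.1 w hw u huI ((SimpleGraph.mem_neighborFinset G w u).mp hu)
  by_cases hcl : ∀ u ∈ G.neighborFinset w, ∀ u' ∈ G.neighborFinset w, u ≠ u' → G.Adj u u'
  · exact absurd (complete_case G hd hreg hconn w hcl) hniso
  push_neg at hcl
  obtain ⟨u, hu, u', hu', hne, hnadj⟩ := hcl
  have huI : u ∉ I := hnbrA u hu
  have hu'I : u' ∉ I := hnbrA u' hu'
  set J : Finset V := insert u (insert u' (I.erase w)) with hJ
  have hmemJ : ∀ y, y ∈ J ↔ y = u ∨ y = u' ∨ (y ∈ I ∧ y ≠ w) := by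
    intro y
    simp [hJ, Finset.mem_insert, Finset.mem_erase, and_comm]
  have hadjI : ∀ z ∈ G.neighborFinset w, ∀ y ∈ I, G.Adj z y → y = w := by
    intro z hz y hy hadj
    have : y ∈ G.neighborFinset z ∩ I := by
      simp [SimpleGraph.mem_neighborFinset, hadj, hy]
    rw [hpriv z hz] at this
    simpa using this
  have hJindep : ∀ a ∈ J, ∀ b ∈ J, ¬ G.Adj a b := by
    intro a ha b hb hadj
    rw [hmemJ] at ha hb
    have key : ∀ c c', (c = u ∨ c = u' ∨ (c ∈ I ∧ c ≠ w)) →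
        (c' ∈ I ∧ c' ≠ w) → ¬ G.Adj c c' := by
      rintro c c' (rfl | rfl | ⟨hc, hcw⟩) ⟨hc', hc'w⟩ hadj
      · exact hc'w (hadjI _ hu _ hc' hadj)
      · exact hc'w (hadjI _ hu' _ hc' hadj)
      · exact hI.1 c hc c' hc' hadj
    rcases ha with rfl | rfl | ha <;> rcases hb with rfl | rfl | hb
    · exact G.loopless.irrefl _ hadj
    · exact hnadj hadj
    · exact key a b (Or.inl rfl) hb hadj
    · exact hnadj hadj.symm
    · exact G.loopless.irrefl _ hadj
    · exact key a b (Or.inr (Or.inl rfl)) hb hadj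
    · exact key b a (Or.inl rfl) ha hadj.symm
    · exact key b a (Or.inr (Or.inl rfl)) ha hadj.symm
    · exact hI.1 a ha.1 b hb.1 hadj
  have hJcard : J.card = I.card + 1 := by
    have h1 : u ∉ insert u' (I.erase w) := by
      simp only [Finset.mem_insert, Finset.mem_erase]
      rintro (rfl | ⟨-, h⟩)
      · exact hne rfl
      · exact huI h
    have h2 : u' ∉ I.erase w := fun h => hu'I (Finset.mem_of_mem_erase h)
    rw [hJ, Finset.card_insert_of_notMem h1, Finset.card_insert_of_notMem h2,
      Finset.card_erase_of_mem hw]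
    have : 1 ≤ I.card := Finset.card_pos.mpr ⟨w, hw⟩
    omega
  have hJnotgood : ¬ Good G J := by
    intro hg
    have := hmax J hg
    omega
  have hex : ∃ x, x ∉ J ∧ ∀ y, G.Adj x y → y ∈ J := by
    by_contra hcon
    push_neg at hcon
    exact hJnotgood ⟨hJindep, fun x hx => hcon x hx⟩
  obtain ⟨x, hxJ, hxall⟩ := hex
  have hxw : x ≠ w := by
    rintro rfl
    have hz : ((G.neighborFinset x) \ {u, u'}).Nonempty := by
      rw [← Finset.card_pos]
      have h1 : ((G.neighborFinset x) \ {u, u'}).card ≥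
          (G.neighborFinset x).card - ({u, u'} : Finset V).card :=
        Finset.le_card_sdiff _ _
      have h2 : ({u, u'} : Finset V).card ≤ 2 := Finset.card_insert_le _ _ |>.trans (by simp)
      rw [hreg x] at h1
      omega
    obtain ⟨z, hz⟩ := hz
    rw [Finset.mem_sdiff, Finset.mem_insert, Finset.mem_singleton] at hz
    push_neg at hz
    obtain ⟨hzN, hzu, hzu'⟩ := hz
    have hzJ := hxall z ((SimpleGraph.mem_neighborFinset G x z).mp hzN)
    rw [hmemJ] at hzJ
    rcases hzJ with rfl | rfl | ⟨hzI, _⟩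
    · exact hzu rfl
    · exact hzu' rfl
    · exact hnbrA z hzN hzI
  have hxI : x ∉ I := by
    intro h
    exact hxJ ((hmemJ x).mpr (Or.inr (Or.inr ⟨h, hxw⟩)))
  have hsub : G.neighborFinset x ∩ Iᶜ ⊆ {u, u'} := by
    intro y hy
    rw [Finset.mem_inter, SimpleGraph.mem_neighborFinset, Finset.mem_compl] at hy
    have := hxall y hy.1
    rw [hmemJ] at this
    rcases this with rfl | rfl | ⟨h, _⟩
    · simp
    · simp
    · exact absurd h hy.2
  have hne2 : (G.neighborFinset x ∩ Iᶜ).Nonempty := by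
    obtain ⟨y, hadj, hyI⟩ := hI.2 x hxI
    exact ⟨y, by simp [SimpleGraph.mem_neighborFinset, hadj, hyI]⟩
  refine ⟨x, hxI, hne2, ?_, ?_⟩
  · calc (G.neighborFinset x ∩ Iᶜ).card ≤ ({u, u'} : Finset V).card :=
        Finset.card_le_card hsub
      _ ≤ 2 := Finset.card_insert_le _ _ |>.trans (by simp)
  · intro q hq
    have := hsub hq
    rw [Finset.mem_insert, Finset.mem_singleton] at this
    rcases this with rfl | rfl
    · exact hpriv q hu
    · exact hpriv q hu'

lemma free_partner (I : Finset V) (hI : Good G I)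
    (hmax : ∀ J, Good G J → J.card ≤ I.card)
    (v : V) (hv : v ∉ I) (hfree : G.neighborFinset v ∩ I = ∅) :
    ∃ x, x ∉ I ∧ G.neighborFinset x ∩ Iᶜ = {v} := by
  set J : Finset V := insert v I with hJ
  have hvI : ∀ y ∈ I, ¬ G.Adj v y := by
    intro y hy hadj
    have : y ∈ G.neighborFinset v ∩ I := by
      simp [SimpleGraph.mem_neighborFinset, hadj, hy]
    simp [hfree] at this
  have hJindep : ∀ u ∈ J, ∀ u' ∈ J, ¬ G.Adj u u' := by
    intro u hu u' hu' hadj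
    rw [hJ, Finset.mem_insert] at hu hu'
    rcases hu with rfl | hu <;> rcases hu' with rfl | hu'
    · exact G.loopless.irrefl _ hadj
    · exact hvI u' hu' hadj
    · exact hvI u hu hadj.symm
    · exact hI.1 u hu u' hu' hadj
  have hJcard : J.card = I.card + 1 := Finset.card_insert_of_notMem hv
  have hJnotgood : ¬ Good G J := by
    intro hg
    have := hmax J hg
    omega
  have : ∃ x, x ∉ J ∧ ∀ u, G.Adj x u → u ∈ J := by
    by_contra hcon
    push_neg at hcon
    refine hJnotgood ⟨hJindep, ?_⟩
    intro x hx
    obtain ⟨u, hu1, hu2⟩ := hcon x hx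
    exact ⟨u, hu1, hu2⟩
  obtain ⟨x, hxJ, hxall⟩ := this
  have hxI : x ∉ I := fun h => hxJ (Finset.mem_insert_of_mem h)
  refine ⟨x, hxI, ?_⟩
  have hsub : G.neighborFinset x ∩ Iᶜ ⊆ {v} := by
    intro y hy
    rw [Finset.mem_inter, SimpleGraph.mem_neighborFinset, Finset.mem_compl] at hy
    have := hxall y hy.1
    rw [hJ, Finset.mem_insert] at this
    rcases this with rfl | h
    · exact Finset.mem_singleton_self y
    · exact absurd h hy.2
  have hne : (G.neighborFinset x ∩ Iᶜ).Nonempty := by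
    obtain ⟨u, hadj, huI⟩ := hI.2 x hxI
    exact ⟨u, by simp [SimpleGraph.mem_neighborFinset, hadj, huI]⟩
  rcases Finset.subset_singleton_iff.mp hsub with h | h
  · rw [h] at hne; exact absurd hne (by simp)
  · exact h

lemma main_bound {d : ℕ} (hd : 5 ≤ d) (hreg : ∀ v, (G.neighborFinset v).card = d)
    (hconn : G.Connected) (hniso : ¬ Nonempty (G ≃g completeGraph (Fin (d + 1)))) :
    ∃ I : Finset V, Good G I ∧ 2 * Fintype.card V ≤ (2 * d + 1) * I.card := by
  classical
  have hnV : Nonempty V := hconn.nonempty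
  have hGoodEmpty : Good G (∅ : Finset V) := by
    constructor
    · simp
    · intro v _
      have hne : (G.neighborFinset v).Nonempty := by rw [← Finset.card_pos, hreg v]; omega
      obtain ⟨u, hu⟩ := hne
      exact ⟨u, (SimpleGraph.mem_neighborFinset G v u).mp hu, by simp⟩
  obtain ⟨I, hImem, hImax'⟩ := Finset.exists_max_image
      ((Finset.univ : Finset (Finset V)).filter (fun J => Good G J)) Finset.card
      ⟨∅, by simp [hGoodEmpty]⟩
  have hI : Good G I := (Finset.mem_filter.mp hImem).2
  have hmax : ∀ J, Good G J → J.card ≤ I.card := by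
    intro J hJ
    exact hImax' J (Finset.mem_filter.mpr ⟨Finset.mem_univ J, hJ⟩)
  refine ⟨I, hI, ?_⟩
  set e : V → ℕ := fun u => (G.neighborFinset u ∩ I).card with he
  have heu' : ∀ u, e u = (G.neighborFinset u ∩ I).card := fun u => rfl
  -- suppliers for vertices of I
  have hσclaim : ∀ w ∈ I, ∃ u, u ∉ I ∧ 2 ≤ e u ∧ (G.Adj u w ∨
      ((∀ q ∈ G.neighborFinset u ∩ Iᶜ, G.neighborFinset q ∩ I = {w}) ∧
        (G.neighborFinset u ∩ Iᶜ).Nonempty ∧ (G.neighborFinset u ∩ Iᶜ).card ≤ 2)) := by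
    intro w hw
    by_cases hheavy : ∃ u ∈ G.neighborFinset w, 2 ≤ e u
    · obtain ⟨u, hu, hu2⟩ := hheavy
      have hadj : G.Adj w u := (SimpleGraph.mem_neighborFinset G w u).mp hu
      have huI : u ∉ I := fun h => hI.1 w hw u h hadj
      exact ⟨u, huI, hu2, Or.inl hadj.symm⟩
    · push_neg at hheavy
      have hpriv : ∀ u ∈ G.neighborFinset w, G.neighborFinset u ∩ I = {w} := by
        intro u hu
        have hadj : G.Adj w u := (SimpleGraph.mem_neighborFinset G w u).mp hu
        have hwmem : w ∈ G.neighborFinset u ∩ I := by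
          simp [SimpleGraph.mem_neighborFinset, hadj.symm, hw]
        have hle : (G.neighborFinset u ∩ I).card ≤ 1 := by
          have h := hheavy u hu
          rw [heu' u] at h
          omega
        rw [Finset.eq_singleton_iff_unique_mem]
        exact ⟨hwmem, fun x hx => Finset.card_le_one.mp hle x hx w hwmem⟩
      obtain ⟨x, hxI, hxne, hxcard, hxpriv⟩ :=
        blocker_exists G hd hreg hconn hniso I hI hmax w hw hpriv
      have hx2 : 2 ≤ e x := by
        have h := inter_compl_card (G.neighborFinset x) I
        rw [hreg x] at h
        rw [heu' x]
        omega
      exact ⟨x, hxI, hx2, Or.inr ⟨hxpriv, hxne, hxcard⟩⟩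
  choose! σ hσ1 hσ2 hσ3 using hσclaim
  -- partners for free vertices
  have hτclaim : ∀ v, v ∉ I → e v = 0 → ∃ x, x ∉ I ∧ 2 ≤ e x ∧
      G.neighborFinset x ∩ Iᶜ = {v} := by
    intro v hv hv0
    have hfree : G.neighborFinset v ∩ I = ∅ := Finset.card_eq_zero.mp hv0
    obtain ⟨x, hxI, hxeq⟩ := free_partner G I hI hmax v hv hfree
    have hx2 : 2 ≤ e x := by
      have h1 := inter_compl_card (G.neighborFinset x) I
      rw [hreg x, hxeq] at h1
      simp only [Finset.card_singleton] at h1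
      rw [heu' x]
      omega
    exact ⟨x, hxI, hx2, hxeq⟩
  have hτclaim' : ∀ v, (v ∉ I ∧ e v = 0) → ∃ x, x ∉ I ∧ 2 ≤ e x ∧
      G.neighborFinset x ∩ Iᶜ = {v} := fun v h => hτclaim v h.1 h.2
  choose! τ hτ1 hτ2 hτ3 using hτclaim'
  set Hs : Finset V := Iᶜ.filter (fun u => 2 ≤ e u) with hHs
  set F : Finset V := Iᶜ.filter (fun v => e v = 0) with hF
  have hσH : ∀ w ∈ I, σ w ∈ Hs := by
    intro w hw
    rw [hHs, Finset.mem_filter, Finset.mem_compl]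
    exact ⟨hσ1 w hw, hσ2 w hw⟩
  have hFprop : ∀ v ∈ F, v ∉ I ∧ e v = 0 := by
    intro v hv
    rw [hF, Finset.mem_filter, Finset.mem_compl] at hv
    exact hv
  have hτH : ∀ v ∈ F, τ v ∈ Hs := by
    intro v hv
    rw [hHs, Finset.mem_filter, Finset.mem_compl]
    exact ⟨hτ1 v (hFprop v hv), hτ2 v (hFprop v hv)⟩
  have hIcount : I.card = ∑ u ∈ Hs, (I.filter (fun w => σ w = u)).card :=
    Finset.card_eq_sum_card_fiberwise hσH
  have hFcount : F.card = ∑ u ∈ Hs, (F.filter (fun v => τ v = u)).card :=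
    Finset.card_eq_sum_card_fiberwise hτH
  have hpoint : ∀ u ∈ Hs, (I.filter (fun w => σ w = u)).card
      + 2 * (F.filter (fun v => τ v = u)).card + 2 ≤ 2 * e u := by
    intro u hu
    rw [hHs, Finset.mem_filter, Finset.mem_compl] at hu
    obtain ⟨huI, hu2⟩ := hu
    have hdu := inter_compl_card (G.neighborFinset u) I
    rw [hreg u, ← heu' u] at hdu
    set Sf := I.filter (fun w => σ w = u) with hSf
    set Tf := F.filter (fun v => τ v = u) with hTf
    have hTcard : Tf.card ≤ 1 := by
      rw [Finset.card_le_one]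
      intro v1 hv1 v2 hv2
      rw [hTf, Finset.mem_filter] at hv1 hv2
      have h1 := hτ3 v1 (hFprop v1 hv1.1)
      have h2 := hτ3 v2 (hFprop v2 hv2.1)
      rw [hv1.2] at h1
      rw [hv2.2] at h2
      have := h1.symm.trans h2
      exact Finset.singleton_injective this
    have hsplitS := Finset.card_filter_add_card_filter_not
      (s := Sf) (p := fun w => G.Adj u w)
    set S1 := Sf.filter (fun w => G.Adj u w) with hS1
    set S2 := Sf.filter (fun w => ¬ G.Adj u w) with hS2
    have hS1card : S1.card ≤ e u := by
      rw [heu' u]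
      apply Finset.card_le_card
      intro w hw
      rw [hS1, Finset.mem_filter, hSf, Finset.mem_filter] at hw
      rw [Finset.mem_inter, SimpleGraph.mem_neighborFinset]
      exact ⟨hw.2, hw.1.1⟩
    have hblk : ∀ w ∈ S2,
        (∀ q ∈ G.neighborFinset u ∩ Iᶜ, G.neighborFinset q ∩ I = {w}) ∧
        (G.neighborFinset u ∩ Iᶜ).Nonempty ∧ (G.neighborFinset u ∩ Iᶜ).card ≤ 2 := by
      intro w hw
      rw [hS2, Finset.mem_filter, hSf, Finset.mem_filter] at hw
      obtain ⟨⟨hwI, hwσ⟩, hwnadj⟩ := hw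
      have := hσ3 w hwI
      rw [hwσ] at this
      rcases this with h | h
      · exact absurd h hwnadj
      · exact h
    have hS2card : S2.card ≤ 1 := by
      rw [Finset.card_le_one]
      intro w1 hw1 w2 hw2
      obtain ⟨hp1, hne1, -⟩ := hblk w1 hw1
      obtain ⟨hp2, -, -⟩ := hblk w2 hw2
      obtain ⟨q, hq⟩ := hne1
      have e1 := hp1 q hq
      have e2 := hp2 q hq
      exact Finset.singleton_injective (e1.symm.trans e2)
    by_cases hT : Tf.Nonempty
    · obtain ⟨v, hv⟩ := hT
      rw [hTf, Finset.mem_filter] at hv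
      have hv3 := hτ3 v (hFprop v hv.1)
      rw [hv.2] at hv3
      have heu : e u + 1 = d := by
        rw [hv3] at hdu
        simpa using hdu
      have hS2empty : S2 = ∅ := by
        rw [Finset.eq_empty_iff_forall_notMem]
        intro w hw
        obtain ⟨hp, -, -⟩ := hblk w hw
        have hvmem : v ∈ G.neighborFinset u ∩ Iᶜ := by rw [hv3]; simp
        have := hp v hvmem
        have hv0 : e v = 0 := (hFprop v hv.1).2
        rw [heu' v] at hv0
        rw [Finset.card_eq_zero.mp hv0] at this
        exact absurd this.symm (Finset.singleton_ne_empty w)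
      have hSfcard : Sf.card ≤ e u := by
        have : S2.card = 0 := by rw [hS2empty]; simp
        omega
      omega
    · have hTzero : Tf.card = 0 := by
        rw [Finset.card_eq_zero]
        exact Finset.not_nonempty_iff_eq_empty.mp hT
      by_cases hS2e : S2.Nonempty
      · obtain ⟨w, hw⟩ := hS2e
        obtain ⟨-, -, hcle⟩ := hblk w hw
        have heu : d ≤ e u + 2 := by omega
        omega
      · have : S2.card = 0 := by
          rw [Finset.card_eq_zero]
          exact Finset.not_nonempty_iff_eq_empty.mp hS2e
        omega
  have hsum1 : I.card + 2 * F.card + 2 * Hs.card ≤ 2 * ∑ u ∈ Hs, e u := by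
    have h1 := Finset.sum_le_sum hpoint
    rw [Finset.sum_add_distrib, Finset.sum_add_distrib, Finset.sum_const,
      ← Finset.mul_sum, ← Finset.mul_sum, smul_eq_mul] at h1
    rw [hIcount, hFcount]
    omega
  have hedge : ∑ u ∈ Iᶜ, e u = d * I.card := by
    have hrw : ∀ u, e u = ∑ w ∈ I, (if G.Adj u w then 1 else 0) := by
      intro u
      have h : G.neighborFinset u ∩ I = I.filter (fun w => G.Adj u w) := by
        ext w
        simp [SimpleGraph.mem_neighborFinset, and_comm]
      rw [heu' u, h, Finset.card_filter]
    calc ∑ u ∈ Iᶜ, e u = ∑ u ∈ Iᶜ, ∑ w ∈ I, (if G.Adj u w then 1 else 0) :=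
          Finset.sum_congr rfl (fun u _ => hrw u)
      _ = ∑ w ∈ I, ∑ u ∈ Iᶜ, (if G.Adj u w then 1 else 0) := Finset.sum_comm
      _ = ∑ w ∈ I, d := by
          apply Finset.sum_congr rfl
          intro w hw
          rw [← Finset.card_filter]
          have : Iᶜ.filter (fun u => G.Adj u w) = G.neighborFinset w := by
            ext u
            simp only [Finset.mem_filter, Finset.mem_compl, SimpleGraph.mem_neighborFinset]
            constructor
            · intro h; exact h.2.symm
            · intro h
              exact ⟨fun huI => hI.1 w hw u huI h, h.symm⟩
          rw [this, hreg w]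
      _ = d * I.card := by rw [Finset.sum_const, smul_eq_mul, mul_comm]
  set C1 : Finset V := Iᶜ.filter (fun u => ¬ 2 ≤ e u) with hC1
  have hsplit : ∑ u ∈ Hs, e u + ∑ u ∈ C1, e u = ∑ u ∈ Iᶜ, e u :=
    Finset.sum_filter_add_sum_filter_not _ _ _
  have hC1card : C1.card ≤ ∑ u ∈ C1, e u + F.card := by
    have h1 : C1.card = ∑ u ∈ C1, 1 := by rw [Finset.sum_const, smul_eq_mul, mul_one]
    have h2 : ∑ u ∈ C1, (1 : ℕ) ≤ ∑ u ∈ C1, (e u + if e u = 0 then 1 else 0) := by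
      apply Finset.sum_le_sum
      intro u _
      split <;> omega
    have h3 : ∑ u ∈ C1, (e u + if e u = 0 then 1 else 0)
        = ∑ u ∈ C1, e u + (C1.filter (fun u => e u = 0)).card := by
      rw [Finset.sum_add_distrib, Finset.card_filter]
    have h4 : C1.filter (fun u => e u = 0) = F := by
      rw [hC1, hF, Finset.filter_filter]
      apply Finset.filter_congr
      intro u _
      constructor
      · intro h; exact h.2
      · intro h; exact ⟨by omega, h⟩
    have h5 : (C1.filter (fun u => e u = 0)).card = F.card := by rw [h4]
    omega
  have hpart : Hs.card + C1.card = Iᶜ.card :=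
    Finset.card_filter_add_card_filter_not _
  have hn : I.card + Iᶜ.card = Fintype.card V := by
    rw [Finset.card_compl]
    have := Finset.card_le_univ I
    omega
  have hgoal : (2 * d + 1) * I.card = 2 * (d * I.card) + I.card := by ring
  rw [hgoal]
  omega

end TVCAux

theorem stmt_1 {V : Type*} [Fintype V] (G : SimpleGraph V) (d : ℕ) (hd : 5 ≤ d)
    (hconn : G.Connected)
    (hreg : ∀ v : V, (G.neighborSet v).ncard = d)
    (hniso : ¬ Nonempty (G ≃g (completeGraph (Fin (d + 1))))) :
    ∃ S : Set V, IsTotalVertexCover G S ∧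
      (S.ncard : ℝ) ≤ ((d : ℝ) - 1 / (2 * d + 1)) * (Fintype.card V : ℝ) / (d + 1) := by
  classical
  have hreg' : ∀ v : V, (G.neighborFinset v).card = d := by
    intro v
    have := hreg v
    rwa [Set.ncard_eq_toFinset_card'] at this
  obtain ⟨I, hI, hcard⟩ := TVCAux.main_bound G hd hreg' hconn hniso
  refine ⟨(↑(Iᶜ) : Set V), ⟨?_, ?_⟩, ?_⟩
  · intro v w hvw
    by_contra h
    push_neg at h
    obtain ⟨h1, h2⟩ := h
    simp only [Finset.coe_compl, Set.mem_compl_iff, Finset.mem_coe, not_not] at h1 h2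
    exact hI.1 v h1 w h2 hvw
  · intro v
    by_cases hv : v ∈ I
    · have hne : (G.neighborFinset v).Nonempty := by
        rw [← Finset.card_pos, hreg' v]; omega
      obtain ⟨u, hu⟩ := hne
      rw [SimpleGraph.mem_neighborFinset] at hu
      refine ⟨u, ?_, hu⟩
      simp only [Finset.coe_compl, Set.mem_compl_iff, Finset.mem_coe]
      intro huI
      exact hI.1 v hv u huI hu
    · obtain ⟨u, hadj, huI⟩ := hI.2 v hv
      exact ⟨u, by simpa using huI, hadj⟩
  · have hg_le : I.card ≤ Fintype.card V := Finset.card_le_univ I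
    have hncard : ((↑(Iᶜ) : Set V).ncard : ℝ) = (Fintype.card V : ℝ) - I.card := by
      rw [Set.ncard_coe_finset, Finset.card_compl]
      push_cast [Nat.cast_sub hg_le]
      ring
    rw [hncard]
    have hd1 : (0:ℝ) < (d:ℝ) + 1 := by positivity
    have h2d1 : (0:ℝ) < 2*(d:ℝ) + 1 := by positivity
    have hrhs : ((d : ℝ) - 1 / (2 * d + 1)) * (Fintype.card V : ℝ) / (d + 1)
        = (2*(d:ℝ) - 1) * (Fintype.card V : ℝ) / (2*(d:ℝ)+1) := by
      field_simp
      ring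
    rw [hrhs, le_div_iff₀ h2d1]
    have hc : (2 * (Fintype.card V : ℝ)) ≤ (2*(d:ℝ)+1) * I.card := by
      exact_mod_cast hcard
    nlinarith [hc]
end

section
/- For every integer n ≥ 2, the n-by-n grid graph G_n (the box product of two path graphs on n vertices) has a spanning 2-connected subgraph H whose minimum total vertex cover size tvc(H) satisfies tvc(H) ≤ (2/5)·n² + 4n. -/
open SimpleGraph

/-- The `n × n` grid graph on `Fin n × Fin n`: `(i,j)` and `(i',j')` are adjacent
iff `i = i'` and `|j - j'| = 1`, or `j = j'` and `|i - i'| = 1`. -/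
def gridGraph (n : ℕ) : SimpleGraph (Fin n × Fin n) where
  Adj p q := (p.1 = q.1 ∧ |(p.2 : ℤ) - (q.2 : ℤ)| = 1) ∨
    (p.2 = q.2 ∧ |(p.1 : ℤ) - (q.1 : ℤ)| = 1)
  symm := by
    constructor
    rintro p q (⟨h1, h2⟩ | ⟨h1, h2⟩)
    · exact Or.inl ⟨h1.symm, by rwa [abs_sub_comm]⟩
    · exact Or.inr ⟨h1.symm, by rwa [abs_sub_comm]⟩
  loopless := by
    constructor
    rintro p (⟨-, h⟩ | ⟨-, h⟩) <;> simp at h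

/-- A finite graph is 2-connected if it has at least 3 vertices, is connected,
and removing any single vertex leaves a connected graph. -/
def TwoConnected {V : Type*} [Fintype V] (G : SimpleGraph V) : Prop :=
  3 ≤ Fintype.card V ∧ G.Connected ∧
    ∀ v : V, (G.induce ({v}ᶜ : Set V)).Connected

/-- The minimum size of a total vertex cover of `G`. -/
noncomputable def tvc {V : Type*} [Fintype V] (G : SimpleGraph V) : ℕ :=
  sInf {n | ∃ S : Set V, IsTotalVertexCover G S ∧ S.ncard = n}

namespace TVC

def res {n : ℕ} (p : Fin n × Fin n) : ℕ := (p.1.val + 2 * p.2.val) % 5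

def pat {n : ℕ} (p : Fin n × Fin n) : Prop := res p = 0 ∨ res p = 1

def bnd {n : ℕ} (p : Fin n × Fin n) : Prop :=
  p.1.val = 0 ∨ p.1.val = n - 1 ∨ p.2.val = 0 ∨ p.2.val = n - 1

def Sset (n : ℕ) : Set (Fin n × Fin n) := {p | bnd p ∨ pat p}

@[reducible] def HG (n : ℕ) : SimpleGraph (Fin n × Fin n) where
  Adj p q := (gridGraph n).Adj p q ∧ (p ∈ Sset n ∨ q ∈ Sset n)
  symm := by constructor; rintro p q ⟨h1, h2⟩; exact ⟨(gridGraph n).symm.symm _ _ h1, h2.symm⟩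
  loopless := ⟨fun p h => (gridGraph n).loopless.irrefl p h.1⟩

lemma grid_adj_vert {n : ℕ} {a b : Fin n × Fin n} (h2 : a.2 = b.2)
    (h1 : a.1.val = b.1.val + 1 ∨ b.1.val = a.1.val + 1) : (gridGraph n).Adj a b := by
  refine Or.inr ⟨h2, ?_⟩
  rcases h1 with h | h <;> · rw [abs_eq (by norm_num : (0:ℤ) ≤ 1)]; omega

lemma grid_adj_horiz {n : ℕ} {a b : Fin n × Fin n} (h2 : a.1 = b.1)
    (h1 : a.2.val = b.2.val + 1 ∨ b.2.val = a.2.val + 1) : (gridGraph n).Adj a b := by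
  refine Or.inl ⟨h2, ?_⟩
  rcases h1 with h | h <;> · rw [abs_eq (by norm_num : (0:ℤ) ≤ 1)]; omega

lemma bnd_mem_S {n : ℕ} {p : Fin n × Fin n} (h : bnd p) : p ∈ Sset n := Or.inl h

/-- region used by the upward route -/
def Rup {n : ℕ} (u w : Fin n × Fin n) : Prop :=
  w.1.val < u.1.val ∨ (w.1.val = u.1.val ∧ u.2.val ≤ w.2.val)

def Rdn {n : ℕ} (u w : Fin n × Fin n) : Prop :=
  u.1.val < w.1.val ∨ (w.1.val = u.1.val ∧ w.2.val ≤ u.2.val)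

def muUp {n : ℕ} (p : Fin n × Fin n) : ℕ :=
  2 * p.1.val + (if res p = 3 ∨ res p = 4 then 1 else 0)

def muDn {n : ℕ} (p : Fin n × Fin n) : ℕ :=
  2 * (n - 1 - p.1.val) + (if res p = 2 ∨ res p = 3 then 1 else 0)

lemma routeUp {n : ℕ} (v : Fin n × Fin n) :
    ∀ N (u : Fin n × Fin n), muUp u ≤ N → (huv : u ≠ v) → (∀ w, Rup u w → w ≠ v) →
    ∃ b, ∃ (hb : bnd b) (hbv : b ≠ v),
      ((HG n).induce ({v}ᶜ : Set (Fin n × Fin n))).Reachable ⟨u, huv⟩ ⟨b, hbv⟩ := by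
  intro N
  induction N with
  | zero =>
    intro u hN huv hv
    by_cases hb : bnd u
    · exact ⟨u, hb, huv, .refl _⟩
    · exfalso
      simp only [bnd, not_or] at hb
      simp only [muUp] at hN
      omega
  | succ N ih =>
    intro u hN huv hv
    by_cases hb : bnd u
    · exact ⟨u, hb, huv, .refl _⟩
    have hblocal := hb
    simp only [bnd, not_or] at hblocal
    have hi1 := u.1.isLt
    have hi2 := u.2.isLt
    have hint : 1 ≤ u.1.val ∧ u.1.val ≤ n - 2 ∧ 1 ≤ u.2.val ∧ u.2.val ≤ n - 2 := by omega
    have hc5 : res u < 5 := Nat.mod_lt _ (by norm_num)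
    have hcases : res u = 0 ∨ res u = 1 ∨ res u = 2 ∨ res u = 3 ∨ res u = 4 := by omega
    -- vertical step for res ∈ {0,1,2}, horizontal (right) for res ∈ {3,4}
    rcases hcases with hc | hc | hc | hc | hc
    case _ | _ | _ =>
      -- vertical: u' = (i-1, j)
      set u' : Fin n × Fin n := (⟨u.1.val - 1, by omega⟩, u.2) with hu'
      have hval1 : u'.1.val = u.1.val - 1 := rfl
      have hval2 : u'.2.val = u.2.val := rfl
      have hru' : res u' = (res u + 4) % 5 := by
        simp only [res, hval1, hval2]
        simp only [res] at hc ⊢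
        omega
      have hadj : (gridGraph n).Adj u u' := grid_adj_vert rfl (Or.inl (by omega))
      have hS : u ∈ Sset n ∨ u' ∈ Sset n := by
        first
        | exact Or.inl (Or.inr (Or.inl hc))
        | exact Or.inl (Or.inr (Or.inr hc))
        | exact Or.inr (Or.inr (Or.inr (show res u' = 1 by rw [hru', hc])))
      have hmu : muUp u' ≤ N := by
        simp only [muUp, hru', hc, hval1, hval2] at hN ⊢
        norm_num at hN ⊢
        omega
      have hregion : ∀ w, Rup u' w → w ≠ v := by
        intro w hw
        refine hv w ?_
        simp only [Rup, hval1, hval2] at hw ⊢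
        omega
      have hu'v : u' ≠ v := hregion u' (Or.inr ⟨rfl, le_rfl⟩)
      have hadj' : ((HG n).induce ({v}ᶜ : Set (Fin n × Fin n))).Adj ⟨u, huv⟩ ⟨u', hu'v⟩ :=
        ⟨hadj, hS⟩
      obtain ⟨b, hbb, hbv, hreach⟩ := ih u' hmu hu'v hregion
      exact ⟨b, hbb, hbv, hadj'.reachable.trans hreach⟩
    case _ | _ =>
      -- horizontal: u' = (i, j+1)
      set u' : Fin n × Fin n := (u.1, ⟨u.2.val + 1, by omega⟩) with hu'
      have hval1 : u'.1.val = u.1.val := rfl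
      have hval2 : u'.2.val = u.2.val + 1 := rfl
      have hru' : res u' = (res u + 2) % 5 := by
        simp only [res, hval1, hval2]
        simp only [res] at hc ⊢
        omega
      have hadj : (gridGraph n).Adj u u' := grid_adj_horiz rfl (Or.inr rfl)
      have hS : u ∈ Sset n ∨ u' ∈ Sset n := by
        have : res u' = 0 ∨ res u' = 1 := by rw [hru', hc]; norm_num
        rcases this with h | h
        · exact Or.inr (Or.inr (Or.inl h))
        · exact Or.inr (Or.inr (Or.inr h))
      have hmu : muUp u' ≤ N := by
        simp only [muUp, hru', hc, hval1, hval2] at hN ⊢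
        norm_num at hN ⊢
        omega
      have hregion : ∀ w, Rup u' w → w ≠ v := by
        intro w hw
        refine hv w ?_
        simp only [Rup, hval1, hval2] at hw ⊢
        omega
      have hu'v : u' ≠ v := hregion u' (Or.inr ⟨rfl, le_rfl⟩)
      have hadj' : ((HG n).induce ({v}ᶜ : Set (Fin n × Fin n))).Adj ⟨u, huv⟩ ⟨u', hu'v⟩ :=
        ⟨hadj, hS⟩
      obtain ⟨b, hbb, hbv, hreach⟩ := ih u' hmu hu'v hregion
      exact ⟨b, hbb, hbv, hadj'.reachable.trans hreach⟩

lemma routeDn {n : ℕ} (v : Fin n × Fin n) :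
    ∀ N (u : Fin n × Fin n), muDn u ≤ N → (huv : u ≠ v) → (∀ w, Rdn u w → w ≠ v) →
    ∃ b, ∃ (hb : bnd b) (hbv : b ≠ v),
      ((HG n).induce ({v}ᶜ : Set (Fin n × Fin n))).Reachable ⟨u, huv⟩ ⟨b, hbv⟩ := by
  intro N
  induction N with
  | zero =>
    intro u hN huv hv
    by_cases hb : bnd u
    · exact ⟨u, hb, huv, .refl _⟩
    · exfalso
      simp only [bnd, not_or] at hb
      simp only [muDn] at hN
      have := u.1.isLt
      omega
  | succ N ih =>
    intro u hN huv hv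
    by_cases hb : bnd u
    · exact ⟨u, hb, huv, .refl _⟩
    have hblocal := hb
    simp only [bnd, not_or] at hblocal
    have hi1 := u.1.isLt
    have hi2 := u.2.isLt
    have hint : 1 ≤ u.1.val ∧ u.1.val ≤ n - 2 ∧ 1 ≤ u.2.val ∧ u.2.val ≤ n - 2 := by omega
    have hc5 : res u < 5 := Nat.mod_lt _ (by norm_num)
    have hcases : res u = 0 ∨ res u = 1 ∨ res u = 4 ∨ res u = 2 ∨ res u = 3 := by omega
    rcases hcases with hc | hc | hc | hc | hc
    case _ | _ | _ =>
      -- vertical: u' = (i+1, j)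
      set u' : Fin n × Fin n := (⟨u.1.val + 1, by omega⟩, u.2) with hu'
      have hval1 : u'.1.val = u.1.val + 1 := rfl
      have hval2 : u'.2.val = u.2.val := rfl
      have hru' : res u' = (res u + 1) % 5 := by
        simp only [res, hval1, hval2]
        simp only [res] at hc ⊢
        omega
      have hadj : (gridGraph n).Adj u u' := grid_adj_vert rfl (Or.inr rfl)
      have hS : u ∈ Sset n ∨ u' ∈ Sset n := by
        first
        | exact Or.inl (Or.inr (Or.inl hc))
        | exact Or.inl (Or.inr (Or.inr hc))
        | exact Or.inr (Or.inr (Or.inl (show res u' = 0 by rw [hru', hc])))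
      have hmu : muDn u' ≤ N := by
        simp only [muDn, hru', hc, hval1, hval2] at hN ⊢
        norm_num at hN ⊢
        omega
      have hregion : ∀ w, Rdn u' w → w ≠ v := by
        intro w hw
        refine hv w ?_
        simp only [Rdn, hval1, hval2] at hw ⊢
        omega
      have hu'v : u' ≠ v := hregion u' (Or.inr ⟨rfl, le_rfl⟩)
      have hadj' : ((HG n).induce ({v}ᶜ : Set (Fin n × Fin n))).Adj ⟨u, huv⟩ ⟨u', hu'v⟩ :=
        ⟨hadj, hS⟩
      obtain ⟨b, hbb, hbv, hreach⟩ := ih u' hmu hu'v hregion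
      exact ⟨b, hbb, hbv, hadj'.reachable.trans hreach⟩
    case _ | _ =>
      -- horizontal: u' = (i, j-1)
      set u' : Fin n × Fin n := (u.1, ⟨u.2.val - 1, by omega⟩) with hu'
      have hval1 : u'.1.val = u.1.val := rfl
      have hval2 : u'.2.val = u.2.val - 1 := rfl
      have hru' : res u' = (res u + 3) % 5 := by
        simp only [res, hval1, hval2]
        simp only [res] at hc ⊢
        omega
      have hadj : (gridGraph n).Adj u u' := grid_adj_horiz rfl (Or.inl (by omega))
      have hS : u ∈ Sset n ∨ u' ∈ Sset n := by
        have : res u' = 0 ∨ res u' = 1 := by rw [hru', hc]; norm_num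
        rcases this with h | h
        · exact Or.inr (Or.inr (Or.inl h))
        · exact Or.inr (Or.inr (Or.inr h))
      have hmu : muDn u' ≤ N := by
        simp only [muDn, hru', hc, hval1, hval2] at hN ⊢
        norm_num at hN ⊢
        omega
      have hregion : ∀ w, Rdn u' w → w ≠ v := by
        intro w hw
        refine hv w ?_
        simp only [Rdn, hval1, hval2] at hw ⊢
        omega
      have hu'v : u' ≠ v := hregion u' (Or.inr ⟨rfl, le_rfl⟩)
      have hadj' : ((HG n).induce ({v}ᶜ : Set (Fin n × Fin n))).Adj ⟨u, huv⟩ ⟨u', hu'v⟩ :=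
        ⟨hadj, hS⟩
      obtain ⟨b, hbb, hbv, hreach⟩ := ih u' hmu hu'v hregion
      exact ⟨b, hbb, hbv, hadj'.reachable.trans hreach⟩

lemma rowWalk' {n : ℕ} (v : Fin n × Fin n) :
    ∀ d (p q : Fin n × Fin n), p.1 = q.1 → q.2.val = p.2.val + d →
    (∀ k (hk : k < n), p.2.val ≤ k → k ≤ q.2.val →
      ((p.1, ⟨k, hk⟩) : Fin n × Fin n) ∈ Sset n ∧ ((p.1, ⟨k, hk⟩) : Fin n × Fin n) ≠ v) →
    ∀ (hp : p ≠ v) (hq : q ≠ v),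
    ((HG n).induce ({v}ᶜ : Set (Fin n × Fin n))).Reachable ⟨p, hp⟩ ⟨q, hq⟩ := by
  intro d
  induction d with
  | zero =>
    intro p q h1 h2 hall hp hq
    have hpq : p = q := Prod.ext h1 (Fin.ext (by omega))
    subst hpq
    exact .refl _
  | succ d ih =>
    intro p q h1 h2 hall hp hq
    have hd : p.2.val + d < n := by have := q.2.isLt; omega
    have hq'v : ((p.1, ⟨p.2.val + d, hd⟩) : Fin n × Fin n) ≠ v :=
      (hall (p.2.val + d) hd (by omega) (by omega)).2
    have hmid := ih p (p.1, ⟨p.2.val + d, hd⟩) rfl rfl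
      (fun k hk a b => hall k hk a (by have b' : k ≤ p.2.val + d := b; omega)) hp hq'v
    have hadj : ((HG n).induce ({v}ᶜ : Set (Fin n × Fin n))).Adj
        ⟨(p.1, ⟨p.2.val + d, hd⟩), hq'v⟩ ⟨q, hq⟩ := by
      refine ⟨grid_adj_horiz h1 (Or.inr (show q.2.val = (p.2.val + d) + 1 by omega)), Or.inl ?_⟩
      exact (hall (p.2.val + d) hd (by omega) (by omega)).1
    exact hmid.trans hadj.reachable

lemma colWalk' {n : ℕ} (v : Fin n × Fin n) :
    ∀ d (p q : Fin n × Fin n), p.2 = q.2 → q.1.val = p.1.val + d →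
    (∀ k (hk : k < n), p.1.val ≤ k → k ≤ q.1.val →
      ((⟨k, hk⟩, p.2) : Fin n × Fin n) ∈ Sset n ∧ ((⟨k, hk⟩, p.2) : Fin n × Fin n) ≠ v) →
    ∀ (hp : p ≠ v) (hq : q ≠ v),
    ((HG n).induce ({v}ᶜ : Set (Fin n × Fin n))).Reachable ⟨p, hp⟩ ⟨q, hq⟩ := by
  intro d
  induction d with
  | zero =>
    intro p q h1 h2 hall hp hq
    have hpq : p = q := Prod.ext (Fin.ext (by omega)) h1
    subst hpq
    exact .refl _
  | succ d ih =>
    intro p q h1 h2 hall hp hq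
    have hd : p.1.val + d < n := by have := q.1.isLt; omega
    have hq'v : ((⟨p.1.val + d, hd⟩, p.2) : Fin n × Fin n) ≠ v :=
      (hall (p.1.val + d) hd (by omega) (by omega)).2
    have hmid := ih p (⟨p.1.val + d, hd⟩, p.2) rfl rfl
      (fun k hk a b => hall k hk a (by have b' : k ≤ p.1.val + d := b; omega)) hp hq'v
    have hadj : ((HG n).induce ({v}ᶜ : Set (Fin n × Fin n))).Adj
        ⟨(⟨p.1.val + d, hd⟩, p.2), hq'v⟩ ⟨q, hq⟩ := by
      refine ⟨grid_adj_vert h1 (Or.inr (show q.1.val = (p.1.val + d) + 1 by omega)), Or.inl ?_⟩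
      exact (hall (p.1.val + d) hd (by omega) (by omega)).1
    exact hmid.trans hadj.reachable

lemma rowReach {n : ℕ} (v : Fin n × Fin n) (i a b : Fin n)
    (hall : ∀ k (hk : k < n), min a.val b.val ≤ k → k ≤ max a.val b.val →
      ((i, ⟨k, hk⟩) : Fin n × Fin n) ∈ Sset n ∧ ((i, ⟨k, hk⟩) : Fin n × Fin n) ≠ v)
    (hp : ((i, a) : Fin n × Fin n) ≠ v) (hq : ((i, b) : Fin n × Fin n) ≠ v) :
    ((HG n).induce ({v}ᶜ : Set (Fin n × Fin n))).Reachable ⟨(i, a), hp⟩ ⟨(i, b), hq⟩ := by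
  rcases le_total a.val b.val with h | h
  · exact rowWalk' v (b.val - a.val) (i, a) (i, b) rfl
      (show b.val = a.val + (b.val - a.val) by omega)
      (fun k hk h1 h2 => by
        have h1' : a.val ≤ k := h1
        have h2' : k ≤ b.val := h2
        exact hall k hk (by omega) (by omega)) hp hq
  · exact (rowWalk' v (a.val - b.val) (i, b) (i, a) rfl
      (show a.val = b.val + (a.val - b.val) by omega)
      (fun k hk h1 h2 => by
        have h1' : b.val ≤ k := h1
        have h2' : k ≤ a.val := h2
        exact hall k hk (by omega) (by omega)) hq hp).symm

lemma colReach {n : ℕ} (v : Fin n × Fin n) (j a b : Fin n)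
    (hall : ∀ k (hk : k < n), min a.val b.val ≤ k → k ≤ max a.val b.val →
      ((⟨k, hk⟩, j) : Fin n × Fin n) ∈ Sset n ∧ ((⟨k, hk⟩, j) : Fin n × Fin n) ≠ v)
    (hp : ((a, j) : Fin n × Fin n) ≠ v) (hq : ((b, j) : Fin n × Fin n) ≠ v) :
    ((HG n).induce ({v}ᶜ : Set (Fin n × Fin n))).Reachable ⟨(a, j), hp⟩ ⟨(b, j), hq⟩ := by
  rcases le_total a.val b.val with h | h
  · exact colWalk' v (b.val - a.val) (a, j) (b, j) rfl
      (show b.val = a.val + (b.val - a.val) by omega)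
      (fun k hk h1 h2 => by
        have h1' : a.val ≤ k := h1
        have h2' : k ≤ b.val := h2
        exact hall k hk (by omega) (by omega)) hp hq
  · exact (colWalk' v (a.val - b.val) (b, j) (a, j) rfl
      (show a.val = b.val + (a.val - b.val) by omega)
      (fun k hk h1 h2 => by
        have h1' : b.val ≤ k := h1
        have h2' : k ≤ a.val := h2
        exact hall k hk (by omega) (by omega)) hq hp).symm

lemma ne_mk {n : ℕ} {x y vi vj : ℕ} {hx : x < n} {hy : y < n} {hvi : vi < n} {hvj : vj < n}
    (h : x ≠ vi ∨ y ≠ vj) :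
    ((⟨x, hx⟩, ⟨y, hy⟩) : Fin n × Fin n) ≠ (⟨vi, hvi⟩, ⟨vj, hvj⟩) := by
  intro he
  simp only [Prod.mk.injEq, Fin.mk.injEq] at he
  tauto

lemma rowLeg {n : ℕ} {vi vj : ℕ} {hvin : vi < n} {hvjn : vj < n} (i a b : Fin n)
    (hi : i.val = 0 ∨ i.val = n - 1)
    (hfree : ∀ k, min a.val b.val ≤ k → k ≤ max a.val b.val → ¬(i.val = vi ∧ k = vj))
    (hp : ((i, a) : Fin n × Fin n) ∈ ({(⟨vi, hvin⟩, ⟨vj, hvjn⟩)}ᶜ : Set (Fin n × Fin n)))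
    (hq : ((i, b) : Fin n × Fin n) ∈ ({(⟨vi, hvin⟩, ⟨vj, hvjn⟩)}ᶜ : Set (Fin n × Fin n))) :
    ((HG n).induce ({(⟨vi, hvin⟩, ⟨vj, hvjn⟩)}ᶜ : Set (Fin n × Fin n))).Reachable
      ⟨(i, a), hp⟩ ⟨(i, b), hq⟩ :=
  rowReach _ i a b
    (fun k hk h1 h2 =>
      ⟨Or.inl (by rcases hi with h | h
                  · exact Or.inl h
                  · exact Or.inr (Or.inl h)),
       fun he => hfree k h1 h2
         ⟨congrArg (fun z : Fin n × Fin n => z.1.val) he,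
          congrArg (fun z : Fin n × Fin n => z.2.val) he⟩⟩) hp hq

lemma colLeg {n : ℕ} {vi vj : ℕ} {hvin : vi < n} {hvjn : vj < n} (j a b : Fin n)
    (hj : j.val = 0 ∨ j.val = n - 1)
    (hfree : ∀ k, min a.val b.val ≤ k → k ≤ max a.val b.val → ¬(k = vi ∧ j.val = vj))
    (hp : ((a, j) : Fin n × Fin n) ∈ ({(⟨vi, hvin⟩, ⟨vj, hvjn⟩)}ᶜ : Set (Fin n × Fin n)))
    (hq : ((b, j) : Fin n × Fin n) ∈ ({(⟨vi, hvin⟩, ⟨vj, hvjn⟩)}ᶜ : Set (Fin n × Fin n))) :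
    ((HG n).induce ({(⟨vi, hvin⟩, ⟨vj, hvjn⟩)}ᶜ : Set (Fin n × Fin n))).Reachable
      ⟨(a, j), hp⟩ ⟨(b, j), hq⟩ :=
  colReach _ j a b
    (fun k hk h1 h2 =>
      ⟨Or.inl (by rcases hj with h | h
                  · exact Or.inr (Or.inr (Or.inl h))
                  · exact Or.inr (Or.inr (Or.inr h))),
       fun he => hfree k h1 h2
         ⟨congrArg (fun z : Fin n × Fin n => z.1.val) he,
          congrArg (fun z : Fin n × Fin n => z.2.val) he⟩⟩) hp hq

lemma bconn {n : ℕ} (hn : 2 ≤ n) (v p q : Fin n × Fin n)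
    (hbp : bnd p) (hbq : bnd q) (hp : p ≠ v) (hq : q ≠ v) :
    ((HG n).induce ({v}ᶜ : Set (Fin n × Fin n))).Reachable ⟨p, hp⟩ ⟨q, hq⟩ := by
  have h0n : 0 < n := by omega
  have hln : n - 1 < n := by omega
  obtain ⟨⟨vi, hvin⟩, ⟨vj, hvjn⟩⟩ := v
  suffices key : ∃ A : Fin n × Fin n,
      ∃ hA : A ∈ ({((⟨vi, hvin⟩, ⟨vj, hvjn⟩) : Fin n × Fin n)}ᶜ : Set (Fin n × Fin n)),
      ∀ (r : Fin n × Fin n) (hbr : bnd r) (hr : r ≠ (⟨vi, hvin⟩, ⟨vj, hvjn⟩)),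
        ((HG n).induce ({((⟨vi, hvin⟩, ⟨vj, hvjn⟩) : Fin n × Fin n)}ᶜ :
          Set (Fin n × Fin n))).Reachable ⟨r, hr⟩ ⟨A, hA⟩ by
    obtain ⟨A, hA, hkey⟩ := key
    exact (hkey p hbp hp).trans (hkey q hbq hq).symm
  by_cases hv0 : vi = 0
  · -- v in the top row; anchor (n-1, 0)
    refine ⟨(⟨n-1, hln⟩, ⟨0, h0n⟩), ne_mk (by omega), ?_⟩
    intro r hbr hr
    obtain ⟨⟨pi, hpin⟩, ⟨pj, hpjn⟩⟩ := r
    have hr' : ¬(pi = vi ∧ pj = vj) := fun hh => hr (Prod.ext (Fin.ext hh.1) (Fin.ext hh.2))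
    have hbr' : pi = 0 ∨ pi = n - 1 ∨ pj = 0 ∨ pj = n - 1 := hbr
    rcases hbr' with h | h | h | h
    · subst h
      rcases Nat.lt_trichotomy pj vj with hlt | heq | hgt
      · refine Reachable.trans
          (rowLeg ⟨0, h0n⟩ ⟨pj, hpjn⟩ ⟨0, h0n⟩ (Or.inl rfl) ?_ hr (ne_mk (by omega)))
          (colLeg ⟨0, h0n⟩ ⟨0, h0n⟩ ⟨n-1, hln⟩ (Or.inl rfl) ?_ (ne_mk (by omega))
            (ne_mk (by omega)))
        · intro k h1 h2 hc
          have h2' : k ≤ max pj 0 := h2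
          have e2 : k = vj := hc.2
          omega
        · intro k h1 h2 hc
          have e2 : (0 : ℕ) = vj := hc.2
          omega
      · exact absurd ⟨by omega, heq⟩ hr'
      · refine Reachable.trans
          (rowLeg ⟨0, h0n⟩ ⟨pj, hpjn⟩ ⟨n-1, hln⟩ (Or.inl rfl) ?_ hr (ne_mk (by omega)))
          (Reachable.trans
            (colLeg ⟨n-1, hln⟩ ⟨0, h0n⟩ ⟨n-1, hln⟩ (Or.inr rfl) ?_ (ne_mk (by omega))
              (ne_mk (by omega)))
            (rowLeg ⟨n-1, hln⟩ ⟨n-1, hln⟩ ⟨0, h0n⟩ (Or.inr rfl) ?_ (ne_mk (by omega))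
              (ne_mk (by omega))))
        · intro k h1 h2 hc
          have h1' : min pj (n-1) ≤ k := h1
          have e2 : k = vj := hc.2
          omega
        · intro k h1 h2 hc
          have e2 : n - 1 = vj := hc.2
          omega
        · intro k h1 h2 hc
          have e1 : n - 1 = vi := hc.1
          omega
    · subst h
      exact rowLeg ⟨n-1, hln⟩ ⟨pj, hpjn⟩ ⟨0, h0n⟩ (Or.inr rfl)
        (fun k h1 h2 hc => by have e1 : n - 1 = vi := hc.1; omega) hr (ne_mk (by omega))
    · subst h
      exact colLeg ⟨0, h0n⟩ ⟨pi, hpin⟩ ⟨n-1, hln⟩ (Or.inl rfl)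
        (fun k h1 h2 hc => by
          have h1' : min pi (n-1) ≤ k := h1
          have e1 : k = vi := hc.1
          have e2 : (0 : ℕ) = vj := hc.2
          omega) hr (ne_mk (by omega))
    · subst h
      refine Reachable.trans
        (colLeg ⟨n-1, hln⟩ ⟨pi, hpin⟩ ⟨n-1, hln⟩ (Or.inr rfl) ?_ hr (ne_mk (by omega)))
        (rowLeg ⟨n-1, hln⟩ ⟨n-1, hln⟩ ⟨0, h0n⟩ (Or.inr rfl) ?_ (ne_mk (by omega))
          (ne_mk (by omega)))
      · intro k h1 h2 hc
        have h1' : min pi (n-1) ≤ k := h1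
        have e1 : k = vi := hc.1
        have e2 : n - 1 = vj := hc.2
        omega
      · intro k h1 h2 hc
        have e1 : n - 1 = vi := hc.1
        omega
  · by_cases hv1 : vi = n - 1
    · -- v in the bottom row; anchor (0, 0)
      refine ⟨(⟨0, h0n⟩, ⟨0, h0n⟩), ne_mk (by omega), ?_⟩
      intro r hbr hr
      obtain ⟨⟨pi, hpin⟩, ⟨pj, hpjn⟩⟩ := r
      have hr' : ¬(pi = vi ∧ pj = vj) := fun hh => hr (Prod.ext (Fin.ext hh.1) (Fin.ext hh.2))
      have hbr' : pi = 0 ∨ pi = n - 1 ∨ pj = 0 ∨ pj = n - 1 := hbr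
      rcases hbr' with h | h | h | h
      · subst h
        exact rowLeg ⟨0, h0n⟩ ⟨pj, hpjn⟩ ⟨0, h0n⟩ (Or.inl rfl)
          (fun k h1 h2 hc => by have e1 : (0 : ℕ) = vi := hc.1; omega) hr (ne_mk (by omega))
      · subst h
        rcases Nat.lt_trichotomy pj vj with hlt | heq | hgt
        · refine Reachable.trans
            (rowLeg ⟨n-1, hln⟩ ⟨pj, hpjn⟩ ⟨0, h0n⟩ (Or.inr rfl) ?_ hr (ne_mk (by omega)))
            (colLeg ⟨0, h0n⟩ ⟨n-1, hln⟩ ⟨0, h0n⟩ (Or.inl rfl) ?_ (ne_mk (by omega))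
              (ne_mk (by omega)))
          · intro k h1 h2 hc
            have h2' : k ≤ max pj 0 := h2
            have e2 : k = vj := hc.2
            omega
          · intro k h1 h2 hc
            have e2 : (0 : ℕ) = vj := hc.2
            omega
        · exact absurd ⟨by omega, heq⟩ hr'
        · refine Reachable.trans
            (rowLeg ⟨n-1, hln⟩ ⟨pj, hpjn⟩ ⟨n-1, hln⟩ (Or.inr rfl) ?_ hr (ne_mk (by omega)))
            (Reachable.trans
              (colLeg ⟨n-1, hln⟩ ⟨n-1, hln⟩ ⟨0, h0n⟩ (Or.inr rfl) ?_ (ne_mk (by omega))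
                (ne_mk (by omega)))
              (rowLeg ⟨0, h0n⟩ ⟨n-1, hln⟩ ⟨0, h0n⟩ (Or.inl rfl) ?_ (ne_mk (by omega))
                (ne_mk (by omega))))
          · intro k h1 h2 hc
            have h1' : min pj (n-1) ≤ k := h1
            have e2 : k = vj := hc.2
            omega
          · intro k h1 h2 hc
            have e2 : n - 1 = vj := hc.2
            omega
          · intro k h1 h2 hc
            have e1 : (0 : ℕ) = vi := hc.1
            omega
      · subst h
        exact colLeg ⟨0, h0n⟩ ⟨pi, hpin⟩ ⟨0, h0n⟩ (Or.inl rfl)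
          (fun k h1 h2 hc => by
            have h2' : k ≤ max pi 0 := h2
            have e1 : k = vi := hc.1
            have e2 : (0 : ℕ) = vj := hc.2
            omega) hr (ne_mk (by omega))
      · subst h
        refine Reachable.trans
          (colLeg ⟨n-1, hln⟩ ⟨pi, hpin⟩ ⟨0, h0n⟩ (Or.inr rfl) ?_ hr (ne_mk (by omega)))
          (rowLeg ⟨0, h0n⟩ ⟨n-1, hln⟩ ⟨0, h0n⟩ (Or.inl rfl) ?_ (ne_mk (by omega))
            (ne_mk (by omega)))
        · intro k h1 h2 hc
          have h2' : k ≤ max pi 0 := h2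
          have e1 : k = vi := hc.1
          have e2 : n - 1 = vj := hc.2
          omega
        · intro k h1 h2 hc
          have e1 : (0 : ℕ) = vi := hc.1
          omega
    · by_cases hv2 : vj = 0
      · -- v in the left column, interior row; anchor (0, n-1)
        refine ⟨(⟨0, h0n⟩, ⟨n-1, hln⟩), ne_mk (by omega), ?_⟩
        intro r hbr hr
        obtain ⟨⟨pi, hpin⟩, ⟨pj, hpjn⟩⟩ := r
        have hr' : ¬(pi = vi ∧ pj = vj) := fun hh => hr (Prod.ext (Fin.ext hh.1) (Fin.ext hh.2))
        have hbr' : pi = 0 ∨ pi = n - 1 ∨ pj = 0 ∨ pj = n - 1 := hbr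
        rcases hbr' with h | h | h | h
        · subst h
          exact rowLeg ⟨0, h0n⟩ ⟨pj, hpjn⟩ ⟨n-1, hln⟩ (Or.inl rfl)
            (fun k h1 h2 hc => by have e1 : (0 : ℕ) = vi := hc.1; omega) hr (ne_mk (by omega))
        · subst h
          refine Reachable.trans
            (rowLeg ⟨n-1, hln⟩ ⟨pj, hpjn⟩ ⟨n-1, hln⟩ (Or.inr rfl) ?_ hr (ne_mk (by omega)))
            (colLeg ⟨n-1, hln⟩ ⟨n-1, hln⟩ ⟨0, h0n⟩ (Or.inr rfl) ?_ (ne_mk (by omega))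
              (ne_mk (by omega)))
          · intro k h1 h2 hc
            have e1 : n - 1 = vi := hc.1
            omega
          · intro k h1 h2 hc
            have e2 : n - 1 = vj := hc.2
            omega
        · subst h
          rcases Nat.lt_trichotomy pi vi with hlt | heq | hgt
          · refine Reachable.trans
              (colLeg ⟨0, h0n⟩ ⟨pi, hpin⟩ ⟨0, h0n⟩ (Or.inl rfl) ?_ hr (ne_mk (by omega)))
              (rowLeg ⟨0, h0n⟩ ⟨0, h0n⟩ ⟨n-1, hln⟩ (Or.inl rfl) ?_ (ne_mk (by omega))
                (ne_mk (by omega)))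
            · intro k h1 h2 hc
              have h2' : k ≤ max pi 0 := h2
              have e1 : k = vi := hc.1
              omega
            · intro k h1 h2 hc
              have e1 : (0 : ℕ) = vi := hc.1
              omega
          · exact absurd ⟨heq, by omega⟩ hr'
          · refine Reachable.trans
              (colLeg ⟨0, h0n⟩ ⟨pi, hpin⟩ ⟨n-1, hln⟩ (Or.inl rfl) ?_ hr (ne_mk (by omega)))
              (Reachable.trans
                (rowLeg ⟨n-1, hln⟩ ⟨0, h0n⟩ ⟨n-1, hln⟩ (Or.inr rfl) ?_ (ne_mk (by omega))
                  (ne_mk (by omega)))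
                (colLeg ⟨n-1, hln⟩ ⟨n-1, hln⟩ ⟨0, h0n⟩ (Or.inr rfl) ?_ (ne_mk (by omega))
                  (ne_mk (by omega))))
            · intro k h1 h2 hc
              have h1' : min pi (n-1) ≤ k := h1
              have e1 : k = vi := hc.1
              omega
            · intro k h1 h2 hc
              have e1 : n - 1 = vi := hc.1
              omega
            · intro k h1 h2 hc
              have e2 : n - 1 = vj := hc.2
              omega
        · subst h
          exact colLeg ⟨n-1, hln⟩ ⟨pi, hpin⟩ ⟨0, h0n⟩ (Or.inr rfl)
            (fun k h1 h2 hc => by have e2 : n - 1 = vj := hc.2; omega) hr (ne_mk (by omega))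
      · by_cases hv3 : vj = n - 1
        · -- v in right column, interior row; anchor (0, 0)
          refine ⟨(⟨0, h0n⟩, ⟨0, h0n⟩), ne_mk (by omega), ?_⟩
          intro r hbr hr
          obtain ⟨⟨pi, hpin⟩, ⟨pj, hpjn⟩⟩ := r
          have hr' : ¬(pi = vi ∧ pj = vj) :=
            fun hh => hr (Prod.ext (Fin.ext hh.1) (Fin.ext hh.2))
          have hbr' : pi = 0 ∨ pi = n - 1 ∨ pj = 0 ∨ pj = n - 1 := hbr
          rcases hbr' with h | h | h | h
          · subst h
            exact rowLeg ⟨0, h0n⟩ ⟨pj, hpjn⟩ ⟨0, h0n⟩ (Or.inl rfl)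
              (fun k h1 h2 hc => by have e1 : (0 : ℕ) = vi := hc.1; omega) hr
              (ne_mk (by omega))
          · subst h
            refine Reachable.trans
              (rowLeg ⟨n-1, hln⟩ ⟨pj, hpjn⟩ ⟨0, h0n⟩ (Or.inr rfl) ?_ hr (ne_mk (by omega)))
              (colLeg ⟨0, h0n⟩ ⟨n-1, hln⟩ ⟨0, h0n⟩ (Or.inl rfl) ?_ (ne_mk (by omega))
                (ne_mk (by omega)))
            · intro k h1 h2 hc
              have e1 : n - 1 = vi := hc.1
              omega
            · intro k h1 h2 hc
              have e2 : (0 : ℕ) = vj := hc.2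
              omega
          · subst h
            exact colLeg ⟨0, h0n⟩ ⟨pi, hpin⟩ ⟨0, h0n⟩ (Or.inl rfl)
              (fun k h1 h2 hc => by have e2 : (0 : ℕ) = vj := hc.2; omega) hr
              (ne_mk (by omega))
          · subst h
            rcases Nat.lt_trichotomy pi vi with hlt | heq | hgt
            · refine Reachable.trans
                (colLeg ⟨n-1, hln⟩ ⟨pi, hpin⟩ ⟨0, h0n⟩ (Or.inr rfl) ?_ hr (ne_mk (by omega)))
                (rowLeg ⟨0, h0n⟩ ⟨n-1, hln⟩ ⟨0, h0n⟩ (Or.inl rfl) ?_ (ne_mk (by omega))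
                  (ne_mk (by omega)))
              · intro k h1 h2 hc
                have h2' : k ≤ max pi 0 := h2
                have e1 : k = vi := hc.1
                omega
              · intro k h1 h2 hc
                have e1 : (0 : ℕ) = vi := hc.1
                omega
            · exact absurd ⟨heq, by omega⟩ hr'
            · refine Reachable.trans
                (colLeg ⟨n-1, hln⟩ ⟨pi, hpin⟩ ⟨n-1, hln⟩ (Or.inr rfl) ?_ hr (ne_mk (by omega)))
                (Reachable.trans
                  (rowLeg ⟨n-1, hln⟩ ⟨n-1, hln⟩ ⟨0, h0n⟩ (Or.inr rfl) ?_ (ne_mk (by omega))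
                    (ne_mk (by omega)))
                  (colLeg ⟨0, h0n⟩ ⟨n-1, hln⟩ ⟨0, h0n⟩ (Or.inl rfl) ?_ (ne_mk (by omega))
                    (ne_mk (by omega))))
              · intro k h1 h2 hc
                have h1' : min pi (n-1) ≤ k := h1
                have e1 : k = vi := hc.1
                omega
              · intro k h1 h2 hc
                have e1 : n - 1 = vi := hc.1
                omega
              · intro k h1 h2 hc
                have e2 : (0 : ℕ) = vj := hc.2
                omega
        · -- v interior; anchor (0, 0)
          refine ⟨(⟨0, h0n⟩, ⟨0, h0n⟩), ne_mk (by omega), ?_⟩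
          intro r hbr hr
          obtain ⟨⟨pi, hpin⟩, ⟨pj, hpjn⟩⟩ := r
          have hbr' : pi = 0 ∨ pi = n - 1 ∨ pj = 0 ∨ pj = n - 1 := hbr
          rcases hbr' with h | h | h | h
          · subst h
            exact rowLeg ⟨0, h0n⟩ ⟨pj, hpjn⟩ ⟨0, h0n⟩ (Or.inl rfl)
              (fun k h1 h2 hc => by have e1 : (0 : ℕ) = vi := hc.1; omega) hr
              (ne_mk (by omega))
          · subst h
            refine Reachable.trans
              (rowLeg ⟨n-1, hln⟩ ⟨pj, hpjn⟩ ⟨0, h0n⟩ (Or.inr rfl) ?_ hr (ne_mk (by omega)))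
              (colLeg ⟨0, h0n⟩ ⟨n-1, hln⟩ ⟨0, h0n⟩ (Or.inl rfl) ?_ (ne_mk (by omega))
                (ne_mk (by omega)))
            · intro k h1 h2 hc
              have e1 : n - 1 = vi := hc.1
              omega
            · intro k h1 h2 hc
              have e2 : (0 : ℕ) = vj := hc.2
              omega
          · subst h
            exact colLeg ⟨0, h0n⟩ ⟨pi, hpin⟩ ⟨0, h0n⟩ (Or.inl rfl)
              (fun k h1 h2 hc => by have e2 : (0 : ℕ) = vj := hc.2; omega) hr
              (ne_mk (by omega))
          · subst h
            refine Reachable.trans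
              (colLeg ⟨n-1, hln⟩ ⟨pi, hpin⟩ ⟨0, h0n⟩ (Or.inr rfl) ?_ hr (ne_mk (by omega)))
              (rowLeg ⟨0, h0n⟩ ⟨n-1, hln⟩ ⟨0, h0n⟩ (Or.inl rfl) ?_ (ne_mk (by omega))
                (ne_mk (by omega)))
            · intro k h1 h2 hc
              have e2 : n - 1 = vj := hc.2
              omega
            · intro k h1 h2 hc
              have e1 : (0 : ℕ) = vi := hc.1
              omega

lemma totdom {n : ℕ} (hn : 2 ≤ n) (p : Fin n × Fin n) : ∃ u ∈ Sset n, (HG n).Adj p u := by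
  by_cases hb : bnd p
  · rcases hb with h | h | h | h
    · by_cases h2 : p.2.val = 0
      · refine ⟨(p.1, ⟨1, by omega⟩), Or.inl (Or.inl h),
          grid_adj_horiz rfl (Or.inr (show (1:ℕ) = p.2.val + 1 by omega)),
          Or.inr (Or.inl (Or.inl h))⟩
      · refine ⟨(p.1, ⟨p.2.val - 1, by omega⟩), Or.inl (Or.inl h),
          grid_adj_horiz rfl (Or.inl (show p.2.val = (p.2.val - 1) + 1 by omega)),
          Or.inr (Or.inl (Or.inl h))⟩
    · by_cases h2 : p.2.val = 0
      · refine ⟨(p.1, ⟨1, by omega⟩), Or.inl (Or.inr (Or.inl h)),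
          grid_adj_horiz rfl (Or.inr (show (1:ℕ) = p.2.val + 1 by omega)),
          Or.inr (Or.inl (Or.inr (Or.inl h)))⟩
      · refine ⟨(p.1, ⟨p.2.val - 1, by omega⟩), Or.inl (Or.inr (Or.inl h)),
          grid_adj_horiz rfl (Or.inl (show p.2.val = (p.2.val - 1) + 1 by omega)),
          Or.inr (Or.inl (Or.inr (Or.inl h)))⟩
    · by_cases h2 : p.1.val = 0
      · refine ⟨(⟨1, by omega⟩, p.2), Or.inl (Or.inr (Or.inr (Or.inl h))),
          grid_adj_vert rfl (Or.inr (show (1:ℕ) = p.1.val + 1 by omega)),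
          Or.inr (Or.inl (Or.inr (Or.inr (Or.inl h))))⟩
      · refine ⟨(⟨p.1.val - 1, by omega⟩, p.2), Or.inl (Or.inr (Or.inr (Or.inl h))),
          grid_adj_vert rfl (Or.inl (show p.1.val = (p.1.val - 1) + 1 by omega)),
          Or.inr (Or.inl (Or.inr (Or.inr (Or.inl h))))⟩
    · by_cases h2 : p.1.val = 0
      · refine ⟨(⟨1, by omega⟩, p.2), Or.inl (Or.inr (Or.inr (Or.inr h))),
          grid_adj_vert rfl (Or.inr (show (1:ℕ) = p.1.val + 1 by omega)),
          Or.inr (Or.inl (Or.inr (Or.inr (Or.inr h))))⟩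
      · refine ⟨(⟨p.1.val - 1, by omega⟩, p.2), Or.inl (Or.inr (Or.inr (Or.inr h))),
          grid_adj_vert rfl (Or.inl (show p.1.val = (p.1.val - 1) + 1 by omega)),
          Or.inr (Or.inl (Or.inr (Or.inr (Or.inr h))))⟩
  · have hblocal := hb
    simp only [bnd, not_or] at hblocal
    have hi1 := p.1.isLt
    have hi2 := p.2.isLt
    have hc5 : res p < 5 := Nat.mod_lt _ (by norm_num)
    have hcases : res p = 0 ∨ res p = 1 ∨ res p = 2 ∨ res p = 3 ∨ res p = 4 := by omega
    rcases hcases with hc | hc | hc | hc | hc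
    · -- down neighbor has residue 1
      refine ⟨(⟨p.1.val + 1, by omega⟩, p.2), Or.inr (Or.inr ?_),
        grid_adj_vert rfl (Or.inr rfl), Or.inl (Or.inr (Or.inl hc))⟩
      show (p.1.val + 1 + 2 * p.2.val) % 5 = 1
      simp only [res] at hc; omega
    · -- up neighbor has residue 0
      refine ⟨(⟨p.1.val - 1, by omega⟩, p.2), Or.inr (Or.inl ?_),
        grid_adj_vert rfl (Or.inl (show p.1.val = (p.1.val - 1) + 1 by omega)),
        Or.inl (Or.inr (Or.inr hc))⟩
      show (p.1.val - 1 + 2 * p.2.val) % 5 = 0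
      simp only [res] at hc; omega
    · -- up neighbor has residue 1
      have hS : res ((⟨p.1.val - 1, by omega⟩, p.2) : Fin n × Fin n) = 1 := by
        show (p.1.val - 1 + 2 * p.2.val) % 5 = 1
        simp only [res] at hc; omega
      exact ⟨(⟨p.1.val - 1, by omega⟩, p.2), Or.inr (Or.inr hS),
        grid_adj_vert rfl (Or.inl (show p.1.val = (p.1.val - 1) + 1 by omega)),
        Or.inr (Or.inr (Or.inr hS))⟩
    · -- right neighbor has residue 0
      have hS : res ((p.1, ⟨p.2.val + 1, by omega⟩) : Fin n × Fin n) = 0 := by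
        show (p.1.val + 2 * (p.2.val + 1)) % 5 = 0
        simp only [res] at hc; omega
      exact ⟨(p.1, ⟨p.2.val + 1, by omega⟩), Or.inr (Or.inl hS),
        grid_adj_horiz rfl (Or.inr rfl), Or.inr (Or.inr (Or.inl hS))⟩
    · -- right neighbor has residue 1
      have hS : res ((p.1, ⟨p.2.val + 1, by omega⟩) : Fin n × Fin n) = 1 := by
        show (p.1.val + 2 * (p.2.val + 1)) % 5 = 1
        simp only [res] at hc; omega
      exact ⟨(p.1, ⟨p.2.val + 1, by omega⟩), Or.inr (Or.inr hS),
        grid_adj_horiz rfl (Or.inr rfl), Or.inr (Or.inr (Or.inr hS))⟩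

lemma not_RupRdn {n : ℕ} {u v : Fin n × Fin n} (hne : u ≠ v) :
    (∀ w, Rup u w → w ≠ v) ∨ (∀ w, Rdn u w → w ≠ v) := by
  by_cases h : Rup u v
  · right
    intro w hw he
    subst he
    simp only [Rup] at h
    simp only [Rdn] at hw
    exact hne (Prod.ext (Fin.ext (by omega)) (Fin.ext (by omega))).symm
  · left
    intro w hw he
    subst he
    exact h hw

lemma conn_del {n : ℕ} (hn : 2 ≤ n) (v : Fin n × Fin n) :
    ((HG n).induce ({v}ᶜ : Set (Fin n × Fin n))).Connected := by
  have key : ∀ (p : Fin n × Fin n) (hp' : p ≠ v), ∃ b, ∃ (hb : bnd b) (hbv : b ≠ v),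
      ((HG n).induce ({v}ᶜ : Set (Fin n × Fin n))).Reachable ⟨p, hp'⟩ ⟨b, hbv⟩ := by
    intro p hp'
    rcases not_RupRdn hp' with h | h
    · exact routeUp v (muUp p) p le_rfl hp' h
    · exact routeDn v (muDn p) p le_rfl hp' h
  rw [connected_iff]
  constructor
  · intro a b
    obtain ⟨p, hp⟩ := a
    obtain ⟨q, hq⟩ := b
    have hp' : p ≠ v := hp
    have hq' : q ≠ v := hq
    obtain ⟨bp, hbp, hbpv, hrp⟩ := key p hp'
    obtain ⟨bq, hbq, hbqv, hrq⟩ := key q hq'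
    exact hrp.trans ((bconn hn v bp bq hbp hbq hbpv hbqv).trans hrq.symm)
  · by_cases h : ((⟨0, by omega⟩, ⟨0, by omega⟩) : Fin n × Fin n) = v
    · exact ⟨⟨((⟨0, by omega⟩, ⟨1, by omega⟩) : Fin n × Fin n),
        fun he => ne_mk (Or.inr (by omega)) (he.trans h.symm)⟩⟩
    · exact ⟨⟨((⟨0, by omega⟩, ⟨0, by omega⟩) : Fin n × Fin n), h⟩⟩

lemma HGconn {n : ℕ} (hn : 2 ≤ n) : (HG n).Connected := by
  have hmap : ∀ (v0 : Fin n × Fin n) (a b : {x // x ∈ ({v0}ᶜ : Set (Fin n × Fin n))}),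
      ((HG n).induce ({v0}ᶜ : Set (Fin n × Fin n))).Reachable a b →
      (HG n).Reachable a.val b.val := by
    intro v0 a b h
    exact h.map ⟨Subtype.val, fun {x y} hxy => hxy⟩
  rw [connected_iff]
  constructor
  · intro u w
    by_cases hu : u = ((⟨0, by omega⟩, ⟨0, by omega⟩) : Fin n × Fin n) <;>
      by_cases hw : w = ((⟨0, by omega⟩, ⟨0, by omega⟩) : Fin n × Fin n)
    · rw [hu, hw]
    · obtain ⟨s, hs, hadj⟩ := totdom hn u
      have hs' : s ≠ ((⟨0, by omega⟩, ⟨0, by omega⟩) : Fin n × Fin n) := by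
        rw [← hu]; exact hadj.ne'
      exact hadj.reachable.trans
        (hmap _ ⟨s, hs'⟩ ⟨w, hw⟩ ((conn_del hn _).preconnected _ _))
    · obtain ⟨s, hs, hadj⟩ := totdom hn w
      have hs' : s ≠ ((⟨0, by omega⟩, ⟨0, by omega⟩) : Fin n × Fin n) := by
        rw [← hw]; exact hadj.ne'
      exact ((hadj.reachable.trans
        (hmap _ ⟨s, hs'⟩ ⟨u, hu⟩ ((conn_del hn _).preconnected _ _)))).symm
    · exact hmap _ ⟨u, hu⟩ ⟨w, hw⟩ ((conn_del hn _).preconnected _ _)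
  · exact ⟨((⟨0, by omega⟩, ⟨0, by omega⟩) : Fin n × Fin n)⟩

def TF (n : ℕ) : Finset (Fin n × Fin n) :=
  Finset.univ.filter (fun p =>
    (p.1.val = 0 ∨ p.1.val = n - 1 ∨ p.2.val = 0 ∨ p.2.val = n - 1) ∨
    ((p.1.val + 2 * p.2.val) % 5 = 0 ∨ (p.1.val + 2 * p.2.val) % 5 = 1))

lemma mem_TF {n : ℕ} {p : Fin n × Fin n} : p ∈ TF n ↔ p ∈ Sset n := by
  simp only [TF, Finset.mem_filter, Finset.mem_univ, true_and]
  rfl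

lemma card_TF {n : ℕ} (hn : 2 ≤ n) :
    (TF n).card ≤ 4 * n + (n - 2) * (((n + 2) / 5) * 2) := by
  classical
  set B1 : Finset (Fin n × Fin n) := Finset.univ.filter (fun p => p.1.val = 0) with hB1
  set B2 : Finset (Fin n × Fin n) := Finset.univ.filter (fun p => p.1.val = n - 1) with hB2
  set B3 : Finset (Fin n × Fin n) := Finset.univ.filter (fun p => p.2.val = 0) with hB3
  set B4 : Finset (Fin n × Fin n) := Finset.univ.filter (fun p => p.2.val = n - 1) with hB4
  set P : Finset (Fin n × Fin n) := Finset.univ.filter (fun p =>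
    (1 ≤ p.1.val ∧ p.1.val ≤ n - 2 ∧ 1 ≤ p.2.val ∧ p.2.val ≤ n - 2) ∧
    ((p.1.val + 2 * p.2.val) % 5 = 0 ∨ (p.1.val + 2 * p.2.val) % 5 = 1)) with hP
  have hsub : TF n ⊆ B1 ∪ B2 ∪ B3 ∪ B4 ∪ P := by
    intro p hp
    simp only [TF, Finset.mem_filter, Finset.mem_univ, true_and] at hp
    simp only [hB1, hB2, hB3, hB4, hP, Finset.mem_union, Finset.mem_filter,
      Finset.mem_univ, true_and]
    have h1 := p.1.isLt
    have h2 := p.2.isLt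
    rcases hp with h | h
    · tauto
    · by_cases hb : p.1.val = 0 ∨ p.1.val = n - 1 ∨ p.2.val = 0 ∨ p.2.val = n - 1
      · tauto
      · push_neg at hb
        right
        exact ⟨⟨by omega, by omega, by omega, by omega⟩, h⟩
  have hcard1 : B1.card ≤ n := by
    have hinj : Set.InjOn (fun p : Fin n × Fin n => p.2) ↑B1 := by
      intro p hp q hq he
      simp only [hB1, Finset.mem_coe, Finset.mem_filter, Finset.mem_univ, true_and] at hp hq
      exact Prod.ext (Fin.ext (hp.trans hq.symm)) he
    have := Finset.card_le_card_of_injOn (fun p : Fin n × Fin n => p.2)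
      (fun p _ => Finset.mem_univ _) hinj
    have hcu : (Finset.univ : Finset (Fin n)).card = n := by simp
    omega
  have hcard2 : B2.card ≤ n := by
    have hinj : Set.InjOn (fun p : Fin n × Fin n => p.2) ↑B2 := by
      intro p hp q hq he
      simp only [hB2, Finset.mem_coe, Finset.mem_filter, Finset.mem_univ, true_and] at hp hq
      exact Prod.ext (Fin.ext (hp.trans hq.symm)) he
    have := Finset.card_le_card_of_injOn (fun p : Fin n × Fin n => p.2)
      (fun p _ => Finset.mem_univ _) hinj
    have hcu : (Finset.univ : Finset (Fin n)).card = n := by simp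
    omega
  have hcard3 : B3.card ≤ n := by
    have hinj : Set.InjOn (fun p : Fin n × Fin n => p.1) ↑B3 := by
      intro p hp q hq he
      simp only [hB3, Finset.mem_coe, Finset.mem_filter, Finset.mem_univ, true_and] at hp hq
      exact Prod.ext he (Fin.ext (hp.trans hq.symm))
    have := Finset.card_le_card_of_injOn (fun p : Fin n × Fin n => p.1)
      (fun p _ => Finset.mem_univ _) hinj
    have hcu : (Finset.univ : Finset (Fin n)).card = n := by simp
    omega
  have hcard4 : B4.card ≤ n := by
    have hinj : Set.InjOn (fun p : Fin n × Fin n => p.1) ↑B4 := by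
      intro p hp q hq he
      simp only [hB4, Finset.mem_coe, Finset.mem_filter, Finset.mem_univ, true_and] at hp hq
      exact Prod.ext he (Fin.ext (hp.trans hq.symm))
    have := Finset.card_le_card_of_injOn (fun p : Fin n × Fin n => p.1)
      (fun p _ => Finset.mem_univ _) hinj
    have hcu : (Finset.univ : Finset (Fin n)).card = n := by simp
    omega
  have hcardP : P.card ≤ (n - 2) * (((n + 2) / 5) * 2) := by
    have := Finset.card_le_card_of_injOn
      (s := P)
      (f := fun p : Fin n × Fin n => ((p.1.val - 1, (p.2.val - 1) / 5),
        (p.1.val + 2 * p.2.val) % 5))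
      (t := (Finset.range (n - 2) ×ˢ Finset.range ((n + 2) / 5)) ×ˢ Finset.range 2)
      ?_ ?_
    · calc P.card ≤ ((Finset.range (n - 2) ×ˢ Finset.range ((n + 2) / 5)) ×ˢ
          Finset.range 2).card := this
        _ = (n - 2) * ((n + 2) / 5) * 2 := by
            simp [Finset.card_product]
        _ = (n - 2) * (((n + 2) / 5) * 2) := by ring
    · intro p hp
      simp only [hP, Finset.mem_coe, Finset.mem_filter, Finset.mem_univ, true_and] at hp
      simp only [Finset.mem_coe, Finset.mem_product, Finset.mem_range]
      obtain ⟨⟨ha, hb, hc, hd⟩, hres⟩ := hp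
      refine ⟨⟨by omega, by omega⟩, by omega⟩
    · intro p hp q hq he
      simp only [hP, Finset.mem_coe, Finset.mem_filter, Finset.mem_univ, true_and] at hp hq
      simp only [Prod.mk.injEq] at he
      obtain ⟨⟨he1, he2⟩, he3⟩ := he
      obtain ⟨⟨ha, hb, hc, hd⟩, hres⟩ := hp
      obtain ⟨⟨ha', hb', hc', hd'⟩, hres'⟩ := hq
      have hfst : p.1.val = q.1.val := by omega
      have hsnd : p.2.val = q.2.val := by omega
      exact Prod.ext (Fin.ext hfst) (Fin.ext hsnd)
  calc (TF n).card ≤ (B1 ∪ B2 ∪ B3 ∪ B4 ∪ P).card := Finset.card_le_card hsub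
    _ ≤ (B1 ∪ B2 ∪ B3 ∪ B4).card + P.card := Finset.card_union_le _ _
    _ ≤ ((B1 ∪ B2 ∪ B3).card + B4.card) + P.card := by
        have := Finset.card_union_le (B1 ∪ B2 ∪ B3) B4
        omega
    _ ≤ (((B1 ∪ B2).card + B3.card) + B4.card) + P.card := by
        have := Finset.card_union_le (B1 ∪ B2) B3
        omega
    _ ≤ (((B1.card + B2.card) + B3.card) + B4.card) + P.card := by
        have := Finset.card_union_le B1 B2
        omega
    _ ≤ 4 * n + (n - 2) * (((n + 2) / 5) * 2) := by omega

lemma tvc_cover {n : ℕ} (hn : 2 ≤ n) :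
    IsTotalVertexCover (HG n) ((TF n : Finset (Fin n × Fin n)) : Set (Fin n × Fin n)) := by
  constructor
  · intro v w h
    refine h.2.imp (fun hv => ?_) (fun hw => ?_)
    · exact Finset.mem_coe.mpr (mem_TF.mpr hv)
    · exact Finset.mem_coe.mpr (mem_TF.mpr hw)
  · intro p
    obtain ⟨u, hu, hadj⟩ := totdom hn p
    exact ⟨u, Finset.mem_coe.mpr (mem_TF.mpr hu), hadj⟩

end TVC

theorem stmt_4 (n : ℕ) (hn : 2 ≤ n) :
    ∃ H : SimpleGraph (Fin n × Fin n), H ≤ gridGraph n ∧ TwoConnected H ∧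
      (tvc H : ℝ) ≤ (2 / 5) * (n : ℝ) ^ 2 + 4 * (n : ℝ) := by
  refine ⟨TVC.HG n, fun _ _ h => h.1, ⟨?_, TVC.HGconn hn, fun v => TVC.conn_del hn v⟩, ?_⟩
  · have hcard : Fintype.card (Fin n × Fin n) = n * n := by simp
    have h4 : 2 * 2 ≤ n * n := Nat.mul_le_mul hn hn
    omega
  · have h1 : tvc (TVC.HG n) ≤ (TVC.TF n).card :=
      Nat.sInf_le ⟨((TVC.TF n : Finset (Fin n × Fin n)) : Set (Fin n × Fin n)),
        TVC.tvc_cover hn, Set.ncard_coe_finset _⟩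
    have h3 : tvc (TVC.HG n) ≤ 4 * n + (n - 2) * (((n + 2) / 5) * 2) :=
      le_trans h1 (TVC.card_TF hn)
    have hd : (((n + 2) / 5 : ℕ) : ℝ) ≤ ((n : ℝ) + 2) / 5 := by
      calc (((n + 2) / 5 : ℕ) : ℝ) ≤ ((n + 2 : ℕ) : ℝ) / ((5 : ℕ) : ℝ) := Nat.cast_div_le
        _ = ((n : ℝ) + 2) / 5 := by push_cast; ring
    have hc2 : (((n - 2 : ℕ)) : ℝ) = (n : ℝ) - 2 := by
      have := Nat.cast_sub (R := ℝ) hn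
      exact_mod_cast this
    have hnR : (2 : ℝ) ≤ (n : ℝ) := by exact_mod_cast hn
    calc (tvc (TVC.HG n) : ℝ)
        ≤ ((4 * n + (n - 2) * (((n + 2) / 5) * 2) : ℕ) : ℝ) := by exact_mod_cast h3
      _ = 4 * (n : ℝ) + ((n - 2 : ℕ) : ℝ) * ((((n + 2) / 5 : ℕ) : ℝ) * 2) := by
          push_cast
          ring
      _ ≤ 4 * (n : ℝ) + ((n : ℝ) - 2) * ((((n : ℝ) + 2) / 5) * 2) := by
          rw [hc2]
          gcongr
      _ ≤ (2 / 5) * (n : ℝ) ^ 2 + 4 * (n : ℝ) := by nlinarith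
end

section
/- For every integer n ≥ 2, the n-by-n triangular grid T_n has a spanning 2-connected subgraph H whose minimum total vertex cover size tvc(H) satisfies tvc(H) ≤ (2/7)·n² + 4n. -/
open SimpleGraph

/-- The `n × n` triangular grid on `Fin n × Fin n`: `(i,j)` and `(i',j')` are
adjacent iff, viewing coordinates as integers,
`(i' - i, j' - j) ∈ {(1,0), (-1,0), (0,1), (0,-1), (1,1), (-1,-1)}`. -/
def triangularGrid (n : ℕ) : SimpleGraph (Fin n × Fin n) where
  Adj p q :=
    ((q.1 : ℤ) - (p.1 : ℤ) = 1 ∧ (q.2 : ℤ) - (p.2 : ℤ) = 0) ∨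
    ((q.1 : ℤ) - (p.1 : ℤ) = -1 ∧ (q.2 : ℤ) - (p.2 : ℤ) = 0) ∨
    ((q.1 : ℤ) - (p.1 : ℤ) = 0 ∧ (q.2 : ℤ) - (p.2 : ℤ) = 1) ∨
    ((q.1 : ℤ) - (p.1 : ℤ) = 0 ∧ (q.2 : ℤ) - (p.2 : ℤ) = -1) ∨
    ((q.1 : ℤ) - (p.1 : ℤ) = 1 ∧ (q.2 : ℤ) - (p.2 : ℤ) = 1) ∨
    ((q.1 : ℤ) - (p.1 : ℤ) = -1 ∧ (q.2 : ℤ) - (p.2 : ℤ) = -1)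
  symm := by
    constructor
    intro p q h
    omega
  loopless := by
    constructor
    intro p h
    omega

namespace TGP

variable {n : ℕ}

def fr (n : ℕ) (p : Fin n × Fin n) : Prop :=
  (p.1 : ℕ) = 0 ∨ (p.1 : ℕ) + 1 = n ∨ (p.2 : ℕ) = 0 ∨ (p.2 : ℕ) + 1 = n

def vl (p : Fin n × Fin n) : ℕ := ((p.1 : ℕ) + 2 * (p.2 : ℕ)) % 7

def inS (n : ℕ) (p : Fin n × Fin n) : Prop := fr n p ∨ vl p < 2

instance : DecidablePred (fr n) := fun p => by unfold fr; infer_instance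
instance : DecidablePred (inS n) := fun p => by unfold inS fr vl; infer_instance

def H (n : ℕ) : SimpleGraph (Fin n × Fin n) where
  Adj p q := (triangularGrid n).Adj p q ∧ (inS n p ∨ inS n q)
  symm := by constructor; intro p q h; exact ⟨h.1.symm, h.2.symm⟩
  loopless := by constructor; intro p h; exact (triangularGrid n).irrefl h.1

lemma H_le : H n ≤ triangularGrid n := fun _ _ h => h.1

def mk (i j : ℕ) (hi : i < n) (hj : j < n) : Fin n × Fin n := (⟨i, hi⟩, ⟨j, hj⟩)

lemma adjT {i j i' j' : ℕ} (hi : i < n) (hj : j < n) (hi' : i' < n) (hj' : j' < n)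
    (h : (i' = i+1 ∧ j'=j) ∨ (i = i'+1 ∧ j=j') ∨ (i'=i ∧ j'=j+1) ∨ (i=i' ∧ j=j'+1) ∨
      (i'=i+1 ∧ j'=j+1) ∨ (i=i'+1 ∧ j=j'+1)) :
    (triangularGrid n).Adj (mk i j hi hj) (mk i' j' hi' hj') := by
  show (_ ∨ _ ∨ _ ∨ _ ∨ _ ∨ _)
  simp only [mk]
  omega

lemma adjH {i j i' j' : ℕ} (hi : i < n) (hj : j < n) (hi' : i' < n) (hj' : j' < n)
    (h : (i' = i+1 ∧ j'=j) ∨ (i = i'+1 ∧ j=j') ∨ (i'=i ∧ j'=j+1) ∨ (i=i' ∧ j=j'+1) ∨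
      (i'=i+1 ∧ j'=j+1) ∨ (i=i'+1 ∧ j=j'+1))
    (hS : inS n (mk i j hi hj) ∨ inS n (mk i' j' hi' hj')) :
    (H n).Adj (mk i j hi hj) (mk i' j' hi' hj') :=
  ⟨adjT hi hj hi' hj' h, hS⟩

lemma mk_eq_iff {i j : ℕ} (hi : i < n) (hj : j < n) (w : Fin n × Fin n) :
    mk i j hi hj = w ↔ i = (w.1 : ℕ) ∧ j = (w.2 : ℕ) := by
  constructor
  · intro h; rw [← h]; exact ⟨rfl, rfl⟩
  · rintro ⟨h1, h2⟩
    apply Prod.ext <;> apply Fin.ext <;> simpa [mk]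


def Reach (n : ℕ) (w a b : Fin n × Fin n) : Prop :=
  ∃ (ha : a ∈ ({w}ᶜ : Set (Fin n × Fin n))) (hb : b ∈ ({w}ᶜ : Set (Fin n × Fin n))),
    ((H n).induce ({w}ᶜ : Set (Fin n × Fin n))).Reachable ⟨a, ha⟩ ⟨b, hb⟩

lemma Reach.refl {a : Fin n × Fin n} (ha : a ≠ w) : Reach n w a a :=
  ⟨ha, ha, Reachable.refl _⟩

lemma Reach.symm' {a b : Fin n × Fin n} (h : Reach n w a b) : Reach n w b a := by
  obtain ⟨ha, hb, h⟩ := h; exact ⟨hb, ha, h.symm⟩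

lemma Reach.trans' {a b c : Fin n × Fin n} (h : Reach n w a b) (h' : Reach n w b c) :
    Reach n w a c := by
  obtain ⟨ha, hb, h⟩ := h; obtain ⟨hb', hc, h'⟩ := h'
  exact ⟨ha, hc, h.trans (by convert h' using 2)⟩

lemma Reach.step {a b : Fin n × Fin n} (h : (H n).Adj a b) (ha : a ≠ w) (hb : b ≠ w) :
    Reach n w a b :=
  ⟨ha, hb, Adj.reachable (by exact h)⟩

lemma Reach.ne_left {a b : Fin n × Fin n} (h : Reach n w a b) : a ≠ w := h.1
lemma Reach.ne_right {a b : Fin n × Fin n} (h : Reach n w a b) : b ≠ w := h.2.1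


lemma fr_mk {i j : ℕ} (hi : i < n) (hj : j < n)
    (h : i = 0 ∨ i + 1 = n ∨ j = 0 ∨ j + 1 = n) : fr n (mk i j hi hj) := h

lemma inS_of_fr {p : Fin n × Fin n} (h : fr n p) : inS n p := Or.inl h
lemma inS_mk_fr {i j : ℕ} (hi : i < n) (hj : j < n)
    (h : i = 0 ∨ i + 1 = n ∨ j = 0 ∨ j + 1 = n) : inS n (mk i j hi hj) :=
  inS_of_fr (fr_mk hi hj h)

/-- walking right along a frame row -/
lemma walk_row {i : ℕ} (hi : i < n) (hfr : i = 0 ∨ i + 1 = n) (j1 : ℕ) :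
    ∀ j2 (_h12 : j1 ≤ j2) (hj2 : j2 < n),
      (∀ k (hk : k < n), j1 ≤ k → k ≤ j2 → mk i k hi hk ≠ w) →
      Reach n w (mk i j1 hi (by omega)) (mk i j2 hi hj2) := by
  intro j2
  induction j2 with
  | zero =>
    intro h hj2 hne
    have : j1 = 0 := by omega
    subst this
    exact Reach.refl (hne 0 hj2 le_rfl le_rfl)
  | succ m ih =>
    intro h hj2 hne
    rcases Nat.lt_or_ge j1 (m+1) with hlt | hge
    · have hm : m < n := by omega
      have r1 := ih (by omega) hm (fun k hk h1 h2 => hne k hk h1 (by omega))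
      refine r1.trans' (Reach.step (adjH hi hm hi hj2 ?_ ?_) (hne m hm (by omega) (by omega))
        (hne (m+1) hj2 (by omega) le_rfl))
      · tauto
      · left; exact inS_mk_fr hi hm (by tauto)
    · have : j1 = m + 1 := by omega
      subst this
      exact Reach.refl (hne (m+1) hj2 le_rfl le_rfl)

/-- walking down along a frame column -/
lemma walk_col {j : ℕ} (hj : j < n) (hfr : j = 0 ∨ j + 1 = n) (i1 : ℕ) :
    ∀ i2 (_h12 : i1 ≤ i2) (hi2 : i2 < n),
      (∀ k (hk : k < n), i1 ≤ k → k ≤ i2 → mk k j hk hj ≠ w) →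
      Reach n w (mk i1 j (by omega) hj) (mk i2 j hi2 hj) := by
  intro i2
  induction i2 with
  | zero =>
    intro h hi2 hne
    have : i1 = 0 := by omega
    subst this
    exact Reach.refl (hne 0 hi2 le_rfl le_rfl)
  | succ m ih =>
    intro h hi2 hne
    rcases Nat.lt_or_ge i1 (m+1) with hlt | hge
    · have hm : m < n := by omega
      have r1 := ih (by omega) hm (fun k hk h1 h2 => hne k hk h1 (by omega))
      refine r1.trans' (Reach.step (adjH hm hj hi2 hj ?_ ?_) (hne m hm (by omega) (by omega))
        (hne (m+1) hi2 (by omega) le_rfl))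
      · tauto
      · left; exact inS_mk_fr hm hj (by tauto)
    · have : i1 = m + 1 := by omega
      subst this
      exact Reach.refl (hne (m+1) hi2 le_rfl le_rfl)


lemma mk_ne {i j : ℕ} (hi : i < n) (hj : j < n) {w : Fin n × Fin n}
    (h : i ≠ (w.1 : ℕ) ∨ j ≠ (w.2 : ℕ)) : mk i j hi hj ≠ w := by
  rw [Ne, mk_eq_iff]; tauto

section Corners
variable {w : Fin n × Fin n}

lemma sideTop (hn : 2 ≤ n) (h0 : mk 0 0 (by omega) (by omega) ≠ w)
    (h1 : mk 0 (n-1) (by omega) (by omega) ≠ w) :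
    Reach n w (mk 0 0 (by omega) (by omega)) (mk 0 (n-1) (by omega) (by omega)) := by
  by_cases hw : (w.1 : ℕ) = 0
  · have hw2 : (w.2 : ℕ) ≠ 0 := fun h => h0 ((mk_eq_iff _ _ w).2 (by omega))
    have hw2' : (w.2 : ℕ) ≠ n-1 := fun h => h1 ((mk_eq_iff _ _ w).2 (by omega))
    have r1 : Reach n w (mk 0 0 (by omega) (by omega)) (mk (n-1) 0 (by omega) (by omega)) :=
      walk_col (by omega) (by omega) 0 (n-1) (by omega) (by omega)
        (fun k hk _ _ => mk_ne hk (by omega) (Or.inr (by omega)))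
    have r2 : Reach n w (mk (n-1) 0 (by omega) (by omega)) (mk (n-1) (n-1) (by omega) (by omega)) :=
      walk_row (by omega) (by omega) 0 (n-1) (by omega) (by omega)
        (fun k hk _ _ => mk_ne (by omega) hk (Or.inl (by omega)))
    have r3 : Reach n w (mk 0 (n-1) (by omega) (by omega)) (mk (n-1) (n-1) (by omega) (by omega)) :=
      walk_col (by omega) (by omega) 0 (n-1) (by omega) (by omega)
        (fun k hk _ _ => mk_ne hk (by omega) (Or.inr (by omega)))
    exact (r1.trans' r2).trans' r3.symm'
  · exact walk_row (by omega) (by omega) 0 (n-1) (by omega) (by omega)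
      (fun k hk _ _ => mk_ne (by omega) hk (Or.inl (by omega)))

lemma sideBottom (hn : 2 ≤ n) (h0 : mk (n-1) 0 (by omega) (by omega) ≠ w)
    (h1 : mk (n-1) (n-1) (by omega) (by omega) ≠ w) :
    Reach n w (mk (n-1) 0 (by omega) (by omega)) (mk (n-1) (n-1) (by omega) (by omega)) := by
  by_cases hw : (w.1 : ℕ) = n-1
  · have hw2 : (w.2 : ℕ) ≠ 0 := fun h => h0 ((mk_eq_iff _ _ w).2 (by omega))
    have hw2' : (w.2 : ℕ) ≠ n-1 := fun h => h1 ((mk_eq_iff _ _ w).2 (by omega))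
    have r1 : Reach n w (mk 0 0 (by omega) (by omega)) (mk (n-1) 0 (by omega) (by omega)) :=
      walk_col (by omega) (by omega) 0 (n-1) (by omega) (by omega)
        (fun k hk _ _ => mk_ne hk (by omega) (Or.inr (by omega)))
    have r2 : Reach n w (mk 0 0 (by omega) (by omega)) (mk 0 (n-1) (by omega) (by omega)) :=
      walk_row (by omega) (by omega) 0 (n-1) (by omega) (by omega)
        (fun k hk _ _ => mk_ne (by omega) hk (Or.inl (by omega)))
    have r3 : Reach n w (mk 0 (n-1) (by omega) (by omega)) (mk (n-1) (n-1) (by omega) (by omega)) :=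
      walk_col (by omega) (by omega) 0 (n-1) (by omega) (by omega)
        (fun k hk _ _ => mk_ne hk (by omega) (Or.inr (by omega)))
    exact (r1.symm'.trans' r2).trans' r3
  · exact walk_row (by omega) (by omega) 0 (n-1) (by omega) (by omega)
      (fun k hk _ _ => mk_ne (by omega) hk (Or.inl (by omega)))

lemma sideLeft (hn : 2 ≤ n) (h0 : mk 0 0 (by omega) (by omega) ≠ w)
    (h1 : mk (n-1) 0 (by omega) (by omega) ≠ w) :
    Reach n w (mk 0 0 (by omega) (by omega)) (mk (n-1) 0 (by omega) (by omega)) := by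
  by_cases hw : (w.2 : ℕ) = 0
  · have hw1 : (w.1 : ℕ) ≠ 0 := fun h => h0 ((mk_eq_iff _ _ w).2 (by omega))
    have hw1' : (w.1 : ℕ) ≠ n-1 := fun h => h1 ((mk_eq_iff _ _ w).2 (by omega))
    have r1 : Reach n w (mk 0 0 (by omega) (by omega)) (mk 0 (n-1) (by omega) (by omega)) :=
      walk_row (by omega) (by omega) 0 (n-1) (by omega) (by omega)
        (fun k hk _ _ => mk_ne (by omega) hk (Or.inl (by omega)))
    have r2 : Reach n w (mk 0 (n-1) (by omega) (by omega)) (mk (n-1) (n-1) (by omega) (by omega)) :=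
      walk_col (by omega) (by omega) 0 (n-1) (by omega) (by omega)
        (fun k hk _ _ => mk_ne hk (by omega) (Or.inr (by omega)))
    have r3 : Reach n w (mk (n-1) 0 (by omega) (by omega)) (mk (n-1) (n-1) (by omega) (by omega)) :=
      walk_row (by omega) (by omega) 0 (n-1) (by omega) (by omega)
        (fun k hk _ _ => mk_ne (by omega) hk (Or.inl (by omega)))
    exact (r1.trans' r2).trans' r3.symm'
  · exact walk_col (by omega) (by omega) 0 (n-1) (by omega) (by omega)
      (fun k hk _ _ => mk_ne hk (by omega) (Or.inr (by omega)))

lemma sideRight (hn : 2 ≤ n) (h0 : mk 0 (n-1) (by omega) (by omega) ≠ w)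
    (h1 : mk (n-1) (n-1) (by omega) (by omega) ≠ w) :
    Reach n w (mk 0 (n-1) (by omega) (by omega)) (mk (n-1) (n-1) (by omega) (by omega)) := by
  by_cases hw : (w.2 : ℕ) = n-1
  · have hw1 : (w.1 : ℕ) ≠ 0 := fun h => h0 ((mk_eq_iff _ _ w).2 (by omega))
    have hw1' : (w.1 : ℕ) ≠ n-1 := fun h => h1 ((mk_eq_iff _ _ w).2 (by omega))
    have r1 : Reach n w (mk 0 0 (by omega) (by omega)) (mk 0 (n-1) (by omega) (by omega)) :=
      walk_row (by omega) (by omega) 0 (n-1) (by omega) (by omega)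
        (fun k hk _ _ => mk_ne (by omega) hk (Or.inl (by omega)))
    have r2 : Reach n w (mk 0 0 (by omega) (by omega)) (mk (n-1) 0 (by omega) (by omega)) :=
      walk_col (by omega) (by omega) 0 (n-1) (by omega) (by omega)
        (fun k hk _ _ => mk_ne hk (by omega) (Or.inr (by omega)))
    have r3 : Reach n w (mk (n-1) 0 (by omega) (by omega)) (mk (n-1) (n-1) (by omega) (by omega)) :=
      walk_row (by omega) (by omega) 0 (n-1) (by omega) (by omega)
        (fun k hk _ _ => mk_ne (by omega) hk (Or.inl (by omega)))
    exact (r1.symm'.trans' r2).trans' r3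
  · exact walk_col (by omega) (by omega) 0 (n-1) (by omega) (by omega)
      (fun k hk _ _ => mk_ne hk (by omega) (Or.inr (by omega)))

/-- predicate: p is a corner -/
def corner (n : ℕ) (p : Fin n × Fin n) : Prop :=
  ((p.1 : ℕ) = 0 ∨ (p.1 : ℕ) + 1 = n) ∧ ((p.2 : ℕ) = 0 ∨ (p.2 : ℕ) + 1 = n)

lemma cornersReach (hn : 2 ≤ n) {p q : Fin n × Fin n} (hp : corner n p) (hq : corner n q)
    (hpw : p ≠ w) (hqw : q ≠ w) : Reach n w p q := by
  have hmkp : ∀ (r : Fin n × Fin n), corner n r →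
      (r = mk 0 0 (by omega) (by omega)) ∨ (r = mk 0 (n-1) (by omega) (by omega)) ∨
      (r = mk (n-1) 0 (by omega) (by omega)) ∨ (r = mk (n-1) (n-1) (by omega) (by omega)) := by
    rintro ⟨⟨a, ha⟩, ⟨b, hb⟩⟩ ⟨h1, h2⟩
    simp only [mk, Prod.mk.injEq, Fin.mk.injEq, Fin.ext_iff] at *
    omega
  -- reachability between any two of the four corners, given both ≠ w
  have key : ∀ a b c d (hab : a < n) (hbb : b < n) (hcb : c < n) (hdb : d < n),
      corner n (mk a b hab hbb) → corner n (mk c d hcb hdb) →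
      mk a b hab hbb ≠ w → mk c d hcb hdb ≠ w → True := fun _ _ _ _ _ _ _ _ _ _ _ _ => trivial
  clear key
  rcases hmkp p hp with hp' | hp' | hp' | hp' <;> rcases hmkp q hq with hq' | hq' | hq' | hq' <;>
    subst hp' <;> subst hq'
  · exact Reach.refl hpw
  · exact sideTop hn hpw hqw
  · exact sideLeft hn hpw hqw
  · -- c00 to c11 : via c01 or c10
    by_cases h01 : mk 0 (n-1) (by omega) (by omega) = w
    · have h10 : mk (n-1) 0 (by omega) (by omega) ≠ w := by
        intro h
        have a1 := (mk_eq_iff _ _ _).1 h01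
        have a2 := (mk_eq_iff _ _ _).1 h
        omega
      exact (sideLeft hn hpw h10).trans' (sideBottom hn h10 hqw)
    · exact (sideTop hn hpw h01).trans' (sideRight hn h01 hqw)
  · exact (sideTop hn hqw hpw).symm'
  · exact Reach.refl hpw
  · -- c01 to c10: via c00 or c11
    by_cases h00 : mk 0 0 (by omega) (by omega) = w
    · have h11 : mk (n-1) (n-1) (by omega) (by omega) ≠ w := by
        intro h
        have a1 := (mk_eq_iff _ _ _).1 h00
        have a2 := (mk_eq_iff _ _ _).1 h
        omega
      exact (sideRight hn hpw h11).trans' (sideBottom hn hqw h11).symm'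
    · exact (sideTop hn h00 hpw).symm'.trans' (sideLeft hn h00 hqw)
  · exact sideRight hn hpw hqw
  · exact (sideLeft hn hqw hpw).symm'
  · -- c10 to c01
    by_cases h00 : mk 0 0 (by omega) (by omega) = w
    · have h11 : mk (n-1) (n-1) (by omega) (by omega) ≠ w := by
        intro h
        have a1 := (mk_eq_iff _ _ _).1 h00
        have a2 := (mk_eq_iff _ _ _).1 h
        omega
      exact (sideBottom hn hpw h11).trans' (sideRight hn hqw h11).symm'
    · exact (sideLeft hn h00 hpw).symm'.trans' (sideTop hn h00 hqw)
  · exact Reach.refl hpw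
  · exact sideBottom hn hpw hqw
  · -- c11 to c00
    by_cases h01 : mk 0 (n-1) (by omega) (by omega) = w
    · have h10 : mk (n-1) 0 (by omega) (by omega) ≠ w := by
        intro h
        have a1 := (mk_eq_iff _ _ _).1 h01
        have a2 := (mk_eq_iff _ _ _).1 h
        omega
      exact ((sideLeft hn hqw h10).trans' (sideBottom hn h10 hpw)).symm'
    · exact ((sideTop hn hqw h01).trans' (sideRight hn h01 hpw)).symm'
  · exact (sideRight hn hqw hpw).symm'
  · exact (sideBottom hn hqw hpw).symm'
  · exact Reach.refl hpw

/-- every frame vertex ≠ w reaches some corner ≠ w -/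
lemma corner_mk {a b : ℕ} (ha : a < n) (hb : b < n)
    (h1 : a = 0 ∨ a + 1 = n) (h2 : b = 0 ∨ b + 1 = n) : corner n (mk a b ha hb) := ⟨h1, h2⟩

/-- every frame vertex ≠ w reaches some corner ≠ w -/
lemma frameToCorner (hn : 2 ≤ n) {a : Fin n × Fin n} (hfa : fr n a) (haw : a ≠ w) :
    ∃ p, corner n p ∧ p ≠ w ∧ Reach n w a p := by
  obtain ⟨⟨i, hi⟩, ⟨j, hj⟩⟩ := a
  have hmk : (⟨⟨i, hi⟩, ⟨j, hj⟩⟩ : Fin n × Fin n) = mk i j hi hj := rfl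
  rw [hmk] at haw ⊢
  have hfa' : i = 0 ∨ i + 1 = n ∨ j = 0 ∨ j + 1 = n := hfa
  rcases hfa' with h | h | h | h
  · -- top row, i = 0
    by_cases hww : (w.1 : ℕ) = 0 ∧ (w.2 : ℕ) ≤ j
    · have hj2 : (w.2 : ℕ) ≠ j := fun hh => haw ((mk_eq_iff _ _ _).2 (by omega))
      refine ⟨mk 0 (n-1) (by omega) (by omega), corner_mk _ _ (by omega) (by omega),
        mk_ne _ _ (by omega), ?_⟩
      have := walk_row (w := w) hi (by omega) j (n-1) (by omega) (by omega)
          (fun k hk h1 h2 => mk_ne _ _ (by omega))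
      subst h; exact this
    · refine ⟨mk 0 0 (by omega) (by omega), corner_mk _ _ (by omega) (by omega),
        mk_ne _ _ (by omega), ?_⟩
      have := (walk_row (w := w) hi (by omega) 0 j (by omega) hj
          (fun k hk h1 h2 => mk_ne _ _ (by omega))).symm'
      subst h; exact this
  · -- bottom row, i+1 = n
    by_cases hww : (w.1 : ℕ) + 1 = n ∧ (w.2 : ℕ) ≤ j
    · have hj2 : (w.2 : ℕ) ≠ j := fun hh => haw ((mk_eq_iff _ _ _).2 (by omega))
      refine ⟨mk (n-1) (n-1) (by omega) (by omega), corner_mk _ _ (by omega) (by omega),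
        mk_ne _ _ (by omega), ?_⟩
      have := walk_row (w := w) hi (by omega) j (n-1) (by omega) (by omega)
          (fun k hk h1 h2 => mk_ne _ _ (by omega))
      have hin : i = n - 1 := by omega
      subst hin; exact this
    · refine ⟨mk (n-1) 0 (by omega) (by omega), corner_mk _ _ (by omega) (by omega),
        mk_ne _ _ (by omega), ?_⟩
      have := (walk_row (w := w) hi (by omega) 0 j (by omega) hj
          (fun k hk h1 h2 => mk_ne _ _ (by omega))).symm'
      have hin : i = n - 1 := by omega
      subst hin; exact this
  · -- left column, j = 0
    by_cases hww : (w.2 : ℕ) = 0 ∧ (w.1 : ℕ) ≤ i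
    · have hi2 : (w.1 : ℕ) ≠ i := fun hh => haw ((mk_eq_iff _ _ _).2 (by omega))
      refine ⟨mk (n-1) 0 (by omega) (by omega), corner_mk _ _ (by omega) (by omega),
        mk_ne _ _ (by omega), ?_⟩
      have := walk_col (w := w) hj (by omega) i (n-1) (by omega) (by omega)
          (fun k hk h1 h2 => mk_ne _ _ (by omega))
      subst h; exact this
    · refine ⟨mk 0 0 (by omega) (by omega), corner_mk _ _ (by omega) (by omega),
        mk_ne _ _ (by omega), ?_⟩
      have := (walk_col (w := w) hj (by omega) 0 i (by omega) hi
          (fun k hk h1 h2 => mk_ne _ _ (by omega))).symm'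
      subst h; exact this
  · -- right column, j+1 = n
    by_cases hww : (w.2 : ℕ) + 1 = n ∧ (w.1 : ℕ) ≤ i
    · have hi2 : (w.1 : ℕ) ≠ i := fun hh => haw ((mk_eq_iff _ _ _).2 (by omega))
      refine ⟨mk (n-1) (n-1) (by omega) (by omega), corner_mk _ _ (by omega) (by omega),
        mk_ne _ _ (by omega), ?_⟩
      have := walk_col (w := w) hj (by omega) i (n-1) (by omega) (by omega)
          (fun k hk h1 h2 => mk_ne _ _ (by omega))
      have hjn : j = n - 1 := by omega
      subst hjn; exact this
    · refine ⟨mk 0 (n-1) (by omega) (by omega), corner_mk _ _ (by omega) (by omega),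
        mk_ne _ _ (by omega), ?_⟩
      have := (walk_col (w := w) hj (by omega) 0 i (by omega) hi
          (fun k hk h1 h2 => mk_ne _ _ (by omega))).symm'
      have hjn : j = n - 1 := by omega
      subst hjn; exact this

lemma frameReach (hn : 2 ≤ n) {a b : Fin n × Fin n} (hfa : fr n a) (hfb : fr n b)
    (haw : a ≠ w) (hbw : b ≠ w) : Reach n w a b := by
  obtain ⟨p, hp, hpw, hap⟩ := frameToCorner hn hfa haw
  obtain ⟨q, hq, hqw, hbq⟩ := frameToCorner hn hfb hbw
  exact (hap.trans' (cornersReach hn hp hq hpw hqw)).trans' hbq.symm'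

end Corners

section Chain
variable {w : Fin n × Fin n}

lemma mk_ne_of_L {i j : ℕ} (hi : i < n) (hj : j < n)
    (h : i + 2*j ≠ (w.1 : ℕ) + 2*(w.2 : ℕ)) : mk i j hi hj ≠ w := by
  apply mk_ne
  omega

lemma vl_mk {i j : ℕ} (hi : i < n) (hj : j < n) : vl (mk i j hi hj) = (i + 2*j) % 7 := rfl

lemma inS_of_vl {p : Fin n × Fin n} (h : vl p < 2) : inS n p := Or.inr h

lemma chain (hn : 2 ≤ n) :
    ∀ a b (ha1 : 1 ≤ a) (ha2 : a + 1 < n) (hb1 : 1 ≤ b) (hb2 : b + 1 < n)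
      (hv : (a + 2*b) % 7 = 0)
      (hsafe : (w.1:ℕ) + 2*(w.2:ℕ) + 2 ≤ a + 2*b ∨ a + 2*b + 3 ≤ (w.1:ℕ) + 2*(w.2:ℕ)),
      ∃ z, fr n z ∧ z ≠ w ∧ Reach n w (mk a b (by omega) (by omega)) z := by
  intro a
  induction a using Nat.strong_induction_on with
  | _ a ih =>
    intro b ha1 ha2 hb1 hb2 hv hsafe
    by_cases ha : a = 1
    · subst ha
      refine ⟨mk 0 b (by omega) (by omega), Or.inl rfl, mk_ne_of_L _ _ (by omega), ?_⟩
      exact Reach.step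
        (adjH _ _ _ _ (Or.inr (Or.inl ⟨by omega, rfl⟩))
          (Or.inl (inS_of_vl (by rw [vl_mk]; omega))))
        (mk_ne_of_L _ _ (by omega)) (mk_ne_of_L _ _ (by omega))
    · -- a ≥ 2
      have ha2' : 2 ≤ a := by omega
      have st1 : Reach n w (mk a b (by omega) (by omega)) (mk a (b+1) (by omega) (by omega)) :=
        Reach.step (adjH _ _ _ _ (Or.inr (Or.inr (Or.inl ⟨rfl, rfl⟩)))
            (Or.inl (inS_of_vl (by rw [vl_mk]; omega))))
          (mk_ne_of_L _ _ (by omega)) (mk_ne_of_L _ _ (by omega))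
      have st2 : Reach n w (mk a (b+1) (by omega) (by omega))
          (mk (a-1) (b+1) (by omega) (by omega)) :=
        Reach.step (adjH _ _ _ _ (Or.inr (Or.inl ⟨by omega, rfl⟩))
            (Or.inr (inS_of_vl (by rw [vl_mk]; omega))))
          (mk_ne_of_L _ _ (by omega)) (mk_ne_of_L _ _ (by omega))
      by_cases hb3 : b + 2 = n
      · exact ⟨mk (a-1) (b+1) (by omega) (by omega),
          Or.inr (Or.inr (Or.inr (by show b+1+1 = n; omega))), mk_ne_of_L _ _ (by omega),
          st1.trans' st2⟩
      · have hb3' : b + 2 < n := by omega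
        by_cases ha3 : a = 2
        · subst ha3
          have st3 : Reach n w (mk 1 (b+1) (by omega) (by omega))
              (mk 0 (b+1) (by omega) (by omega)) :=
            Reach.step (adjH _ _ _ _ (Or.inr (Or.inl ⟨by omega, rfl⟩))
                (Or.inl (inS_of_vl (by rw [vl_mk]; omega))))
              (mk_ne_of_L _ _ (by omega)) (mk_ne_of_L _ _ (by omega))
          exact ⟨mk 0 (b+1) (by omega) (by omega), Or.inl rfl, mk_ne_of_L _ _ (by omega),
            (st1.trans' st2).trans' st3⟩
        · have ha4 : 3 ≤ a := by omega
          have st3 : Reach n w (mk (a-1) (b+1) (by omega) (by omega))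
              (mk (a-2) (b+1) (by omega) (by omega)) :=
            Reach.step (adjH _ _ _ _ (Or.inr (Or.inl ⟨by omega, rfl⟩))
                (Or.inl (inS_of_vl (by rw [vl_mk]; omega))))
              (mk_ne_of_L _ _ (by omega)) (mk_ne_of_L _ _ (by omega))
          obtain ⟨z, hz1, hz2, hz3⟩ := ih (a-2) (by omega) (b+1) (by omega) (by omega)
            (by omega) (by omega) (by omega) (by omega)
          exact ⟨z, hz1, hz2, ((st1.trans' st2).trans' st3).trans' hz3⟩

end Chain

section FromV0
variable {w : Fin n × Fin n}

lemma fromV0 (hn : 2 ≤ n) :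
    ∀ a b (ha1 : 1 ≤ a) (ha2 : a + 1 < n) (hb1 : 1 ≤ b) (hb2 : b + 1 < n)
      (hv : (a + 2*b) % 7 = 0) (hne : mk a b (by omega) (by omega) ≠ w),
      ∃ z, fr n z ∧ z ≠ w ∧ Reach n w (mk a b (by omega) (by omega)) z := by
  intro a b ha1 ha2 hb1 hb2 hv hne
  by_cases hsafe : (w.1:ℕ) + 2*(w.2:ℕ) + 2 ≤ a + 2*b ∨ a + 2*b + 3 ≤ (w.1:ℕ) + 2*(w.2:ℕ)
  · exact chain hn a b ha1 ha2 hb1 hb2 hv hsafe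
  · -- unsafe: L-1 ≤ W ≤ L+2, and mk a b ≠ w
    by_cases hb1' : b = 1
    · subst hb1'
      refine ⟨mk a 0 (by omega) (by omega), Or.inr (Or.inr (Or.inl rfl)),
        mk_ne_of_L _ _ (by omega), ?_⟩
      exact Reach.step (adjH _ _ _ _ (Or.inr (Or.inr (Or.inr (Or.inl ⟨rfl, rfl⟩))))
          (Or.inl (inS_of_vl (by rw [vl_mk]; omega))))
        hne (mk_ne_of_L _ _ (by omega))
    · by_cases hb2' : b = 2
      · subst hb2'
        have st1 : Reach n w (mk a 2 (by omega) (by omega)) (mk a 1 (by omega) (by omega)) :=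
          Reach.step (adjH _ _ _ _ (Or.inr (Or.inr (Or.inr (Or.inl ⟨rfl, rfl⟩))))
              (Or.inl (inS_of_vl (by rw [vl_mk]; omega))))
            hne (mk_ne_of_L _ _ (by omega))
        have st2 : Reach n w (mk a 1 (by omega) (by omega)) (mk a 0 (by omega) (by omega)) :=
          Reach.step (adjH _ _ _ _ (Or.inr (Or.inr (Or.inr (Or.inl ⟨rfl, rfl⟩))))
              (Or.inr (inS_of_fr (fr_mk _ _ (by omega)))))
            (mk_ne_of_L _ _ (by omega)) (mk_ne_of_L _ _ (by omega))
        exact ⟨mk a 0 (by omega) (by omega), Or.inr (Or.inr (Or.inl rfl)),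
          mk_ne_of_L _ _ (by omega), st1.trans' st2⟩
      · have hb3 : 3 ≤ b := by omega
        by_cases ha1' : a = 1
        · subst ha1'
          refine ⟨mk 0 (b-1) (by omega) (by omega), Or.inl rfl,
            mk_ne_of_L _ _ (by omega), ?_⟩
          exact Reach.step (adjH _ _ _ _ (Or.inr (Or.inr (Or.inr (Or.inr (Or.inr
              ⟨by omega, by omega⟩)))))
              (Or.inl (inS_of_vl (by rw [vl_mk]; omega))))
            hne (mk_ne_of_L _ _ (by omega))
        · by_cases ha2' : a = 2
          · subst ha2'
            have st1 : Reach n w (mk 2 b (by omega) (by omega))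
                (mk 1 (b-1) (by omega) (by omega)) :=
              Reach.step (adjH _ _ _ _ (Or.inr (Or.inr (Or.inr (Or.inr (Or.inr
                  ⟨by omega, by omega⟩)))))
                  (Or.inl (inS_of_vl (by rw [vl_mk]; omega))))
                hne (mk_ne_of_L _ _ (by omega))
            have st2 : Reach n w (mk 1 (b-1) (by omega) (by omega))
                (mk 0 (b-1) (by omega) (by omega)) :=
              Reach.step (adjH _ _ _ _ (Or.inr (Or.inl ⟨by omega, rfl⟩))
                  (Or.inr (inS_of_fr (fr_mk _ _ (by omega)))))
                (mk_ne_of_L _ _ (by omega)) (mk_ne_of_L _ _ (by omega))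
            exact ⟨mk 0 (b-1) (by omega) (by omega), Or.inl rfl,
              mk_ne_of_L _ _ (by omega), st1.trans' st2⟩
          · by_cases ha3' : a = 3
            · subst ha3'
              have st1 : Reach n w (mk 3 b (by omega) (by omega))
                  (mk 2 (b-1) (by omega) (by omega)) :=
                Reach.step (adjH _ _ _ _ (Or.inr (Or.inr (Or.inr (Or.inr (Or.inr
                    ⟨by omega, by omega⟩)))))
                    (Or.inl (inS_of_vl (by rw [vl_mk]; omega))))
                  hne (mk_ne_of_L _ _ (by omega))
              have st2 : Reach n w (mk 2 (b-1) (by omega) (by omega))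
                  (mk 1 (b-2) (by omega) (by omega)) :=
                Reach.step (adjH _ _ _ _ (Or.inr (Or.inr (Or.inr (Or.inr (Or.inr
                    ⟨by omega, by omega⟩)))))
                    (Or.inr (inS_of_vl (by rw [vl_mk]; omega))))
                  (mk_ne_of_L _ _ (by omega)) (mk_ne_of_L _ _ (by omega))
              have st3 : Reach n w (mk 1 (b-2) (by omega) (by omega))
                  (mk 0 (b-2) (by omega) (by omega)) :=
                Reach.step (adjH _ _ _ _ (Or.inr (Or.inl ⟨by omega, rfl⟩))
                    (Or.inl (inS_of_vl (by rw [vl_mk]; omega))))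
                  (mk_ne_of_L _ _ (by omega)) (mk_ne_of_L _ _ (by omega))
              exact ⟨mk 0 (b-2) (by omega) (by omega), Or.inl rfl,
                mk_ne_of_L _ _ (by omega), (st1.trans' st2).trans' st3⟩
            · have ha4 : 4 ≤ a := by omega
              have st1 : Reach n w (mk a b (by omega) (by omega))
                  (mk (a-1) (b-1) (by omega) (by omega)) :=
                Reach.step (adjH _ _ _ _ (Or.inr (Or.inr (Or.inr (Or.inr (Or.inr
                    ⟨by omega, by omega⟩)))))
                    (Or.inl (inS_of_vl (by rw [vl_mk]; omega))))
                  hne (mk_ne_of_L _ _ (by omega))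
              have st2 : Reach n w (mk (a-1) (b-1) (by omega) (by omega))
                  (mk (a-2) (b-2) (by omega) (by omega)) :=
                Reach.step (adjH _ _ _ _ (Or.inr (Or.inr (Or.inr (Or.inr (Or.inr
                    ⟨by omega, by omega⟩)))))
                    (Or.inr (inS_of_vl (by rw [vl_mk]; omega))))
                  (mk_ne_of_L _ _ (by omega)) (mk_ne_of_L _ _ (by omega))
              have st3 : Reach n w (mk (a-2) (b-2) (by omega) (by omega))
                  (mk (a-3) (b-2) (by omega) (by omega)) :=
                Reach.step (adjH _ _ _ _ (Or.inr (Or.inl ⟨by omega, rfl⟩))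
                    (Or.inl (inS_of_vl (by rw [vl_mk]; omega))))
                  (mk_ne_of_L _ _ (by omega)) (mk_ne_of_L _ _ (by omega))
              obtain ⟨z, hz1, hz2, hz3⟩ := chain (w := w) hn (a-3) (b-2) (by omega) (by omega)
                (by omega) (by omega) (by omega) (by omega)
              exact ⟨z, hz1, hz2, ((st1.trans' st2).trans' st3).trans' hz3⟩

end FromV0

section FromV1
variable {w : Fin n × Fin n}

lemma fromV1 (hn : 2 ≤ n) :
    ∀ i j (hi1 : 1 ≤ i) (hi2 : i + 1 < n) (hj1 : 1 ≤ j) (hj2 : j + 1 < n)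
      (hv : (i + 2*j) % 7 = 1) (hne : mk i j (by omega) (by omega) ≠ w),
      ∃ z, fr n z ∧ z ≠ w ∧ Reach n w (mk i j (by omega) (by omega)) z := by
  intro i j hi1 hi2 hj1 hj2 hv hne
  by_cases hi1' : i = 1
  · subst hi1'
    by_cases hpw : mk 0 j (by omega) (by omega) = w
    · have hco := (mk_eq_iff _ _ _).1 hpw
      refine ⟨mk 0 (j-1) (by omega) (by omega), Or.inl rfl, mk_ne _ _ (Or.inr (by omega)), ?_⟩
      exact Reach.step (adjH _ _ _ _ (Or.inr (Or.inr (Or.inr (Or.inr (Or.inr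
          ⟨by omega, by omega⟩)))))
          (Or.inl (inS_of_vl (by rw [vl_mk]; omega))))
        hne (mk_ne _ _ (Or.inr (by omega)))
    · refine ⟨mk 0 j (by omega) (by omega), Or.inl rfl, hpw, ?_⟩
      exact Reach.step (adjH _ _ _ _ (Or.inr (Or.inl ⟨by omega, rfl⟩))
          (Or.inl (inS_of_vl (by rw [vl_mk]; omega))))
        hne hpw
  · have hi3 : 2 ≤ i := by omega
    by_cases hpw : mk (i-1) j (by omega) (by omega) = w
    · -- partner is w; go around through (i+1, j) and (i+1, j-1)
      have hco := (mk_eq_iff _ _ _).1 hpw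
      by_cases hxf : i + 2 = n
      · -- x = (i+1, j) is on the bottom frame row
        refine ⟨mk (i+1) j (by omega) (by omega), fr_mk _ _ (by omega),
          mk_ne _ _ (Or.inl (by omega)), ?_⟩
        exact Reach.step (adjH _ _ _ _ (Or.inl ⟨rfl, rfl⟩)
            (Or.inl (inS_of_vl (by rw [vl_mk]; omega))))
          hne (mk_ne _ _ (Or.inl (by omega)))
      · have st1 : Reach n w (mk i j (by omega) (by omega))
            (mk (i+1) j (by omega) (by omega)) :=
          Reach.step (adjH _ _ _ _ (Or.inl ⟨rfl, rfl⟩)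
              (Or.inl (inS_of_vl (by rw [vl_mk]; omega))))
            hne (mk_ne _ _ (Or.inl (by omega)))
        have st2 : Reach n w (mk (i+1) j (by omega) (by omega))
            (mk (i+1) (j-1) (by omega) (by omega)) :=
          Reach.step (adjH _ _ _ _ (Or.inr (Or.inr (Or.inr (Or.inl ⟨rfl, by omega⟩))))
              (Or.inr (inS_of_vl (by rw [vl_mk]; omega))))
            (mk_ne _ _ (Or.inl (by omega))) (mk_ne _ _ (Or.inl (by omega)))
        by_cases hqf : j - 1 = 0
        · exact ⟨mk (i+1) (j-1) (by omega) (by omega), fr_mk _ _ (by omega),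
            mk_ne _ _ (Or.inl (by omega)), st1.trans' st2⟩
        · obtain ⟨z, hz1, hz2, hz3⟩ := fromV0 (w := w) hn (i+1) (j-1) (by omega) (by omega)
            (by omega) (by omega) (by omega) (mk_ne _ _ (Or.inl (by omega)))
          exact ⟨z, hz1, hz2, (st1.trans' st2).trans' hz3⟩
    · have st : Reach n w (mk i j (by omega) (by omega))
          (mk (i-1) j (by omega) (by omega)) :=
        Reach.step (adjH _ _ _ _ (Or.inr (Or.inl ⟨by omega, rfl⟩))
            (Or.inl (inS_of_vl (by rw [vl_mk]; omega))))
          hne hpw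
      by_cases hpf : i - 1 = 0 ∨ i = n ∨ j = 0 ∨ j + 1 = n
      · exact ⟨mk (i-1) j (by omega) (by omega), (by
          show i-1 = 0 ∨ (i-1) + 1 = n ∨ j = 0 ∨ j + 1 = n
          omega), hpw, st⟩
      · obtain ⟨z, hz1, hz2, hz3⟩ := fromV0 (w := w) hn (i-1) j (by omega) (by omega)
          (by omega) (by omega) (by omega) hpw
        exact ⟨z, hz1, hz2, st.trans' hz3⟩

end FromV1

section Master
variable {w : Fin n × Fin n}

lemma viaS (hn : 2 ≤ n) {i j i1 j1 i2 j2 : ℕ}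
    (hi : i < n) (hj : j < n) (hi1 : i1 < n) (hj1 : j1 < n) (hi2 : i2 < n) (hj2 : j2 < n)
    (adj1 : (i1 = i+1 ∧ j1=j) ∨ (i = i1+1 ∧ j=j1) ∨ (i1=i ∧ j1=j+1) ∨ (i=i1 ∧ j=j1+1) ∨
      (i1=i+1 ∧ j1=j+1) ∨ (i=i1+1 ∧ j=j1+1))
    (adj2 : (i2 = i+1 ∧ j2=j) ∨ (i = i2+1 ∧ j=j2) ∨ (i2=i ∧ j2=j+1) ∨ (i=i2 ∧ j=j2+1) ∨
      (i2=i+1 ∧ j2=j+1) ∨ (i=i2+1 ∧ j=j2+1))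
    (hv1 : (i1 + 2*j1) % 7 = 0) (hv2 : (i2 + 2*j2) % 7 = 1)
    (hne12 : ¬(i1 = i2 ∧ j1 = j2))
    (hne : mk i j hi hj ≠ w) :
    ∃ z, fr n z ∧ z ≠ w ∧ Reach n w (mk i j hi hj) z := by
  by_cases h1 : mk i1 j1 hi1 hj1 = w
  · have hco := (mk_eq_iff _ _ _).1 h1
    have hs2 : mk i2 j2 hi2 hj2 ≠ w := mk_ne _ _ (by omega)
    have st : Reach n w (mk i j hi hj) (mk i2 j2 hi2 hj2) :=
      Reach.step (adjH _ _ _ _ adj2 (Or.inr (inS_of_vl (by rw [vl_mk]; omega)))) hne hs2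
    by_cases hf : i2 = 0 ∨ i2 + 1 = n ∨ j2 = 0 ∨ j2 + 1 = n
    · exact ⟨mk i2 j2 hi2 hj2, fr_mk _ _ hf, hs2, st⟩
    · obtain ⟨z, hz1, hz2, hz3⟩ := fromV1 (w := w) hn i2 j2 (by omega) (by omega)
        (by omega) (by omega) hv2 hs2
      exact ⟨z, hz1, hz2, st.trans' hz3⟩
  · have st : Reach n w (mk i j hi hj) (mk i1 j1 hi1 hj1) :=
      Reach.step (adjH _ _ _ _ adj1 (Or.inr (inS_of_vl (by rw [vl_mk]; omega)))) hne h1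
    by_cases hf : i1 = 0 ∨ i1 + 1 = n ∨ j1 = 0 ∨ j1 + 1 = n
    · exact ⟨mk i1 j1 hi1 hj1, fr_mk _ _ hf, h1, st⟩
    · obtain ⟨z, hz1, hz2, hz3⟩ := fromV0 (w := w) hn i1 j1 (by omega) (by omega)
        (by omega) (by omega) hv1 h1
      exact ⟨z, hz1, hz2, st.trans' hz3⟩

lemma fromInterior (hn : 2 ≤ n) {i j : ℕ}
    (hi1 : 1 ≤ i) (hi2 : i + 1 < n) (hj1 : 1 ≤ j) (hj2 : j + 1 < n)
    (hne : mk i j (by omega) (by omega) ≠ w) :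
    ∃ z, fr n z ∧ z ≠ w ∧ Reach n w (mk i j (by omega) (by omega)) z := by
  have hc : (i + 2*j) % 7 = 0 ∨ (i + 2*j) % 7 = 1 ∨ (i + 2*j) % 7 = 2 ∨ (i + 2*j) % 7 = 3
      ∨ (i + 2*j) % 7 = 4 ∨ (i + 2*j) % 7 = 5 ∨ (i + 2*j) % 7 = 6 := by omega
  rcases hc with hc | hc | hc | hc | hc | hc | hc
  · exact fromV0 hn i j hi1 hi2 hj1 hj2 hc hne
  · exact fromV1 hn i j hi1 hi2 hj1 hj2 hc hne
  · -- c = 2 : s1 = (i, j-1), s2 = (i-1, j)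
    exact viaS hn (by omega) (by omega) (i1 := i) (j1 := j-1) (by omega) (by omega)
      (i2 := i-1) (j2 := j) (by omega) (by omega)
      (Or.inr (Or.inr (Or.inr (Or.inl ⟨rfl, by omega⟩))))
      (Or.inr (Or.inl ⟨by omega, rfl⟩))
      (by omega) (by omega) (by omega) hne
  · -- c = 3 : s1 = (i-1, j-1), s2 = (i, j-1)
    exact viaS hn (by omega) (by omega) (i1 := i-1) (j1 := j-1) (by omega) (by omega)
      (i2 := i) (j2 := j-1) (by omega) (by omega)
      (Or.inr (Or.inr (Or.inr (Or.inr (Or.inr ⟨by omega, by omega⟩)))))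
      (Or.inr (Or.inr (Or.inr (Or.inl ⟨rfl, by omega⟩))))
      (by omega) (by omega) (by omega) hne
  · -- c = 4 : s1 = (i+1, j+1), s2 = (i-1, j-1)
    exact viaS hn (by omega) (by omega) (i1 := i+1) (j1 := j+1) (by omega) (by omega)
      (i2 := i-1) (j2 := j-1) (by omega) (by omega)
      (Or.inr (Or.inr (Or.inr (Or.inr (Or.inl ⟨rfl, rfl⟩)))))
      (Or.inr (Or.inr (Or.inr (Or.inr (Or.inr ⟨by omega, by omega⟩)))))
      (by omega) (by omega) (by omega) hne
  · -- c = 5 : s1 = (i, j+1), s2 = (i+1, j+1)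
    exact viaS hn (by omega) (by omega) (i1 := i) (j1 := j+1) (by omega) (by omega)
      (i2 := i+1) (j2 := j+1) (by omega) (by omega)
      (Or.inr (Or.inr (Or.inl ⟨rfl, rfl⟩)))
      (Or.inr (Or.inr (Or.inr (Or.inr (Or.inl ⟨rfl, rfl⟩)))))
      (by omega) (by omega) (by omega) hne
  · -- c = 6 : s1 = (i+1, j), s2 = (i, j+1)
    exact viaS hn (by omega) (by omega) (i1 := i+1) (j1 := j) (by omega) (by omega)
      (i2 := i) (j2 := j+1) (by omega) (by omega)
      (Or.inl ⟨rfl, rfl⟩)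
      (Or.inr (Or.inr (Or.inl ⟨rfl, rfl⟩)))
      (by omega) (by omega) (by omega) hne

lemma master (hn : 2 ≤ n) {u : Fin n × Fin n} (hne : u ≠ w) :
    ∃ z, fr n z ∧ z ≠ w ∧ Reach n w u z := by
  by_cases hf : fr n u
  · exact ⟨u, hf, hne, Reach.refl hne⟩
  · obtain ⟨⟨i, hi⟩, ⟨j, hj⟩⟩ := u
    have hmk : (⟨⟨i, hi⟩, ⟨j, hj⟩⟩ : Fin n × Fin n) = mk i j hi hj := rfl
    rw [hmk] at hne ⊢
    have hf' : ¬(i = 0 ∨ i + 1 = n ∨ j = 0 ∨ j + 1 = n) := hf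
    exact fromInterior hn (by omega) (by omega) (by omega) (by omega) hne

lemma reach_all (hn : 2 ≤ n) {u v : Fin n × Fin n} (hu : u ≠ w) (hv : v ≠ w) :
    Reach n w u v := by
  obtain ⟨z1, hz1f, hz1w, r1⟩ := master hn hu
  obtain ⟨z2, hz2f, hz2w, r2⟩ := master hn hv
  exact (r1.trans' (frameReach hn hz1f hz2f hz1w hz2w)).trans' r2.symm'

end Master

section Conn

lemma conn_del (hn : 2 ≤ n) (w : Fin n × Fin n) :
    ((H n).induce ({w}ᶜ : Set (Fin n × Fin n))).Connected := by
  rw [connected_iff]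
  constructor
  · rintro ⟨u, hu⟩ ⟨v, hv⟩
    have hu' : u ≠ w := hu
    have hv' : v ≠ w := hv
    obtain ⟨ha, hb, r⟩ := reach_all (w := w) hn hu' hv'
    exact r
  · by_cases h : mk 0 0 (by omega) (by omega) = w
    · refine ⟨⟨mk 0 1 (by omega) (by omega), ?_⟩⟩
      have hco := (mk_eq_iff _ _ _).1 h
      exact mk_ne _ _ (Or.inr (by omega))
    · exact ⟨⟨mk 0 0 (by omega) (by omega), h⟩⟩

lemma third_vertex (hn : 2 ≤ n) (u v : Fin n × Fin n) : ∃ w', w' ≠ u ∧ w' ≠ v := by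
  by_cases h1 : mk 0 0 (by omega) (by omega) = u ∨ mk 0 0 (by omega) (by omega) = v
  · by_cases h2 : mk 0 1 (by omega) (by omega) = u ∨ mk 0 1 (by omega) (by omega) = v
    · refine ⟨mk 1 0 (by omega) (by omega), ?_, ?_⟩
      · intro hh
        have c1 := (mk_eq_iff _ _ _).1 hh
        rcases h1 with h1 | h1 <;> rcases h2 with h2 | h2 <;>
          (have c2 := (mk_eq_iff _ _ _).1 h1; have c3 := (mk_eq_iff _ _ _).1 h2; omega)
      · intro hh
        have c1 := (mk_eq_iff _ _ _).1 hh
        rcases h1 with h1 | h1 <;> rcases h2 with h2 | h2 <;>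
          (have c2 := (mk_eq_iff _ _ _).1 h1; have c3 := (mk_eq_iff _ _ _).1 h2; omega)
    · push_neg at h2
      exact ⟨mk 0 1 (by omega) (by omega), h2.1, h2.2⟩
  · push_neg at h1
    exact ⟨mk 0 0 (by omega) (by omega), h1.1, h1.2⟩

lemma reachable_of_reach {w u v : Fin n × Fin n} (h : Reach n w u v) :
    (H n).Reachable u v := by
  obtain ⟨ha, hb, r⟩ := h
  exact Reachable.map
    (⟨Subtype.val, fun {a b} hh => hh⟩ :
      (H n).induce ({w}ᶜ : Set (Fin n × Fin n)) →g H n) r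

lemma conn (hn : 2 ≤ n) : (H n).Connected := by
  rw [connected_iff]
  refine ⟨?_, ⟨mk 0 0 (by omega) (by omega)⟩⟩
  intro u v
  by_cases huv : u = v
  · subst huv; exact Reachable.refl u
  · obtain ⟨w', hw1, hw2⟩ := third_vertex hn u v
    exact reachable_of_reach (reach_all (w := w') hn (fun h => hw1 h.symm)
      (fun h => hw2 h.symm))

lemma twoConn (hn : 2 ≤ n) : TwoConnected (H n) := by
  refine ⟨?_, conn hn, fun v => conn_del hn v⟩
  have : Fintype.card (Fin n × Fin n) = n * n := by simp [Fintype.card_prod]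
  rw [this]
  have := Nat.mul_le_mul hn hn
  omega

end Conn

section Cover

def Sfin (n : ℕ) : Finset (Fin n × Fin n) := Finset.univ.filter (inS n)

lemma dom (hn : 2 ≤ n) (v : Fin n × Fin n) : ∃ u, inS n u ∧ (H n).Adj v u := by
  obtain ⟨⟨i, hi⟩, ⟨j, hj⟩⟩ := v
  rw [show (⟨⟨i, hi⟩, ⟨j, hj⟩⟩ : Fin n × Fin n) = mk i j hi hj from rfl]
  by_cases h1 : i = 0 ∨ i + 1 = n
  · by_cases h2 : j + 1 < n
    · exact ⟨mk i (j+1) hi (by omega), inS_of_fr (fr_mk _ _ (by omega)),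
        adjH _ _ _ _ (Or.inr (Or.inr (Or.inl ⟨rfl, rfl⟩)))
          (Or.inl (inS_of_fr (fr_mk _ _ (by omega))))⟩
    · exact ⟨mk i (j-1) hi (by omega), inS_of_fr (fr_mk _ _ (by omega)),
        adjH _ _ _ _ (Or.inr (Or.inr (Or.inr (Or.inl ⟨rfl, by omega⟩))))
          (Or.inl (inS_of_fr (fr_mk _ _ (by omega))))⟩
  · by_cases h2 : j = 0 ∨ j + 1 = n
    · exact ⟨mk (i-1) j (by omega) hj, inS_of_fr (fr_mk _ _ (by omega)),
        adjH _ _ _ _ (Or.inr (Or.inl ⟨by omega, rfl⟩))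
          (Or.inr (inS_of_fr (fr_mk _ _ (by omega))))⟩
    · have hc : (i + 2*j) % 7 = 0 ∨ (i + 2*j) % 7 = 1 ∨ (i + 2*j) % 7 = 2 ∨
          (i + 2*j) % 7 = 3 ∨ (i + 2*j) % 7 = 4 ∨ (i + 2*j) % 7 = 5 ∨ (i + 2*j) % 7 = 6 := by
        omega
      rcases hc with hc | hc | hc | hc | hc | hc | hc
      · exact ⟨mk (i+1) j (by omega) hj, inS_of_vl (by rw [vl_mk]; omega),
          adjH _ _ _ _ (Or.inl ⟨rfl, rfl⟩) (Or.inr (inS_of_vl (by rw [vl_mk]; omega)))⟩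
      · exact ⟨mk (i-1) j (by omega) hj, inS_of_vl (by rw [vl_mk]; omega),
          adjH _ _ _ _ (Or.inr (Or.inl ⟨by omega, rfl⟩))
            (Or.inr (inS_of_vl (by rw [vl_mk]; omega)))⟩
      · exact ⟨mk i (j-1) hi (by omega), inS_of_vl (by rw [vl_mk]; omega),
          adjH _ _ _ _ (Or.inr (Or.inr (Or.inr (Or.inl ⟨rfl, by omega⟩))))
            (Or.inr (inS_of_vl (by rw [vl_mk]; omega)))⟩
      · exact ⟨mk (i-1) (j-1) (by omega) (by omega), inS_of_vl (by rw [vl_mk]; omega),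
          adjH _ _ _ _ (Or.inr (Or.inr (Or.inr (Or.inr (Or.inr ⟨by omega, by omega⟩)))))
            (Or.inr (inS_of_vl (by rw [vl_mk]; omega)))⟩
      · exact ⟨mk (i+1) (j+1) (by omega) (by omega), inS_of_vl (by rw [vl_mk]; omega),
          adjH _ _ _ _ (Or.inr (Or.inr (Or.inr (Or.inr (Or.inl ⟨rfl, rfl⟩)))))
            (Or.inr (inS_of_vl (by rw [vl_mk]; omega)))⟩
      · exact ⟨mk i (j+1) hi (by omega), inS_of_vl (by rw [vl_mk]; omega),
          adjH _ _ _ _ (Or.inr (Or.inr (Or.inl ⟨rfl, rfl⟩)))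
            (Or.inr (inS_of_vl (by rw [vl_mk]; omega)))⟩
      · exact ⟨mk (i+1) j (by omega) hj, inS_of_vl (by rw [vl_mk]; omega),
          adjH _ _ _ _ (Or.inl ⟨rfl, rfl⟩) (Or.inr (inS_of_vl (by rw [vl_mk]; omega)))⟩

lemma tvc_wit (hn : 2 ≤ n) : IsTotalVertexCover (H n) (↑(Sfin n) : Set (Fin n × Fin n)) := by
  constructor
  · intro v w' h
    rcases h.2 with h' | h'
    · left; simpa [Sfin] using h'
    · right; simpa [Sfin] using h'
  · intro v
    obtain ⟨u, hu, ha⟩ := dom hn v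
    exact ⟨u, by simpa [Sfin] using hu, ha⟩

end Cover

section Count
open Finset

def intr' (n : ℕ) (q : ℕ × ℕ) : Prop :=
  (1 ≤ q.1 ∧ q.1 + 1 < n) ∧ (1 ≤ q.2 ∧ q.2 + 1 < n)

def fr'' (n : ℕ) (q : ℕ × ℕ) : Prop := q.1 = 0 ∨ q.1 + 1 = n ∨ q.2 = 0 ∨ q.2 + 1 = n

def vln (q : ℕ × ℕ) : ℕ := (q.1 + 2 * q.2) % 7

instance : DecidablePred (intr' n) := fun q => by unfold intr'; infer_instance
instance : DecidablePred (fr'' n) := fun q => by unfold fr''; infer_instance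

def grid (n : ℕ) : Finset (ℕ × ℕ) := Finset.range n ×ˢ Finset.range n

def It (n : ℕ) : Finset (ℕ × ℕ) := (grid n).filter (intr' n)

def Nt (n t : ℕ) : ℕ := ((It n).filter (fun q => vln q = t)).card

lemma card_It (hn : 2 ≤ n) : (It n).card = (n-2) * (n-2) := by
  have : It n = Finset.Ico 1 (n-1) ×ˢ Finset.Ico 1 (n-1) := by
    ext ⟨a, b⟩
    simp only [It, grid, mem_filter, mem_product, mem_range, mem_Ico, intr']
    omega
  rw [this, card_product, Nat.card_Ico]
  congr 1 <;> omega

lemma card_grid : (grid n).card = n * n := by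
  rw [grid, card_product, card_range]

lemma card_fr (hn : 2 ≤ n) :
    ((grid n).filter (fr'' n)).card = n * n - (n-2) * (n-2) := by
  have h1 : (grid n).filter (fr'' n) = grid n \ It n := by
    ext ⟨a, b⟩
    simp only [It, grid, mem_filter, mem_sdiff, mem_product, mem_range, fr'', intr']
    omega
  have hsub : It n ⊆ grid n := filter_subset _ _
  rw [h1, card_sdiff_of_subset hsub, card_It hn, card_grid]

lemma sum_Nt (hn : 2 ≤ n) : ∑ t ∈ Finset.range 7, Nt n t = (n-2) * (n-2) := by
  rw [← card_It hn]
  exact (Finset.card_eq_sum_card_fiberwise (f := vln) (fun q _ => by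
    simp only [Finset.mem_coe, mem_range, vln]; omega)).symm

lemma shift (hn : 2 ≤ n) (t : ℕ) : Nt n t ≤ Nt n ((t+1) % 7) + (n+4)/7 := by
  classical
  have hsplit := Finset.card_filter_add_card_filter_not
    (s := (It n).filter (fun q => vln q = t)) (p := fun q => q.1 + 2 < n)
  rw [show Nt n t = ((It n).filter (fun q => vln q = t)).card from rfl, ← hsplit]
  have h1 : (((It n).filter (fun q => vln q = t)).filter (fun q => q.1 + 2 < n)).card ≤
      Nt n ((t+1) % 7) := by
    apply Finset.card_le_card_of_injOn (fun q => (q.1 + 1, q.2))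
    · intro q hq
      simp only [Finset.mem_coe, mem_filter] at hq ⊢
      simp only [It, grid, mem_filter, mem_product, mem_range, intr', vln] at hq ⊢
      omega
    · intro q hq q' hq' he
      simp only [Prod.mk.injEq] at he
      exact Prod.ext (by omega) he.2
  have h2 : (((It n).filter (fun q => vln q = t)).filter (fun q => ¬ (q.1 + 2 < n))).card ≤
      (n+4)/7 := by
    have := Finset.card_le_card_of_injOn (f := fun q : ℕ × ℕ => (q.2 - 1) / 7)
      (s := ((It n).filter (fun q => vln q = t)).filter (fun q => ¬ (q.1 + 2 < n)))
      (t := Finset.range ((n+4)/7))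
      (by
        intro q hq
        simp only [Finset.mem_coe, mem_filter] at hq ⊢
        simp only [It, grid, mem_filter, mem_product, mem_range, intr', vln] at hq ⊢
        omega)
      (by
        intro q hq q' hq' he
        simp only [Finset.mem_coe, mem_filter] at hq hq'
        simp only [Finset.mem_coe, It, grid, mem_filter, mem_product, mem_range, intr', vln]
          at hq hq'
        simp only at he
        exact Prod.ext (by omega) (by omega))
    simpa using this
  omega

lemma P_le (hn : 2 ≤ n) :
    ((grid n).filter (fun q => intr' n q ∧ vln q < 2)).card ≤ Nt n 0 + Nt n 1 := by
  have h1 : (grid n).filter (fun q => intr' n q ∧ vln q < 2) ⊆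
      ((It n).filter (fun q => vln q = 0)) ∪ ((It n).filter (fun q => vln q = 1)) := by
    intro q hq
    simp only [It, mem_filter, mem_union] at hq ⊢
    obtain ⟨hg, hv⟩ := hq
    have hv2 : vln q = 0 ∨ vln q = 1 := by omega
    tauto
  calc ((grid n).filter (fun q => intr' n q ∧ vln q < 2)).card
      ≤ _ := Finset.card_le_card h1
    _ ≤ Nt n 0 + Nt n 1 := Finset.card_union_le _ _

lemma Sn_le (hn : 2 ≤ n) :
    ((grid n).filter (fun q => fr'' n q ∨ vln q < 2)).card ≤
      (n * n - (n-2)*(n-2)) + (Nt n 0 + Nt n 1) := by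
  have h1 : (grid n).filter (fun q => fr'' n q ∨ vln q < 2) ⊆
      ((grid n).filter (fr'' n)) ∪ ((grid n).filter (fun q => intr' n q ∧ vln q < 2)) := by
    intro q hq
    simp only [mem_filter, mem_union] at hq ⊢
    simp only [mem_filter, mem_union, grid, mem_product, mem_range, fr'', intr', vln] at hq ⊢
    omega
  calc ((grid n).filter (fun q => fr'' n q ∨ vln q < 2)).card
      ≤ _ := Finset.card_le_card h1
    _ ≤ _ := Finset.card_union_le _ _
    _ ≤ _ := by
        rw [card_fr hn]
        exact Nat.add_le_add_left (P_le hn) _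

lemma Sfin_le_Sn (hn : 2 ≤ n) :
    (Sfin n).card ≤ ((grid n).filter (fun q => fr'' n q ∨ vln q < 2)).card := by
  apply Finset.card_le_card_of_injOn (fun p => ((p.1 : ℕ), (p.2 : ℕ)))
  · intro p hp
    simp only [Finset.mem_coe, Sfin, mem_filter, mem_univ, true_and] at hp
    simp only [Finset.mem_coe, mem_filter, grid, mem_product, mem_range]
    refine ⟨⟨p.1.isLt, p.2.isLt⟩, ?_⟩
    rcases hp with h | h
    · left; exact h
    · right; exact h
  · intro p _ p' _ he
    simp only [Prod.mk.injEq] at he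
    exact Prod.ext (Fin.ext he.1) (Fin.ext he.2)

lemma count (hn : 2 ≤ n) : 7 * (Sfin n).card ≤ 2 * n^2 + 28 * n := by
  have hS := (Sfin_le_Sn hn).trans (Sn_le hn)
  have hsum := sum_Nt hn
  have s0 := shift hn 0
  have s1 := shift hn 1
  have s2 := shift hn 2
  have s3 := shift hn 3
  have s4 := shift hn 4
  have s5 := shift hn 5
  have s6 := shift hn 6
  norm_num at s0 s1 s2 s3 s4 s5 s6
  rw [Finset.sum_range_succ, Finset.sum_range_succ, Finset.sum_range_succ,
    Finset.sum_range_succ, Finset.sum_range_succ, Finset.sum_range_succ,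
    Finset.sum_range_one] at hsum
  -- abbreviations
  set m := n - 2 with hm
  have hn2 : n = m + 2 := by omega
  have hsq : n * n = m * m + 4 * m + 4 := by rw [hn2]; ring
  have hpow : n ^ 2 = n * n := by ring
  rw [hpow]
  omega

end Count

end TGP

theorem stmt_5 (n : ℕ) (hn : 2 ≤ n) :
    ∃ H : SimpleGraph (Fin n × Fin n), H ≤ triangularGrid n ∧ TwoConnected H ∧
      (tvc H : ℝ) ≤ (2 / 7) * (n : ℝ) ^ 2 + 4 * (n : ℝ) := by
  refine ⟨TGP.H n, TGP.H_le, TGP.twoConn hn, ?_⟩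
  have h1 : tvc (TGP.H n) ≤ (TGP.Sfin n).card := by
    apply Nat.sInf_le
    exact ⟨(↑(TGP.Sfin n) : Set (Fin n × Fin n)), TGP.tvc_wit hn, Set.ncard_coe_finset _⟩
  have h2 : 7 * (TGP.Sfin n).card ≤ 2 * n^2 + 28 * n := TGP.count hn
  have h3 : (tvc (TGP.H n) : ℝ) ≤ ((TGP.Sfin n).card : ℝ) := by exact_mod_cast h1
  have h4 : 7 * ((TGP.Sfin n).card : ℝ) ≤ 2 * (n:ℝ)^2 + 28 * (n:ℝ) := by exact_mod_cast h2
  nlinarith [h3, h4]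
end

section
/- For every integer n ≥ 2, the n-by-n grid with all diagonals (the strong product of two path graphs on n vertices) has a spanning 2-connected subgraph H whose minimum total vertex cover size tvc(H) satisfies tvc(H) ≤ (2/9)·n² + 4n. -/
open SimpleGraph

/-- The `n × n` grid with all diagonals (the strong product of two paths on `n`
vertices): two distinct vertices `(i,j)` and `(i',j')` are adjacent iff
`|i - i'| ≤ 1` and `|j - j'| ≤ 1`. -/
def kingGrid (n : ℕ) : SimpleGraph (Fin n × Fin n) where
  Adj p q := p ≠ q ∧ |(p.1 : ℤ) - (q.1 : ℤ)| ≤ 1 ∧ |(p.2 : ℤ) - (q.2 : ℤ)| ≤ 1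
  symm := by
    constructor
    rintro p q ⟨h0, h1, h2⟩
    exact ⟨h0.symm, by rwa [abs_sub_comm], by rwa [abs_sub_comm]⟩
  loopless := by
    constructor
    rintro p ⟨h0, -⟩
    exact h0 rfl

open Finset

section aux

/-- highway column predicate -/
def kg6hw (n : ℕ) (j : Fin n) : Prop := (j : ℕ) % 3 = 0 ∨ (j : ℕ) = n - 1

/-- boundary row predicate -/
def kg6bd (n : ℕ) (i : Fin n) : Prop := (i : ℕ) = 0 ∨ (i : ℕ) = n - 1

/-- the total vertex cover set -/
def kg6S (n : ℕ) (p : Fin n × Fin n) : Prop :=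
  kg6bd n p.1 ∨ (kg6hw n p.2 ∧ (p.1 : ℕ) % 3 ≤ 1)

/-- core vertices -/
def kg6W (n : ℕ) (p : Fin n × Fin n) : Prop := kg6bd n p.1 ∨ kg6hw n p.2

def kg6C (n : ℕ) (p q : Fin n × Fin n) : Prop :=
  (p.1 = q.1 ∧ kg6bd n p.1) ∨ (p.2 = q.2 ∧ kg6hw n p.2) ∨
  (¬ kg6W n p ∧ kg6S n q ∧ p.2 ≠ q.2) ∨ (¬ kg6W n q ∧ kg6S n p ∧ p.2 ≠ q.2)

lemma kg6C_symm {n : ℕ} {p q : Fin n × Fin n} (h : kg6C n p q) : kg6C n q p := by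
  rcases h with ⟨h1, h2⟩ | ⟨h1, h2⟩ | ⟨h1, h2, h3⟩ | ⟨h1, h2, h3⟩
  · exact Or.inl ⟨h1.symm, h1 ▸ h2⟩
  · exact Or.inr (Or.inl ⟨h1.symm, h1 ▸ h2⟩)
  · exact Or.inr (Or.inr (Or.inr ⟨h1, h2, h3.symm⟩))
  · exact Or.inr (Or.inr (Or.inl ⟨h1, h2, h3.symm⟩))

/-- the spanning subgraph -/
def kg6H (n : ℕ) : SimpleGraph (Fin n × Fin n) where
  Adj p q := p ≠ q ∧ |(p.1 : ℤ) - (q.1 : ℤ)| ≤ 1 ∧ |(p.2 : ℤ) - (q.2 : ℤ)| ≤ 1 ∧ kg6C n p q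
  symm := by
    constructor
    rintro p q ⟨h0, h1, h2, h3⟩
    exact ⟨h0.symm, by rwa [abs_sub_comm], by rwa [abs_sub_comm], kg6C_symm h3⟩
  loopless := by constructor; rintro p ⟨h0, -⟩; exact h0 rfl

end aux

section conn

variable {n : ℕ}

lemma kg6_adj_col {c : Fin n} (hc : kg6hw n c) {a b : ℕ} (ha : a < n) (hb : b < n)
    (hab : b = a + 1) : (kg6H n).Adj (⟨a, ha⟩, c) (⟨b, hb⟩, c) := by
  subst hab
  refine ⟨?_, ?_, ?_, Or.inr (Or.inl ⟨rfl, hc⟩)⟩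
  · simp only [ne_eq, Prod.mk.injEq, Fin.mk.injEq]
    omega
  · rw [abs_le]; constructor <;> push_cast <;> omega
  · simp

lemma kg6_adj_row {r : Fin n} (hr : kg6bd n r) {a b : ℕ} (ha : a < n) (hb : b < n)
    (hab : b = a + 1) : (kg6H n).Adj (r, ⟨a, ha⟩) (r, ⟨b, hb⟩) := by
  subst hab
  refine ⟨?_, ?_, ?_, Or.inl ⟨rfl, hr⟩⟩
  · simp only [ne_eq, Prod.mk.injEq, Fin.mk.injEq]
    omega
  · simp
  · rw [abs_le]; constructor <;> push_cast <;> omega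

variable (v : Fin n × Fin n)

abbrev kg6G (n : ℕ) (v : Fin n × Fin n) : SimpleGraph ({v}ᶜ : Set (Fin n × Fin n)) :=
  SimpleGraph.induce ({v}ᶜ : Set (Fin n × Fin n)) (kg6H n)



lemma kg6_mem_compl {p : Fin n × Fin n} (h : p ≠ v) : p ∈ ({v}ᶜ : Set (Fin n × Fin n)) := h

lemma kg6_step {p q : Fin n × Fin n} (hp : p ≠ v) (hq : q ≠ v) (h : (kg6H n).Adj p q) :
    (kg6G n v).Reachable ⟨p, kg6_mem_compl v hp⟩ ⟨q, kg6_mem_compl v hq⟩ := by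
  exact SimpleGraph.Adj.reachable (by exact h)

/-- travel along a highway column -/
lemma kg6_col_seg {c : Fin n} (hc : kg6hw n c) {a b : ℕ} (hab : a ≤ b) (hb : b < n)
    (hv : ∀ k (hk : k < n), a ≤ k → k ≤ b → ((⟨k, hk⟩ : Fin n), c) ≠ v) :
    (kg6G n v).Reachable ⟨(⟨a, lt_of_le_of_lt hab hb⟩, c), kg6_mem_compl v (hv a _ le_rfl hab)⟩
      ⟨(⟨b, hb⟩, c), kg6_mem_compl v (hv b hb hab le_rfl)⟩ := by
  induction b, hab using Nat.le_induction with
  | base => exact Reachable.refl _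
  | succ m hm ih =>
    have hm' : m < n := by omega
    refine (ih hm' (fun k hk h1 h2 => hv k hk h1 (by omega))).trans ?_
    exact kg6_step v (hv m hm' hm (by omega)) (hv (m+1) hb hm.step le_rfl)
      (kg6_adj_col hc hm' hb rfl)

/-- travel along a boundary row -/
lemma kg6_row_seg {r : Fin n} (hr : kg6bd n r) {a b : ℕ} (hab : a ≤ b) (hb : b < n)
    (hv : ∀ k (hk : k < n), a ≤ k → k ≤ b → (r, (⟨k, hk⟩ : Fin n)) ≠ v) :
    (kg6G n v).Reachable ⟨(r, ⟨a, lt_of_le_of_lt hab hb⟩), kg6_mem_compl v (hv a _ le_rfl hab)⟩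
      ⟨(r, ⟨b, hb⟩), kg6_mem_compl v (hv b hb hab le_rfl)⟩ := by
  induction b, hab using Nat.le_induction with
  | base => exact Reachable.refl _
  | succ m hm ih =>
    have hm' : m < n := by omega
    refine (ih hm' (fun k hk h1 h2 => hv k hk h1 (by omega))).trans ?_
    exact kg6_step v (hv m hm' hm (by omega)) (hv (m+1) hb hm.step le_rfl)
      (kg6_adj_row hr hm' hb rfl)


def kg6f0 (n : ℕ) (hn : 2 ≤ n) : Fin n := ⟨0, by omega⟩
def kg6fL (n : ℕ) (hn : 2 ≤ n) : Fin n := ⟨n - 1, by omega⟩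

@[simp] lemma kg6f0_val (hn : 2 ≤ n) : ((kg6f0 n hn : Fin n) : ℕ) = 0 := rfl
@[simp] lemma kg6fL_val (hn : 2 ≤ n) : ((kg6fL n hn : Fin n) : ℕ) = n - 1 := rfl

/-- top side -/
lemma kg6_sideT (hn : 2 ≤ n) (hv : (v.1 : ℕ) ≠ 0) (h1 h2) :
    (kg6G n v).Reachable ⟨(kg6f0 n hn, kg6f0 n hn), h1⟩ ⟨(kg6f0 n hn, kg6fL n hn), h2⟩ := by
  have := kg6_row_seg (v := v) (r := kg6f0 n hn) (Or.inl rfl) (a := 0) (b := n - 1)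
    (by omega) (by omega) (fun k hk _ _ heq => hv (by rw [← heq]; rfl))
  convert this using 2 <;> exact Prod.ext (Fin.ext rfl) (Fin.ext rfl)

/-- bottom side -/
lemma kg6_sideB (hn : 2 ≤ n) (hv : (v.1 : ℕ) ≠ n - 1) (h1 h2) :
    (kg6G n v).Reachable ⟨(kg6fL n hn, kg6f0 n hn), h1⟩ ⟨(kg6fL n hn, kg6fL n hn), h2⟩ := by
  have := kg6_row_seg (v := v) (r := kg6fL n hn) (Or.inr rfl) (a := 0) (b := n - 1)
    (by omega) (by omega) (fun k hk _ _ heq => hv (by rw [← heq]; rfl))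
  convert this using 2 <;> exact Prod.ext (Fin.ext rfl) (Fin.ext rfl)

/-- left side -/
lemma kg6_sideL (hn : 2 ≤ n) (hv : (v.2 : ℕ) ≠ 0) (h1 h2) :
    (kg6G n v).Reachable ⟨(kg6f0 n hn, kg6f0 n hn), h1⟩ ⟨(kg6fL n hn, kg6f0 n hn), h2⟩ := by
  have := kg6_col_seg (v := v) (c := kg6f0 n hn) (Or.inl rfl) (a := 0) (b := n - 1)
    (by omega) (by omega) (fun k hk _ _ heq => hv (by rw [← heq]; rfl))
  convert this using 2 <;> exact Prod.ext (Fin.ext rfl) (Fin.ext rfl)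

/-- right side -/
lemma kg6_sideR (hn : 2 ≤ n) (hv : (v.2 : ℕ) ≠ n - 1) (h1 h2) :
    (kg6G n v).Reachable ⟨(kg6f0 n hn, kg6fL n hn), h1⟩ ⟨(kg6fL n hn, kg6fL n hn), h2⟩ := by
  have := kg6_col_seg (v := v) (c := kg6fL n hn) (Or.inr rfl) (a := 0) (b := n - 1)
    (by omega) (by omega) (fun k hk _ _ heq => hv (by rw [← heq]; rfl))
  convert this using 2 <;> exact Prod.ext (Fin.ext rfl) (Fin.ext rfl)


lemma kg6_pair_eq_iff {a b : Fin n} : (a, b) = v ↔ ((a : ℕ) = (v.1 : ℕ) ∧ (b : ℕ) = (v.2 : ℕ)) := by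
  constructor
  · intro he; rw [← he]; exact ⟨rfl, rfl⟩
  · rintro ⟨h1, h2⟩
    exact Prod.ext (Fin.ext h1) (Fin.ext h2)

lemma kg6_pair_ne {a b : Fin n} (h : ¬ ((a : ℕ) = (v.1 : ℕ) ∧ (b : ℕ) = (v.2 : ℕ))) :
    (a, b) ≠ v := fun he => h ((kg6_pair_eq_iff v).mp he)

/-- horizontal corner pair -/
lemma kg6_cornerH (hn : 2 ≤ n) {r : Fin n} (hr : kg6bd n r)
    (h1 : (r, kg6f0 n hn) ≠ v) (h2 : (r, kg6fL n hn) ≠ v) :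
    (kg6G n v).Reachable ⟨(r, kg6f0 n hn), h1⟩ ⟨(r, kg6fL n hn), h2⟩ := by
  have e1 := (kg6_pair_eq_iff v).not.mp h1
  have e2 := (kg6_pair_eq_iff v).not.mp h2
  rcases hr with h | h
  · have : r = kg6f0 n hn := Fin.ext h
    subst this
    by_cases hv1 : (v.1 : ℕ) = 0
    · have m1 : (kg6fL n hn, kg6f0 n hn) ≠ v := kg6_pair_ne v (by simp only [kg6f0_val, kg6fL_val, kg6_pair_eq_iff]; omega)
      have m2 : (kg6fL n hn, kg6fL n hn) ≠ v := kg6_pair_ne v (by simp only [kg6f0_val, kg6fL_val, kg6_pair_eq_iff]; omega)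
      exact (kg6_sideL v hn (by simp at e1 ⊢; omega) h1 m1).trans
        ((kg6_sideB v hn (by omega) m1 m2).trans
          (kg6_sideR v hn (by simp at e2 ⊢; omega) h2 m2).symm)
    · exact kg6_sideT v hn hv1 h1 h2
  · have : r = kg6fL n hn := Fin.ext h
    subst this
    by_cases hv1 : (v.1 : ℕ) = n - 1
    · have m1 : (kg6f0 n hn, kg6f0 n hn) ≠ v := kg6_pair_ne v (by simp only [kg6f0_val, kg6fL_val, kg6_pair_eq_iff]; omega)
      have m2 : (kg6f0 n hn, kg6fL n hn) ≠ v := kg6_pair_ne v (by simp only [kg6f0_val, kg6fL_val, kg6_pair_eq_iff]; omega)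
      exact (kg6_sideL v hn (by simp at e1 ⊢; omega) m1 h1).symm.trans
        ((kg6_sideT v hn (by omega) m1 m2).trans
          (kg6_sideR v hn (by simp at e2 ⊢; omega) m2 h2))
    · exact kg6_sideB v hn hv1 h1 h2

/-- vertical corner pair -/
lemma kg6_cornerV (hn : 2 ≤ n) {c : Fin n} (hc : kg6bd n c)
    (h1 : (kg6f0 n hn, c) ≠ v) (h2 : (kg6fL n hn, c) ≠ v) :
    (kg6G n v).Reachable ⟨(kg6f0 n hn, c), h1⟩ ⟨(kg6fL n hn, c), h2⟩ := by
  have e1 := (kg6_pair_eq_iff v).not.mp h1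
  have e2 := (kg6_pair_eq_iff v).not.mp h2
  rcases hc with h | h
  · have : c = kg6f0 n hn := Fin.ext h
    subst this
    by_cases hv1 : (v.2 : ℕ) = 0
    · have m1 : (kg6f0 n hn, kg6fL n hn) ≠ v := kg6_pair_ne v (by simp only [kg6f0_val, kg6fL_val, kg6_pair_eq_iff]; omega)
      have m2 : (kg6fL n hn, kg6fL n hn) ≠ v := kg6_pair_ne v (by simp only [kg6f0_val, kg6fL_val, kg6_pair_eq_iff]; omega)
      exact (kg6_sideT v hn (by simp at e1 ⊢; omega) h1 m1).trans
        ((kg6_sideR v hn (by omega) m1 m2).trans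
          (kg6_sideB v hn (by simp at e2 ⊢; omega) h2 m2).symm)
    · exact kg6_sideL v hn hv1 h1 h2
  · have : c = kg6fL n hn := Fin.ext h
    subst this
    by_cases hv1 : (v.2 : ℕ) = n - 1
    · have m1 : (kg6f0 n hn, kg6f0 n hn) ≠ v := kg6_pair_ne v (by simp only [kg6f0_val, kg6fL_val, kg6_pair_eq_iff]; omega)
      have m2 : (kg6fL n hn, kg6f0 n hn) ≠ v := kg6_pair_ne v (by simp only [kg6f0_val, kg6fL_val, kg6_pair_eq_iff]; omega)
      exact (kg6_sideT v hn (by simp at e1 ⊢; omega) m1 h1).symm.trans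
        ((kg6_sideL v hn (by omega) m1 m2).trans
          (kg6_sideB v hn (by simp at e2 ⊢; omega) m2 h2))
    · exact kg6_sideR v hn hv1 h1 h2


/-- all corners avoiding `v` are mutually reachable -/
lemma kg6_corner_reach (hn : 2 ≤ n) {x y : Fin n × Fin n} (hx : x ≠ v) (hy : y ≠ v)
    (hcx : kg6bd n x.1 ∧ kg6bd n x.2) (hcy : kg6bd n y.1 ∧ kg6bd n y.2) :
    (kg6G n v).Reachable ⟨x, hx⟩ ⟨y, hy⟩ := by
  by_cases hv00 : (kg6f0 n hn, kg6f0 n hn) = v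
  · -- anchor is (f0, fL)
    have hvv := (kg6_pair_eq_iff v).mp hv00
    simp only [kg6f0_val, kg6fL_val] at hvv
    have han : (kg6f0 n hn, kg6fL n hn) ≠ v := kg6_pair_ne v (by simp only [kg6f0_val, kg6fL_val, kg6_pair_eq_iff]; omega)
    have key : ∀ z (hz : z ≠ v), kg6bd n z.1 → kg6bd n z.2 →
        (kg6G n v).Reachable ⟨z, hz⟩ ⟨(kg6f0 n hn, kg6fL n hn), han⟩ := by
      intro z hz h1 h2
      have hzz := (kg6_pair_eq_iff v).not.mp (show (z.1, z.2) ≠ v from hz)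
      have mL0 : (kg6fL n hn, kg6f0 n hn) ≠ v := kg6_pair_ne v (by simp only [kg6f0_val, kg6fL_val, kg6_pair_eq_iff]; omega)
      have mLL : (kg6fL n hn, kg6fL n hn) ≠ v := kg6_pair_ne v (by simp only [kg6f0_val, kg6fL_val, kg6_pair_eq_iff]; omega)
      rcases h1 with h1 | h1 <;> rcases h2 with h2 | h2
      · exfalso; omega
      · have : z = (kg6f0 n hn, kg6fL n hn) := Prod.ext (Fin.ext h1) (Fin.ext h2)
        subst this; exact Reachable.refl _
      · have : z = (kg6fL n hn, kg6f0 n hn) := Prod.ext (Fin.ext h1) (Fin.ext h2)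
        subst this
        exact (kg6_cornerH v hn (Or.inr rfl) mL0 mLL).trans
          (kg6_cornerV v hn (Or.inr rfl) han mLL).symm
      · have : z = (kg6fL n hn, kg6fL n hn) := Prod.ext (Fin.ext h1) (Fin.ext h2)
        subst this
        exact (kg6_cornerV v hn (Or.inr rfl) han mLL).symm
    exact (key x hx hcx.1 hcx.2).trans (key y hy hcy.1 hcy.2).symm
  · -- anchor is (f0, f0)
    have key : ∀ z (hz : z ≠ v), kg6bd n z.1 → kg6bd n z.2 →
        (kg6G n v).Reachable ⟨z, hz⟩ ⟨(kg6f0 n hn, kg6f0 n hn), hv00⟩ := by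
      intro z hz h1 h2
      rcases h1 with h1 | h1 <;> rcases h2 with h2 | h2
      · have : z = (kg6f0 n hn, kg6f0 n hn) := Prod.ext (Fin.ext h1) (Fin.ext h2)
        subst this; exact Reachable.refl _
      · have : z = (kg6f0 n hn, kg6fL n hn) := Prod.ext (Fin.ext h1) (Fin.ext h2)
        subst this
        exact (kg6_cornerH v hn (Or.inl rfl) hv00 hz).symm
      · have : z = (kg6fL n hn, kg6f0 n hn) := Prod.ext (Fin.ext h1) (Fin.ext h2)
        subst this
        exact (kg6_cornerV v hn (Or.inl rfl) hv00 hz).symm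
      · have : z = (kg6fL n hn, kg6fL n hn) := Prod.ext (Fin.ext h1) (Fin.ext h2)
        subst this
        by_cases h0L : (kg6f0 n hn, kg6fL n hn) = v
        · have hvv := (kg6_pair_eq_iff v).mp h0L
          simp only [kg6f0_val, kg6fL_val] at hvv
          have mL0 : (kg6fL n hn, kg6f0 n hn) ≠ v := kg6_pair_ne v (by simp only [kg6f0_val, kg6fL_val, kg6_pair_eq_iff]; omega)
          exact (kg6_cornerH v hn (Or.inr rfl) mL0 hz).symm.trans
            (kg6_cornerV v hn (Or.inl rfl) hv00 mL0).symm
        · exact (kg6_cornerV v hn (Or.inr rfl) h0L hz).symm.trans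
            (kg6_cornerH v hn (Or.inl rfl) hv00 h0L).symm
    exact (key x hx hcx.1 hcx.2).trans (key y hy hcy.1 hcy.2).symm


lemma kg6_row_to_corner (hn : 2 ≤ n) {w : Fin n × Fin n} (hwv : w ≠ v) (hr : kg6bd n w.1) :
    ∃ x, ∃ hx : x ≠ v, (kg6bd n x.1 ∧ kg6bd n x.2) ∧
      (kg6G n v).Reachable ⟨w, hwv⟩ ⟨x, hx⟩ := by
  by_cases hcase : ∀ k (hk : k < n), k ≤ (w.2 : ℕ) → (w.1, (⟨k, hk⟩ : Fin n)) ≠ v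
  · refine ⟨(w.1, kg6f0 n hn), hcase 0 (by omega) (by omega), ⟨hr, Or.inl rfl⟩, ?_⟩
    exact (kg6_row_seg v hr (a := 0) (b := (w.2 : ℕ)) (by omega) w.2.isLt
      (fun k hk _ h2 => hcase k hk h2)).symm
  · push_neg at hcase
    obtain ⟨k0, hk0, hkle, heq⟩ := hcase
    have hv2 := (kg6_pair_eq_iff v).mp heq
    simp only [Fin.val_mk] at hv2
    have hk0lt : k0 < (w.2 : ℕ) := by
      rcases Nat.lt_or_ge k0 (w.2 : ℕ) with h | h
      · exact h
      · exfalso; apply hwv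
        have : k0 = (w.2 : ℕ) := by omega
        subst this
        exact Prod.ext (Fin.ext hv2.1) (Fin.ext hv2.2)
    have hne : ∀ k (hk : k < n), (w.2 : ℕ) ≤ k → k ≤ n - 1 → (w.1, (⟨k, hk⟩ : Fin n)) ≠ v := by
      intro k hk h1 h2
      apply kg6_pair_ne
      simp only [not_and]
      intro _
      omega
    refine ⟨(w.1, kg6fL n hn), hne (n-1) (by omega) (by omega) le_rfl, ⟨hr, Or.inr rfl⟩, ?_⟩
    exact kg6_row_seg v hr (a := (w.2 : ℕ)) (b := n - 1) (by omega) (by omega) hne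

lemma kg6_col_to_corner (hn : 2 ≤ n) {w : Fin n × Fin n} (hwv : w ≠ v) (hcw : kg6hw n w.2) :
    ∃ x, ∃ hx : x ≠ v, (kg6bd n x.1 ∧ kg6bd n x.2) ∧
      (kg6G n v).Reachable ⟨w, hwv⟩ ⟨x, hx⟩ := by
  by_cases hcase : ∀ k (hk : k < n), k ≤ (w.1 : ℕ) → ((⟨k, hk⟩ : Fin n), w.2) ≠ v
  · have h0 : (kg6f0 n hn, w.2) ≠ v := hcase 0 (by omega) (by omega)
    have r1 : (kg6G n v).Reachable ⟨w, hwv⟩ ⟨(kg6f0 n hn, w.2), h0⟩ :=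
      (kg6_col_seg v hcw (a := 0) (b := (w.1 : ℕ)) (by omega) w.1.isLt
        (fun k hk _ h2 => hcase k hk h2)).symm
    obtain ⟨x, hx, hcor, r2⟩ := kg6_row_to_corner v hn h0 (Or.inl rfl)
    exact ⟨x, hx, hcor, r1.trans r2⟩
  · push_neg at hcase
    obtain ⟨k0, hk0, hkle, heq⟩ := hcase
    have hv2 := (kg6_pair_eq_iff v).mp heq
    simp only [Fin.val_mk] at hv2
    have hk0lt : k0 < (w.1 : ℕ) := by
      rcases Nat.lt_or_ge k0 (w.1 : ℕ) with h | h
      · exact h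
      · exfalso; apply hwv
        have : k0 = (w.1 : ℕ) := by omega
        subst this
        exact Prod.ext (Fin.ext hv2.1) (Fin.ext hv2.2)
    have hne : ∀ k (hk : k < n), (w.1 : ℕ) ≤ k → k ≤ n - 1 → ((⟨k, hk⟩ : Fin n), w.2) ≠ v := by
      intro k hk h1 h2
      apply kg6_pair_ne
      simp only [not_and]
      intro h3
      omega
    have hL : (kg6fL n hn, w.2) ≠ v := hne (n-1) (by omega) (by omega) le_rfl
    have r1 : (kg6G n v).Reachable ⟨w, hwv⟩ ⟨(kg6fL n hn, w.2), hL⟩ :=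
      kg6_col_seg v hcw (a := (w.1 : ℕ)) (b := n - 1) (by omega) (by omega) hne
    obtain ⟨x, hx, hcor, r2⟩ := kg6_row_to_corner v hn hL (Or.inr rfl)
    exact ⟨x, hx, hcor, r1.trans r2⟩


lemma kg6_to_corner (hn : 2 ≤ n) (u : Fin n × Fin n) (hu : u ≠ v) :
    ∃ x, ∃ hx : x ≠ v, (kg6bd n x.1 ∧ kg6bd n x.2) ∧
      (kg6G n v).Reachable ⟨u, hu⟩ ⟨x, hx⟩ := by
  by_cases h1 : kg6bd n u.1
  · exact kg6_row_to_corner v hn hu h1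
  by_cases h2 : kg6hw n u.2
  · exact kg6_col_to_corner v hn hu h2
  -- interior, non-highway: attach to an adjacent highway column
  have hi : (u.1 : ℕ) ≠ 0 ∧ (u.1 : ℕ) ≠ n - 1 := by
    rw [kg6bd, not_or] at h1; exact h1
  have hj : (u.2 : ℕ) % 3 ≠ 0 ∧ (u.2 : ℕ) ≠ n - 1 := by
    rw [kg6hw, not_or] at h2; exact h2
  have hiu := u.1.isLt
  have hju := u.2.isLt
  obtain ⟨c, hcn, hc3, hcd⟩ : ∃ c, c < n ∧ c % 3 = 0 ∧
      ((u.2 : ℕ) = c + 1 ∨ c = (u.2 : ℕ) + 1) := by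
    by_cases hj1 : (u.2 : ℕ) % 3 = 1
    · exact ⟨(u.2 : ℕ) - 1, by omega, by omega, Or.inl (by omega)⟩
    · exact ⟨(u.2 : ℕ) + 1, by omega, by omega, Or.inr rfl⟩
  obtain ⟨r1, r2, hr1n, hr2n, hrne, hr13, hr23, hd1, hd2⟩ :
      ∃ r1 r2, r1 < n ∧ r2 < n ∧ r1 ≠ r2 ∧ r1 % 3 ≤ 1 ∧ r2 % 3 ≤ 1 ∧
        (r1 = (u.1 : ℕ) ∨ r1 + 1 = (u.1 : ℕ) ∨ (u.1 : ℕ) + 1 = r1) ∧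
        (r2 = (u.1 : ℕ) ∨ r2 + 1 = (u.1 : ℕ) ∨ (u.1 : ℕ) + 1 = r2) := by
    by_cases hm0 : (u.1 : ℕ) % 3 = 0
    · exact ⟨(u.1 : ℕ), (u.1 : ℕ) + 1, by omega, by omega, by omega, by omega, by omega,
        by omega, by omega⟩
    by_cases hm1 : (u.1 : ℕ) % 3 = 1
    · exact ⟨(u.1 : ℕ) - 1, (u.1 : ℕ), by omega, by omega, by omega, by omega, by omega,
        by omega, by omega⟩
    · exact ⟨(u.1 : ℕ) - 1, (u.1 : ℕ) + 1, by omega, by omega, by omega, by omega, by omega,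
        by omega, by omega⟩
  have attach : ∀ r (hrn : r < n), r % 3 ≤ 1 →
      (r = (u.1 : ℕ) ∨ r + 1 = (u.1 : ℕ) ∨ (u.1 : ℕ) + 1 = r) →
      ∀ hqv : ((⟨r, hrn⟩ : Fin n), (⟨c, hcn⟩ : Fin n)) ≠ v,
      ∃ x, ∃ hx : x ≠ v, (kg6bd n x.1 ∧ kg6bd n x.2) ∧
        (kg6G n v).Reachable ⟨u, hu⟩ ⟨x, hx⟩ := by
    intro r hrn hr3 hrd hqv
    have hcolne : u.2 ≠ (⟨c, hcn⟩ : Fin n) := by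
      intro he
      have := congrArg Fin.val he
      simp only [Fin.val_mk] at this
      omega
    have adj : (kg6H n).Adj u ((⟨r, hrn⟩ : Fin n), (⟨c, hcn⟩ : Fin n)) := by
      refine ⟨?_, ?_, ?_, Or.inr (Or.inr (Or.inl ⟨?_, ?_, ?_⟩))⟩
      · intro he
        exact hcolne (congrArg Prod.snd he)
      · rw [abs_le]; constructor <;> push_cast <;> omega
      · rw [abs_le]; constructor <;> push_cast <;> omega
      · rintro (hb | hh)
        · rcases hb with hb | hb <;> omega
        · rcases hh with hh | hh <;> omega
      · exact Or.inr ⟨Or.inl (by simpa using hc3), by simpa using hr3⟩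
      · exact hcolne
    have hq_hw : kg6hw n ((⟨c, hcn⟩ : Fin n)) := Or.inl (by simpa using hc3)
    obtain ⟨x, hx, hcor, r2'⟩ := kg6_col_to_corner v hn hqv hq_hw
    exact ⟨x, hx, hcor, (kg6_step v hu hqv adj).trans r2'⟩
  by_cases hq1 : ((⟨r1, hr1n⟩ : Fin n), (⟨c, hcn⟩ : Fin n)) ≠ v
  · exact attach r1 hr1n hr13 hd1 hq1
  · push_neg at hq1
    refine attach r2 hr2n hr23 hd2 ?_
    intro he
    apply hrne
    have := he.trans hq1.symm
    have := congrArg (fun p : Fin n × Fin n => (p.1 : ℕ)) this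
    simpa using this.symm

/-- main connectivity lemma: deleting any vertex leaves the graph connected -/
lemma kg6_del_connected (hn : 2 ≤ n) (v : Fin n × Fin n) :
    ((kg6H n).induce ({v}ᶜ : Set (Fin n × Fin n))).Connected := by
  rw [connected_iff]
  constructor
  · rintro ⟨a, ha⟩ ⟨b, hb⟩
    have ha' : a ≠ v := ha
    have hb' : b ≠ v := hb
    obtain ⟨x, hx, hcx, rx⟩ := kg6_to_corner v hn a ha'
    obtain ⟨y, hy, hcy, ry⟩ := kg6_to_corner v hn b hb'
    exact rx.trans ((kg6_corner_reach v hn hx hy hcx hcy).trans ry.symm)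
  · by_cases h : (kg6f0 n hn, kg6f0 n hn) = v
    · refine ⟨⟨(kg6f0 n hn, kg6fL n hn), ?_⟩⟩
      have hvv := (kg6_pair_eq_iff v).mp h
      simp only [kg6f0_val] at hvv
      exact kg6_pair_ne v (by simp only [kg6f0_val, kg6fL_val, not_and]; omega)
    · exact ⟨⟨(kg6f0 n hn, kg6f0 n hn), h⟩⟩


lemma kg6_connected (hn : 2 ≤ n) : (kg6H n).Connected := by
  rw [connected_iff]
  refine ⟨?_, ⟨(kg6f0 n hn, kg6f0 n hn)⟩⟩
  set v := (kg6f0 n hn, kg6f0 n hn) with hv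
  have hu1 : (1 : ℕ) < n := by omega
  set u := ((kg6f0 n hn : Fin n), (⟨1, hu1⟩ : Fin n)) with hu
  have huv : u ≠ v := by
    intro he
    have := congrArg (fun p : Fin n × Fin n => (p.2 : ℕ)) he
    simp [hu, hv] at this
  have hadj : (kg6H n).Adj v u := kg6_adj_row (Or.inl rfl) (by omega) hu1 rfl
  have hconn := kg6_del_connected hn v
  have lift : ∀ {p q : Fin n × Fin n}, p ≠ v → q ≠ v → (kg6H n).Reachable p q := by
    intro p q hp hq
    have := hconn.preconnected ⟨p, hp⟩ ⟨q, hq⟩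
    exact this.map (SimpleGraph.Embedding.induce ({v}ᶜ : Set (Fin n × Fin n))).toHom
  intro p q
  by_cases hp : p = v <;> by_cases hq : q = v
  · rw [hp, hq]
  · rw [hp]; exact hadj.reachable.trans (lift huv hq)
  · rw [hq]; exact (lift hp huv).trans hadj.reachable.symm
  · exact lift hp hq

lemma kg6_cover (hn : 2 ≤ n) : IsTotalVertexCover (kg6H n) {p | kg6S n p} := by
  constructor
  · rintro p q ⟨hne, h1, h2, hC⟩
    rcases hC with ⟨heq, hbd⟩ | ⟨heq, hhw⟩ | ⟨-, hS, -⟩ | ⟨-, hS, -⟩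
    · exact Or.inl (Or.inl hbd)
    · by_cases hp3 : (p.1 : ℕ) % 3 ≤ 1
      · exact Or.inl (Or.inr ⟨hhw, hp3⟩)
      · have hne1 : (p.1 : ℕ) ≠ (q.1 : ℕ) := by
          intro he
          exact hne (Prod.ext (Fin.ext he) heq)
        rw [abs_le] at h1
        have hq3 : (q.1 : ℕ) % 3 ≤ 1 := by
          obtain ⟨ha, hb⟩ := h1
          omega
        exact Or.inr (Or.inr ⟨heq ▸ hhw, hq3⟩)
    · exact Or.inr hS
    · exact Or.inl hS
  · intro p
    have hiu := p.1.isLt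
    have hju := p.2.isLt
    by_cases hbd : kg6bd n p.1
    · obtain ⟨j', hj'n, hj'd⟩ : ∃ j', j' < n ∧ ((p.2 : ℕ) = j' + 1 ∨ j' = (p.2 : ℕ) + 1) := by
        by_cases h0 : (p.2 : ℕ) = 0
        · exact ⟨1, by omega, Or.inr (by omega)⟩
        · exact ⟨(p.2 : ℕ) - 1, by omega, Or.inl (by omega)⟩
      refine ⟨(p.1, (⟨j', hj'n⟩ : Fin n)), Or.inl hbd, ?_, ?_, ?_, Or.inl ⟨rfl, hbd⟩⟩
      · intro he
        have := congrArg (fun x : Fin n × Fin n => (x.2 : ℕ)) he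
        simp only [Fin.val_mk] at this
        omega
      · simp
      · rw [abs_le]; constructor <;> push_cast <;> omega
    · have hi : (p.1 : ℕ) ≠ 0 ∧ (p.1 : ℕ) ≠ n - 1 := by
        rw [kg6bd, not_or] at hbd; exact hbd
      by_cases hhw : kg6hw n p.2
      · obtain ⟨r, hrn, hr3, hrd⟩ : ∃ r, r < n ∧ r % 3 ≤ 1 ∧
            ((p.1 : ℕ) = r + 1 ∨ r = (p.1 : ℕ) + 1) := by
          by_cases hm1 : (p.1 : ℕ) % 3 = 1
          · exact ⟨(p.1 : ℕ) - 1, by omega, by omega, Or.inl (by omega)⟩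
          · exact ⟨(p.1 : ℕ) + 1, by omega, by omega, Or.inr rfl⟩
        refine ⟨((⟨r, hrn⟩ : Fin n), p.2), Or.inr ⟨hhw, hr3⟩, ?_, ?_, ?_,
          Or.inr (Or.inl ⟨rfl, hhw⟩)⟩
        · intro he
          have := congrArg (fun x : Fin n × Fin n => (x.1 : ℕ)) he
          simp only [Fin.val_mk] at this
          omega
        · rw [abs_le]; constructor <;> push_cast <;> omega
        · simp
      · have hj : (p.2 : ℕ) % 3 ≠ 0 ∧ (p.2 : ℕ) ≠ n - 1 := by
          rw [kg6hw, not_or] at hhw; exact hhw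
        obtain ⟨c, hcn, hc3, hcd⟩ : ∃ c, c < n ∧ c % 3 = 0 ∧
            ((p.2 : ℕ) = c + 1 ∨ c = (p.2 : ℕ) + 1) := by
          by_cases hj1 : (p.2 : ℕ) % 3 = 1
          · exact ⟨(p.2 : ℕ) - 1, by omega, by omega, Or.inl (by omega)⟩
          · exact ⟨(p.2 : ℕ) + 1, by omega, by omega, Or.inr rfl⟩
        obtain ⟨r, hrn, hr3, hrd⟩ : ∃ r, r < n ∧ r % 3 ≤ 1 ∧
            (r = (p.1 : ℕ) ∨ r = (p.1 : ℕ) + 1) := by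
          by_cases hm : (p.1 : ℕ) % 3 ≤ 1
          · exact ⟨(p.1 : ℕ), by omega, hm, Or.inl rfl⟩
          · exact ⟨(p.1 : ℕ) + 1, by omega, by omega, Or.inr rfl⟩
        have hS : kg6S n ((⟨r, hrn⟩ : Fin n), (⟨c, hcn⟩ : Fin n)) :=
          Or.inr ⟨Or.inl (by simpa using hc3), by simpa using hr3⟩
        refine ⟨((⟨r, hrn⟩ : Fin n), (⟨c, hcn⟩ : Fin n)), hS, ?_, ?_, ?_,
          Or.inr (Or.inr (Or.inl ⟨?_, hS, ?_⟩))⟩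
        · intro he
          have := congrArg (fun x : Fin n × Fin n => (x.2 : ℕ)) he
          simp only [Fin.val_mk] at this
          omega
        · rw [abs_le]; constructor <;> push_cast <;> omega
        · rw [abs_le]; constructor <;> push_cast <;> omega
        · rintro (hb | hh)
          · rcases hb with hb | hb <;> omega
          · rcases hh with hh | hh <;> omega
        · intro he
          have := congrArg (fun x : Fin n => (x : ℕ)) he
          simp only [Fin.val_mk] at this
          omega

end conn

section count

variable {n : ℕ}

instance kg6S_dec : DecidablePred (kg6S n) := fun p => by
  unfold kg6S kg6bd kg6hw
  infer_instance

lemma kg6_cnt_range1 (n : ℕ) :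
    3 * ((Finset.range n).filter (fun i => i % 3 ≤ 1)).card ≤ 2 * n + 2 := by
  induction n with
  | zero => simp
  | succ m ih =>
    rw [Finset.range_add_one, Finset.filter_insert]
    by_cases h : m % 3 ≤ 1
    · rw [if_pos h, Finset.card_insert_of_notMem (by simp)]
      omega
    · rw [if_neg h]; omega

lemma kg6_cnt_range0 (n : ℕ) :
    3 * ((Finset.range n).filter (fun i => i % 3 = 0)).card ≤ n + 2 := by
  induction n with
  | zero => simp
  | succ m ih =>
    rw [Finset.range_add_one, Finset.filter_insert]
    by_cases h : m % 3 = 0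
    · rw [if_pos h, Finset.card_insert_of_notMem (by simp)]
      omega
    · rw [if_neg h]; omega

lemma kg6_cnt_rangehw (n : ℕ) :
    3 * ((Finset.range n).filter (fun j => j % 3 = 0 ∨ j = n - 1)).card ≤ n + 5 := by
  have hsub : (Finset.range n).filter (fun j => j % 3 = 0 ∨ j = n - 1) ⊆
      ((Finset.range n).filter (fun i => i % 3 = 0)) ∪ {n - 1} := by
    intro x hx
    simp only [Finset.mem_filter, Finset.mem_range, Finset.mem_union,
      Finset.mem_singleton] at *
    tauto
  have h1 := Finset.card_le_card hsub
  have h2 := Finset.card_union_le ((Finset.range n).filter (fun i => i % 3 = 0))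
    ({n - 1} : Finset ℕ)
  have h3 := kg6_cnt_range0 n
  simp only [Finset.card_singleton] at h2
  omega

lemma kg6_fin_card (P : ℕ → Prop) [DecidablePred P] :
    ((Finset.univ : Finset (Fin n)).filter (fun i : Fin n => P (i : ℕ))).card =
      ((Finset.range n).filter P).card := by
  rw [Finset.card_filter, Finset.card_filter]
  exact Fin.sum_univ_eq_sum_range (fun i => if P i then 1 else 0) n

lemma kg6_card_bound (hn : 2 ≤ n) :
    9 * ((Finset.univ : Finset (Fin n × Fin n)).filter (kg6S n)).card ≤
      2 * n * n + 30 * n + 10 := by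
  classical
  set A := (Finset.univ : Finset (Fin n × Fin n)).filter (fun p => (p.1 : ℕ) = 0) with hA
  set B := (Finset.univ : Finset (Fin n × Fin n)).filter (fun p => (p.1 : ℕ) = n - 1) with hB
  set C := (Finset.univ : Finset (Fin n × Fin n)).filter
    (fun p => (p.1 : ℕ) % 3 ≤ 1 ∧ ((p.2 : ℕ) % 3 = 0 ∨ (p.2 : ℕ) = n - 1)) with hC
  have hsub : (Finset.univ : Finset (Fin n × Fin n)).filter (kg6S n) ⊆ A ∪ B ∪ C := by
    intro p hp
    simp only [hA, hB, hC, Finset.mem_filter, Finset.mem_union, Finset.mem_univ,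
      true_and] at *
    unfold kg6S kg6bd kg6hw at hp
    tauto
  have hAcard : A.card ≤ n := by
    have : A.card ≤ (Finset.univ : Finset (Fin n)).card := by
      apply Finset.card_le_card_of_injOn (fun p => p.2) (fun p _ => Finset.mem_univ _)
      intro p hp q hq he
      simp only [hA, Finset.mem_coe, Finset.mem_filter] at hp hq
      exact Prod.ext (Fin.ext (hp.2.trans hq.2.symm)) he
    simpa using this
  have hBcard : B.card ≤ n := by
    have : B.card ≤ (Finset.univ : Finset (Fin n)).card := by
      apply Finset.card_le_card_of_injOn (fun p => p.2) (fun p _ => Finset.mem_univ _)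
      intro p hp q hq he
      simp only [hB, Finset.mem_coe, Finset.mem_filter] at hp hq
      exact Prod.ext (Fin.ext (hp.2.trans hq.2.symm)) he
    simpa using this
  have hCcard : 9 * C.card ≤ (2 * n + 2) * (n + 5) := by
    have hCeq : C.card =
        ((Finset.univ : Finset (Fin n)).filter (fun i : Fin n => (i : ℕ) % 3 ≤ 1)).card *
        ((Finset.univ : Finset (Fin n)).filter
          (fun j : Fin n => (j : ℕ) % 3 = 0 ∨ (j : ℕ) = n - 1)).card := by
      rw [hC, ← Finset.univ_product_univ,
        Finset.filter_product (fun i : Fin n => (i : ℕ) % 3 ≤ 1)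
          (fun j : Fin n => (j : ℕ) % 3 = 0 ∨ (j : ℕ) = n - 1), Finset.card_product]
    rw [hCeq, kg6_fin_card (fun i => i % 3 ≤ 1), kg6_fin_card (fun j => j % 3 = 0 ∨ j = n - 1)]
    have h1 := kg6_cnt_range1 n
    have h2 := kg6_cnt_rangehw n
    calc 9 * (((Finset.range n).filter (fun i => i % 3 ≤ 1)).card *
        ((Finset.range n).filter (fun j => j % 3 = 0 ∨ j = n - 1)).card)
        = (3 * ((Finset.range n).filter (fun i => i % 3 ≤ 1)).card) *
          (3 * ((Finset.range n).filter (fun j => j % 3 = 0 ∨ j = n - 1)).card) := by ring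
      _ ≤ (2 * n + 2) * (n + 5) := Nat.mul_le_mul h1 h2
  have hle := Finset.card_le_card hsub
  have hle2 := (Finset.card_union_le (A ∪ B) C)
  have hle3 := (Finset.card_union_le A B)
  nlinarith [hAcard, hBcard, hCcard, hle, hle2, hle3]

end count

theorem stmt_6 (n : ℕ) (hn : 2 ≤ n) :
    ∃ H : SimpleGraph (Fin n × Fin n), H ≤ kingGrid n ∧ TwoConnected H ∧
      (tvc H : ℝ) ≤ (2 / 9) * (n : ℝ) ^ 2 + 4 * (n : ℝ) := by
  refine ⟨kg6H n, ?_, ⟨?_, kg6_connected hn, fun v => kg6_del_connected hn v⟩, ?_⟩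
  · rintro p q ⟨h0, h1, h2, h3⟩
    exact ⟨h0, h1, h2⟩
  · have hc : Fintype.card (Fin n × Fin n) = n * n := by simp
    rw [hc]
    nlinarith
  · have hncard : ({p | kg6S n p} : Set (Fin n × Fin n)).ncard =
        ((Finset.univ : Finset (Fin n × Fin n)).filter (kg6S n)).card := by
      rw [Set.ncard_eq_toFinset_card']
      congr 1
      ext p
      simp
    have h1 : tvc (kg6H n) ≤ ((Finset.univ : Finset (Fin n × Fin n)).filter (kg6S n)).card :=
      Nat.sInf_le ⟨{p | kg6S n p}, kg6_cover hn, hncard⟩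
    have h2 := kg6_card_bound (n := n) hn
    have c1 : (9 : ℝ) * (tvc (kg6H n) : ℝ) ≤ 2 * n * n + 30 * n + 10 := by
      have := le_trans (Nat.mul_le_mul_left 9 h1) h2
      exact_mod_cast this
    have hn' : (2 : ℝ) ≤ (n : ℝ) := by exact_mod_cast hn
    have hsq : ((n : ℝ)) ^ 2 = (n : ℝ) * (n : ℝ) := sq (n : ℝ)
    nlinarith
end

section
/- For every integer n ≥ 3, the cycle graph C_n on n vertices has a total vertex cover with at most (2/3)·(n+1) vertices; moreover, if n ≡ 0 (mod 3), it has a total vertex cover with exactly 2n/3 vertices. -/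
open SimpleGraph

lemma sub_val_eq_one {n : ℕ} (hn : 3 ≤ n) (u v : Fin n) :
    (u - v).val = 1 ↔ (u.val = v.val + 1 ∨ (v.val = n - 1 ∧ u.val = 0)) := by
  rw [Fin.sub_def]
  simp only
  have hu := u.isLt
  have hv := v.isLt
  constructor
  · intro h
    rcases Nat.lt_or_ge (n - v.val + u.val) n with hlt | hge
    · rw [Nat.mod_eq_of_lt hlt] at h; omega
    · have : n - v.val + u.val - n < n := by omega
      rw [Nat.mod_eq_sub_mod hge, Nat.mod_eq_of_lt this] at h
      omega
  · rintro (h | ⟨h1, h2⟩)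
    · have hge : n ≤ n - v.val + u.val := by omega
      have : n - v.val + u.val - n < n := by omega
      rw [Nat.mod_eq_sub_mod hge, Nat.mod_eq_of_lt this]
      omega
    · rw [Nat.mod_eq_of_lt (by omega)]
      omega

lemma cycle_adj_iff {n : ℕ} (hn : 3 ≤ n) (u v : Fin n) :
    (cycleGraph n).Adj u v ↔
      (u.val = v.val + 1 ∨ (v.val = n - 1 ∧ u.val = 0)) ∨
      (v.val = u.val + 1 ∨ (u.val = n - 1 ∧ v.val = 0)) := by
  rw [cycleGraph_adj', sub_val_eq_one hn, sub_val_eq_one hn]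

lemma count_lemma (n : ℕ) :
    ((Finset.range n).filter (fun i => ¬ i % 3 = 2)).card = n - n / 3 := by
  induction n with
  | zero => simp
  | succ m ih =>
    rw [Finset.range_add_one, Finset.filter_insert]
    by_cases h : ¬ m % 3 = 2
    · rw [if_pos h, Finset.card_insert_of_notMem (by simp), ih]
      omega
    · rw [if_neg h, ih]
      omega

lemma fin_count (n : ℕ) :
    ((Finset.univ : Finset (Fin n)).filter (fun i => ¬ i.val % 3 = 2)).card
      = n - n / 3 := by
  rw [← count_lemma n]
  apply Finset.card_bij (fun (i : Fin n) _ => i.val)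
  · intro a ha
    simp only [Finset.mem_filter, Finset.mem_univ, true_and] at ha
    simp [a.isLt, ha]
  · intro a _ b _ h
    exact Fin.ext h
  · intro b hb
    simp only [Finset.mem_filter, Finset.mem_range] at hb
    exact ⟨⟨b, hb.1⟩, by simp [hb.2], rfl⟩

lemma main_cover {n : ℕ} (hn : 3 ≤ n) :
    IsTotalVertexCover (cycleGraph n) {i : Fin n | i.val % 3 ≠ 2} := by
  constructor
  · intro v w hadj
    rw [cycle_adj_iff hn] at hadj
    simp only [Set.mem_setOf_eq]
    by_contra hcon
    push_neg at hcon
    obtain ⟨h1, h2⟩ := hcon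
    have := v.isLt
    have := w.isLt
    omega
  · intro v
    have hv := v.isLt
    by_cases h1 : v.val % 3 = 1
    · refine ⟨⟨v.val - 1, by omega⟩, ?_, ?_⟩
      · simp only [Set.mem_setOf_eq]; omega
      · rw [cycle_adj_iff hn]; simp only [Fin.val_mk]; omega
    · by_cases h2 : v.val + 1 < n
      · refine ⟨⟨v.val + 1, h2⟩, ?_, ?_⟩
        · simp only [Set.mem_setOf_eq]; omega
        · rw [cycle_adj_iff hn]; exact Or.inr (Or.inl rfl)
      · refine ⟨⟨0, by omega⟩, ?_, ?_⟩
        · simp only [Set.mem_setOf_eq]; omega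
        · rw [cycle_adj_iff hn]
          exact Or.inr (Or.inr ⟨by omega, rfl⟩)

lemma main_ncard {n : ℕ} :
    ({i : Fin n | i.val % 3 ≠ 2} : Set (Fin n)).ncard = n - n / 3 := by
  have hset : ({i : Fin n | i.val % 3 ≠ 2} : Set (Fin n)) =
      ↑((Finset.univ : Finset (Fin n)).filter (fun i => ¬ i.val % 3 = 2)) := by
    ext i; simp
  rw [hset, Set.ncard_coe_finset, fin_count]

theorem stmt_8 (n : ℕ) (hn : 3 ≤ n) :
    (∃ S : Set (Fin n), IsTotalVertexCover (cycleGraph n) S ∧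
      (S.ncard : ℝ) ≤ (2 / 3) * ((n : ℝ) + 1)) ∧
    (n % 3 = 0 → ∃ S : Set (Fin n), IsTotalVertexCover (cycleGraph n) S ∧
      S.ncard = 2 * n / 3) := by
  constructor
  · refine ⟨_, main_cover hn, ?_⟩
    rw [main_ncard]
    have h1 : (3 : ℝ) * ((n - n / 3 : ℕ) : ℝ) ≤ 2 * ((n : ℝ) + 1) := by
      have : 3 * (n - n / 3) ≤ 2 * (n + 1) := by omega
      calc (3 : ℝ) * ((n - n / 3 : ℕ) : ℝ) = ((3 * (n - n / 3) : ℕ) : ℝ) := by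
            push_cast; ring
        _ ≤ ((2 * (n + 1) : ℕ) : ℝ) := by exact_mod_cast this
        _ = 2 * ((n : ℝ) + 1) := by push_cast; ring
    linarith
  · intro h3
    refine ⟨_, main_cover hn, ?_⟩
    rw [main_ncard]
    omega
end
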